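/- arXiv:2304.14574 — 11 statements merged into one kernel-verified Lean document; each statement's English description precedes it below -/
import Mathlib

section
/- Let f : ℝ^d → ℝ be three times continuously differentiable, let A > 0 be a real scalar, ε ≥ 0, γ ≥ 0, let B : ℝ^d → ℝ^{d×d} be a matrix-valued map, and set C(x) = B(x)∇²f(x). Suppose (x(t), p(t)) is a differentiable solution of the PDD ODE system ṗ = A∇f(x) − εA p, ẋ = −C(x)(p + γ(A∇f(x) − εA p)), such that t ↦ C(x(t)) is differentiable with C(x(t)) invertible for all t. Then x(t) is twice differentiable and satisfies the second-order ODE: ẍ + [εA·I + γA·C(x)∇²f(x) − Ċ C(x)⁻¹] ẋ + A·C(x)∇f(x) = 0, where Ċ = (d/dt) C(x(t)). -/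
open Matrix

/-- For C³ `f`, scalar `A > 0`, `ε ≥ 0`, `γ ≥ 0`, `C(x) = B(x)∇²f(x)`,
a differentiable solution `(x(t), p(t))` of the PDD system
`ṗ = A∇f(x) − εA p`, `ẋ = −C(x)(p + γ(A∇f(x) − εA p))`
with `t ↦ C(x(t))` differentiable (derivative `Ċ`) and `C(x(t))` invertible, satisfies the
second-order ODE `ẍ + [εA·I + γA·C(x)∇²f(x) − Ċ C(x)⁻¹] ẋ + A·C(x)∇f(x) = 0`. -/
theorem stmt_3 (d : ℕ) (f : (Fin d → ℝ) → ℝ)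
    (gradf : (Fin d → ℝ) → Fin d → ℝ)
    (hessf B : (Fin d → ℝ) → Matrix (Fin d) (Fin d) ℝ)
    (hf : ContDiff ℝ 3 f)
    (hgrad : ∀ x y, fderiv ℝ f x y = gradf x ⬝ᵥ y)
    (hhess : ∀ x y, fderiv ℝ gradf x y = hessf x *ᵥ y)
    (A ε γ : ℝ) (hA : 0 < A) (hε : 0 ≤ ε) (hγ : 0 ≤ γ)
    (C : (Fin d → ℝ) → Matrix (Fin d) (Fin d) ℝ)
    (hCdef : ∀ x, C x = B x * hessf x)
    (x p xdot : ℝ → Fin d → ℝ)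
    (hxdot : ∀ t, xdot t = -(C (x t) *ᵥ (p t + γ • (A • gradf (x t) - (ε * A) • p t))))
    (hx : ∀ t, HasDerivAt x (xdot t) t)
    (hp : ∀ t, HasDerivAt p (A • gradf (x t) - (ε * A) • p t) t)
    (Cdot : ℝ → Matrix (Fin d) (Fin d) ℝ)
    (hCdot : ∀ t i j, HasDerivAt (fun s => C (x s) i j) (Cdot t i j) t)
    (hCinv : ∀ t, IsUnit (C (x t))) :
    ∀ t, HasDerivAt xdot
      (-((ε * A) • xdot t + (γ * A) • (C (x t) *ᵥ (hessf (x t) *ᵥ xdot t))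
          - Cdot t *ᵥ ((C (x t))⁻¹ *ᵥ xdot t)
          + A • (C (x t) *ᵥ gradf (x t)))) t := by
  -- gradf is differentiable
  have hgradf_eq : gradf = fun y i => fderiv ℝ f y (Pi.single i 1) := by
    funext y i
    rw [hgrad y (Pi.single i 1), dotProduct_single, mul_one]
  have hfd : Differentiable ℝ (fun y => fderiv ℝ f y) :=
    (hf.fderiv_right (m := 2) (by norm_num)).differentiable (by norm_num)
  have hgd : Differentiable ℝ gradf := by
    rw [hgradf_eq]
    exact differentiable_pi.2 fun i => hfd.clm_apply (differentiable_const _)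
  intro t
  -- the velocity of the p-part
  set V : ℝ → Fin d → ℝ := fun s => p s + γ • (A • gradf (x s) - (ε * A) • p s) with hV
  have hgt : HasDerivAt (fun s => gradf (x s)) (hessf (x t) *ᵥ xdot t) t := by
    have h1 := HasFDerivAt.comp_hasDerivAt t ((hgd (x t)).hasFDerivAt) (hx t)
    have : fderiv ℝ gradf (x t) (xdot t) = hessf (x t) *ᵥ xdot t := hhess (x t) (xdot t)
    rw [← this]
    exact h1
  set pd : Fin d → ℝ := A • gradf (x t) - (ε * A) • p t with hpd
  set vdot : Fin d → ℝ :=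
    pd + γ • (A • (hessf (x t) *ᵥ xdot t) - (ε * A) • pd) with hvdot
  have hvd : HasDerivAt V vdot t :=
    (hp t).add ((((hgt.const_smul A).sub ((hp t).const_smul (ε * A)))).const_smul γ)
  have hxdfun : xdot = fun s => -(C (x s) *ᵥ V s) := funext hxdot
  have hmain : HasDerivAt xdot (-(Cdot t *ᵥ V t + C (x t) *ᵥ vdot)) t := by
    rw [hxdfun]
    refine hasDerivAt_pi.2 fun i => ?_
    have hterm : ∀ j : Fin d, HasDerivAt (fun s => C (x s) i j * V s j)
        (Cdot t i j * V t j + C (x t) i j * vdot j) t :=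
      fun j => (hCdot t i j).mul (hasDerivAt_pi.1 hvd j)
    have hsum := (HasDerivAt.fun_sum (u := Finset.univ) (fun j _ => hterm j)).neg
    have hval : (-(Cdot t *ᵥ V t + C (x t) *ᵥ vdot)) i
        = -∑ j : Fin d, (Cdot t i j * V t j + C (x t) i j * vdot j) := by
      simp [Matrix.mulVec, dotProduct, Finset.sum_add_distrib]
    rw [hval]
    exact hsum
  have hinv : (C (x t))⁻¹ *ᵥ xdot t = -(V t) := by
    rw [hxdot t, Matrix.mulVec_neg, Matrix.mulVec_mulVec,
      Matrix.nonsing_inv_mul _ ((Matrix.isUnit_iff_isUnit_det _).1 (hCinv t)),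
      Matrix.one_mulVec]
  have key : -((ε * A) • xdot t + (γ * A) • (C (x t) *ᵥ (hessf (x t) *ᵥ xdot t))
          - Cdot t *ᵥ ((C (x t))⁻¹ *ᵥ xdot t)
          + A • (C (x t) *ᵥ gradf (x t))) = -(Cdot t *ᵥ V t + C (x t) *ᵥ vdot) := by
    rw [hinv]
    have hx0 : xdot t = -(C (x t) *ᵥ V t) := hxdot t
    rw [hvdot, hpd, hV]
    rw [hx0, hV]
    simp only [Matrix.mulVec_add, Matrix.mulVec_sub, Matrix.mulVec_smul, Matrix.mulVec_neg,
      smul_add, smul_sub, smul_neg, neg_add, neg_sub, neg_neg, smul_smul]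
    module
  rw [key]
  exact hmain
end

section
/- Let Q, A, B be real d×d matrices with A Q = Q A, and let ε, γ ∈ ℝ. Consider the 2d×2d block matrix M = [[−γ B Q A Q, −B Q(I − γε A)], [A Q, −ε A]]. Then a complex number α is an eigenvalue of M (viewed as a complex matrix) if and only if det(α² I + α(ε A + γ B Q A Q) + B Q A Q) = 0, where the determinant is taken over ℂ. -/
open Matrix

open Polynomial in
private lemma det_fromBlocks_comm' {n : Type*} [DecidableEq n] [Fintype n] {R : Type*} [Field R]
    (A B C D : Matrix n n R) (h : C * D = D * C) :
    (fromBlocks A B C D).det = (A * D - B * C).det := by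
  let f : R →+* R[X] := Polynomial.C
  let A' := A.map f; let B' := B.map f; let C' := C.map f
  let D' := D.map f + (X : R[X]) • 1
  have hCD' : C' * D' = D' * C' := by
    simp only [C', D', mul_add, add_mul, ← Matrix.map_mul, h, Matrix.mul_smul, Matrix.smul_mul,
      Matrix.mul_one, Matrix.one_mul]
  have key : fromBlocks A' B' C' D' * fromBlocks D' 0 (-C') 1 =
      fromBlocks (A' * D' - B' * C') B' 0 D' := by
    simp [fromBlocks_multiply, hCD', Matrix.mul_neg, sub_eq_add_neg]
  have hdet := congrArg Matrix.det key
  rw [Matrix.det_mul, det_fromBlocks_zero₁₂, det_fromBlocks_zero₂₁, det_one, mul_one] at hdet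
  have hD'det : D'.det ≠ 0 := by
    have hch : D'.det = (-D).charpoly := by
      unfold Matrix.charpoly Matrix.charmatrix
      congr 1
      rw [Matrix.scalar_apply, ← Matrix.smul_one_eq_diagonal, map_neg, sub_neg_eq_add, add_comm]
      simp [D', f, RingHom.mapMatrix_apply]
    rw [hch]
    exact ((-D).charpoly_monic).ne_zero
  have hmain : (fromBlocks A' B' C' D').det = (A' * D' - B' * C').det :=
    mul_right_cancel₀ hD'det hdet
  have hthis := congrArg (Polynomial.eval 0) hmain
  rw [← Polynomial.coe_evalRingHom, RingHom.map_det, RingHom.map_det] at hthis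
  have hA : A'.map (eval 0) = A := by ext i j; simp [A', f]
  have hB : B'.map (eval 0) = B := by ext i j; simp [B', f]
  have hC : C'.map (eval 0) = C := by ext i j; simp [C', f]
  have hD : D'.map (eval 0) = D := by
    ext i j
    simp only [D', f, Matrix.map_apply, Matrix.add_apply, Matrix.smul_apply, Matrix.one_apply,
      smul_eq_mul]
    split <;> simp
  simp only [RingHom.mapMatrix_apply, coe_evalRingHom] at hthis
  rw [Matrix.fromBlocks_map, hA, hB, hC, hD] at hthis
  rw [show ((A' * D' - B' * C').map (eval 0)) = A * D - B * C by
    rw [← coe_evalRingHom, ← RingHom.mapMatrix_apply, map_sub, _root_.map_mul, _root_.map_mul]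
    simp only [RingHom.mapMatrix_apply, coe_evalRingHom, hA, hB, hC, hD]] at hthis
  exact hthis

/-- For real d×d matrices `Q, A, B` with `AQ = QA` and `ε, γ ∈ ℝ`, consider the
2d×2d block matrix `M = [[−γBQAQ, −BQ(I−γεA)], [AQ, −εA]]`. A complex number `α` is an
eigenvalue of `M` (viewed over ℂ) iff `det(α²I + α(εA + γBQAQ) + BQAQ) = 0` over ℂ. -/
theorem stmt_4 (d : ℕ) (Q A B : Matrix (Fin d) (Fin d) ℝ) (ε γ : ℝ)
    (hcomm : A * Q = Q * A)
    (M : Matrix (Fin d ⊕ Fin d) (Fin d ⊕ Fin d) ℝ)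
    (hM : M = Matrix.fromBlocks (-(γ • (B * Q * A * Q))) (-(B * Q * (1 - (γ * ε) • A)))
      (A * Q) (-(ε • A)))
    (α : ℂ) :
    (∃ v : Fin d ⊕ Fin d → ℂ, v ≠ 0 ∧ (M.map (algebraMap ℝ ℂ)) *ᵥ v = α • v) ↔
      Matrix.det (α ^ 2 • (1 : Matrix (Fin d) (Fin d) ℂ)
          + α • ((ε : ℂ) • (A.map (algebraMap ℝ ℂ))
              + (γ : ℂ) • ((B * Q * A * Q).map (algebraMap ℝ ℂ)))
          + (B * Q * A * Q).map (algebraMap ℝ ℂ)) = 0 := by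
  subst hM
  set f := algebraMap ℝ ℂ with hf
  set a := A.map f with ha
  set q := Q.map f with hq
  set b := B.map f with hb
  have hsm : ∀ (r : ℝ) (X : Matrix (Fin d) (Fin d) ℝ), (r • X).map f = (r : ℂ) • X.map f := by
    intro r X; ext i j
    simp [Matrix.map_apply, hf, Complex.ofReal_mul]
  have hneg : ∀ (X : Matrix (Fin d) (Fin d) ℝ), (-X).map f = -(X.map f) := by
    intro X; ext i j; simp [Matrix.map_apply, hf]
  have hsub : ∀ (X Y : Matrix (Fin d) (Fin d) ℝ), (X - Y).map f = X.map f - Y.map f := by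
    intro X Y; ext i j; simp [Matrix.map_apply, hf]
  have hmul : ∀ (X Y : Matrix (Fin d) (Fin d) ℝ), (X * Y).map f = X.map f * Y.map f := by
    intro X Y; exact Matrix.map_mul
  have hone : ((1 : Matrix (Fin d) (Fin d) ℝ)).map f = 1 := Matrix.map_one f (map_zero f) (map_one f)
  have hc : a * q = q * a := by rw [ha, hq, ← hmul, ← hmul, hcomm]
  have step1 : (∃ v : Fin d ⊕ Fin d → ℂ, v ≠ 0 ∧
      ((Matrix.fromBlocks (-(γ • (B * Q * A * Q))) (-(B * Q * (1 - (γ * ε) • A)))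
        (A * Q) (-(ε • A))).map f) *ᵥ v = α • v) ↔
      (((Matrix.fromBlocks (-(γ • (B * Q * A * Q))) (-(B * Q * (1 - (γ * ε) • A)))
        (A * Q) (-(ε • A))).map f) - α • 1).det = 0 := by
    rw [← Matrix.exists_mulVec_eq_zero_iff]
    constructor
    · rintro ⟨v, hv, hmv⟩
      exact ⟨v, hv, by rw [Matrix.sub_mulVec, Matrix.smul_mulVec, Matrix.one_mulVec, hmv,
        sub_self]⟩
    · rintro ⟨v, hv, hmv⟩
      refine ⟨v, hv, ?_⟩
      rw [Matrix.sub_mulVec, Matrix.smul_mulVec, Matrix.one_mulVec, sub_eq_zero] at hmv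
      exact hmv
  rw [step1]
  simp only [Matrix.fromBlocks_map, hneg, hsm, hsub, hmul, hone, ← ha, ← hq, ← hb]
  rw [← Matrix.fromBlocks_one, show (α • Matrix.fromBlocks 1 0 0 (1 : Matrix (Fin d) (Fin d) ℂ)) =
      Matrix.fromBlocks (α • 1) (α • 0) (α • 0) (α • 1) from Matrix.fromBlocks_smul α 1 0 0 1,
    sub_eq_add_neg, Matrix.fromBlocks_neg, Matrix.fromBlocks_add]
  simp only [smul_zero, neg_zero, add_zero, ← sub_eq_add_neg]
  rw [det_fromBlocks_comm' _ _ _ _ (by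
    have h1 : a * q * a = a * (a * q) := by rw [mul_assoc, ← hc]
    simp only [mul_sub, sub_mul, Matrix.mul_smul, Matrix.smul_mul, Matrix.mul_one,
      Matrix.one_mul, smul_zero, Matrix.mul_neg, Matrix.neg_mul, h1])]
  have hEq : (-((γ:ℂ) • (b * q * a * q)) - α • 1) * (-((ε:ℂ) • a) - α • 1) -
      -(b * q * (1 - ((γ * ε : ℝ) : ℂ) • a)) * (a * q)
      = α ^ 2 • 1 + α • ((ε:ℂ) • a + (γ:ℂ) • (b * q * a * q)) + b * q * a * q := by
    have h2 : b * q * a * q * a = b * q * a * (a * q) := by rw [mul_assoc (b * q * a) q a, ← hc]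
    have h4 : b * q * (a * q) = b * q * a * q := by rw [← mul_assoc]
    push_cast
    simp only [mul_sub, sub_mul, mul_add, add_mul, Matrix.mul_smul, Matrix.smul_mul,
      Matrix.mul_one, Matrix.one_mul, Matrix.mul_neg, Matrix.neg_mul, smul_smul,
      neg_neg, sub_neg_eq_add, neg_sub, h2, h4]
    match_scalars <;> ring
  rw [hEq]
end

section
/- Let Q, A, B be real d×d matrices with A Q = Q A, and suppose A and B Q A Q are simultaneously diagonalizable: there exists an invertible P such that P⁻¹(B Q A Q)P = diag(μ₁,…,μ_d) and P⁻¹AP = diag(a₁,…,a_d), with all μ_i > 0 and all a_i > 0. Let ε ≥ 0 and γ > 0, and let M = [[−γ B Q A Q, −B Q(I − γε A)], [A Q, −ε A]]. Then the characteristic polynomial of M equals ∏_{i=1}^{d} (α² + α(ε a_i + γ μ_i) + μ_i); consequently, every eigenvalue α ∈ ℂ of M satisfies α = ½(−ε a_i − γ μ_i ± √((ε a_i + γ μ_i)² − 4 μ_i)) for some i, and every eigenvalue of M has strictly negative real part. -/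
open Matrix Polynomial

lemma det_fromBlocks_comm {R : Type*} [CommRing R] [IsDomain R] {n : Type*} [DecidableEq n]
    [Fintype n] (S T U V : Matrix n n R) (hUV : U * V = V * U) (hV : V.det ≠ 0) :
    (Matrix.fromBlocks S T U V).det = (S * V - T * U).det := by
  have h1 : Matrix.fromBlocks S T U V * Matrix.fromBlocks V 0 (-U) 1 =
      Matrix.fromBlocks (S * V - T * U) T 0 V := by
    rw [Matrix.fromBlocks_multiply]
    congr 1 <;> simp [hUV, mul_neg, sub_eq_add_neg]
  have h2 := congrArg Matrix.det h1
  rw [Matrix.det_mul, Matrix.det_fromBlocks_zero₁₂, Matrix.det_fromBlocks_zero₂₁,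
    Matrix.det_one, mul_one] at h2
  exact mul_right_cancel₀ hV h2

lemma eval_charpoly' {n : Type*} [DecidableEq n] [Fintype n] {R : Type*} [CommRing R]
    (M : Matrix n n R) (α : R) :
    (M.charpoly).eval α = (α • (1 : Matrix n n R) - M).det := by
  rw [Matrix.charpoly, ← Polynomial.coe_evalRingHom, RingHom.map_det]
  congr 1
  ext i j
  by_cases h : i = j <;> simp [h, Matrix.one_apply]

/-- With `AQ = QA`, `A` and `BQAQ` simultaneously diagonalizable via invertible `P`
with positive eigenvalues `a_i`, `μ_i`, `ε ≥ 0`, `γ > 0`, and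
`M = [[−γBQAQ, −BQ(I−γεA)], [AQ, −εA]]`, the characteristic polynomial of `M` is
`∏ i (α² + α(ε a_i + γ μ_i) + μ_i)`; every eigenvalue `α ∈ ℂ` of `M` satisfies
`α = ½(−ε a_i − γ μ_i ± √((ε a_i + γ μ_i)² − 4 μ_i))` for some `i`, and every eigenvalue
has strictly negative real part. -/
theorem stmt_5 (d : ℕ) (Q A B P : Matrix (Fin d) (Fin d) ℝ) (ε γ : ℝ)
    (hcomm : A * Q = Q * A)
    (hP : IsUnit P.det)
    (μ a : Fin d → ℝ)
    (hdiag1 : P⁻¹ * (B * Q * A * Q) * P = Matrix.diagonal μ)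
    (hdiag2 : P⁻¹ * A * P = Matrix.diagonal a)
    (hμ : ∀ i, 0 < μ i) (ha : ∀ i, 0 < a i)
    (hε : 0 ≤ ε) (hγ : 0 < γ)
    (M : Matrix (Fin d ⊕ Fin d) (Fin d ⊕ Fin d) ℝ)
    (hM : M = Matrix.fromBlocks (-(γ • (B * Q * A * Q))) (-(B * Q * (1 - (γ * ε) • A)))
      (A * Q) (-(ε • A))) :
    M.charpoly = ∏ i : Fin d, (X ^ 2 + C (ε * a i + γ * μ i) * X + C (μ i)) ∧
    (∀ α : ℂ, (∃ v : Fin d ⊕ Fin d → ℂ, v ≠ 0 ∧ (M.map (algebraMap ℝ ℂ)) *ᵥ v = α • v) →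
      ∃ i : Fin d, ∃ s : ℂ, s ^ 2 = ((ε * a i + γ * μ i : ℝ) : ℂ) ^ 2 - 4 * ((μ i : ℝ) : ℂ) ∧
        (α = (-((ε * a i : ℝ) : ℂ) - ((γ * μ i : ℝ) : ℂ) + s) / 2 ∨
          α = (-((ε * a i : ℝ) : ℂ) - ((γ * μ i : ℝ) : ℂ) - s) / 2)) ∧
    (∀ α : ℂ, (∃ v : Fin d ⊕ Fin d → ℂ, v ≠ 0 ∧ (M.map (algebraMap ℝ ℂ)) *ᵥ v = α • v) →
      α.re < 0) := by
  subst hM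
  -- Part 1: the characteristic polynomial
  have part1 : (Matrix.fromBlocks (-(γ • (B * Q * A * Q))) (-(B * Q * (1 - (γ * ε) • A)))
      (A * Q) (-(ε • A))).charpoly
      = ∏ i : Fin d, (X ^ 2 + C (ε * a i + γ * μ i) * X + C (μ i)) := by
    set R₁ := B * Q * A * Q with hR₁
    have hAAQ : A * (A * Q) = (A * Q) * A := by
      calc A * (A * Q) = A * (Q * A) := by rw [hcomm]
      _ = (A * Q) * A := by rw [← mul_assoc]
    have hPP : P * P⁻¹ = 1 := Matrix.mul_nonsing_inv P hP
    have hAP : A * P = P * Matrix.diagonal a := by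
      have h := congrArg (fun N => P * N) hdiag2
      simpa [← mul_assoc, hPP] using h
    have hRP : R₁ * P = P * Matrix.diagonal μ := by
      have h := congrArg (fun N => P * N) hdiag1
      simpa [← mul_assoc, hPP] using h
    set φ := (C : ℝ →+* ℝ[X]).mapMatrix (m := Fin d) with hφ
    set t := Matrix.scalar (Fin d) (X : ℝ[X]) with hT
    have ht : ∀ W : Matrix (Fin d) (Fin d) ℝ[X], t * W = W * t := fun W =>
      (Matrix.scalar_commute (X : ℝ[X]) (fun r' => Commute.all _ _) W)
    have h1 : B * Q * A * (A * Q) = R₁ * A := by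
      rw [hR₁]; rw [mul_assoc (B * Q) A (A * Q), hAAQ]; noncomm_ring
    have key1 : (γ • R₁) * (ε • A) + (B * Q * (1 - (γ * ε) • A)) * (A * Q) = R₁ := by
      have h2 : (B * Q * (1 - (γ * ε) • A)) * (A * Q)
          = R₁ - (γ * ε) • (R₁ * A) := by
        rw [mul_sub, mul_one, sub_mul, mul_smul_comm, smul_mul_assoc, h1,
          hR₁, mul_assoc (B * Q)]
      rw [h2, smul_mul_assoc, mul_smul_comm, smul_smul]
      abel
    have hS : Matrix.charmatrix (-(γ • R₁)) = t + φ (γ • R₁) := by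
      rw [Matrix.charmatrix, map_neg, sub_neg_eq_add]
    have hV : Matrix.charmatrix (-(ε • A)) = t + φ (ε • A) := by
      rw [Matrix.charmatrix, map_neg, sub_neg_eq_add]
    have hUV : (-(φ (A * Q))) * Matrix.charmatrix (-(ε • A))
        = Matrix.charmatrix (-(ε • A)) * (-(φ (A * Q))) := by
      rw [hV, neg_mul, mul_neg, mul_add, add_mul, ← ht (φ (A * Q)),
        ← _root_.map_mul φ, ← _root_.map_mul φ, mul_smul_comm, smul_mul_assoc, hAAQ]
    have hVdet : (Matrix.charmatrix (-(ε • A))).det ≠ 0 :=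
      (Matrix.charpoly_monic _).ne_zero
    have hstep : (Matrix.fromBlocks (-(γ • R₁)) (-(B * Q * (1 - (γ * ε) • A)))
        (A * Q) (-(ε • A))).charpoly
        = ((t + φ (γ • R₁)) * (t + φ (ε • A))
            - φ (B * Q * (1 - (γ * ε) • A)) * (-(φ (A * Q)))).det := by
      rw [Matrix.charpoly, Matrix.charmatrix_fromBlocks]
      have e1 : -((-(B * Q * (1 - (γ * ε) • A))).map (C : ℝ →+* ℝ[X]))
          = φ (B * Q * (1 - (γ * ε) • A)) := by
        rw [← RingHom.mapMatrix_apply, map_neg, neg_neg, hφ]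
      have e2 : -((A * Q).map (C : ℝ →+* ℝ[X])) = -(φ (A * Q)) := rfl
      rw [e1, e2, det_fromBlocks_comm _ _ _ _ hUV hVdet, hS, hV]
    have e3 : φ ((γ • R₁) * (ε • A)) + φ ((B * Q * (1 - (γ * ε) • A)) * (A * Q)) = φ R₁ := by
      rw [← map_add φ, key1]
    have hN : (t + φ (γ • R₁)) * (t + φ (ε • A))
        - φ (B * Q * (1 - (γ * ε) • A)) * (-(φ (A * Q)))
        = t * t + t * φ (ε • A + γ • R₁) + φ R₁ := by
      rw [mul_neg, sub_neg_eq_add, add_mul, mul_add, mul_add, ← ht (φ (γ • R₁))]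
      simp only [← _root_.map_mul φ]
      rw [← e3, map_add φ, mul_add]
      abel
    rw [hstep, hN]
    set g : Fin d → ℝ := fun i => ε * a i + γ * μ i with hg
    have hbP : (ε • A + γ • R₁) * P = P * Matrix.diagonal g := by
      have hdg : ε • Matrix.diagonal a + γ • Matrix.diagonal μ = Matrix.diagonal g := by
        ext i j
        by_cases h : i = j <;> simp [Matrix.diagonal, h, hg]
      rw [add_mul, smul_mul_assoc, smul_mul_assoc, hAP, hRP, ← mul_smul_comm, ← mul_smul_comm,
        ← mul_add, hdg]
    set D : Matrix (Fin d) (Fin d) ℝ[X] :=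
      Matrix.diagonal (fun i => X ^ 2 + C (ε * a i + γ * μ i) * X + C (μ i)) with hD
    have hdiagmap : ∀ f : Fin d → ℝ, φ (Matrix.diagonal f)
        = Matrix.diagonal (fun i => C (f i)) := by
      intro f
      rw [hφ, RingHom.mapMatrix_apply, Matrix.diagonal_map (map_zero C)]
    have hDeq : t * t + t * Matrix.diagonal (fun i => C (g i))
        + Matrix.diagonal (fun i => C (μ i)) = D := by
      rw [hT, Matrix.scalar_apply, Matrix.diagonal_mul_diagonal, Matrix.diagonal_mul_diagonal,
        Matrix.diagonal_add, Matrix.diagonal_add, hD]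
      apply congrArg Matrix.diagonal
      funext i
      simp only [hg]
      ring
    have htt : ∀ W : Matrix (Fin d) (Fin d) ℝ[X], t * t * W = W * (t * t) := by
      intro W
      rw [mul_assoc, ht W, ← mul_assoc, ht W, mul_assoc]
    have htd : ∀ W dg : Matrix (Fin d) (Fin d) ℝ[X], t * (W * dg) = W * (t * dg) := by
      intro W dg
      rw [← mul_assoc, ht W, mul_assoc]
    have hNP : (t * t + t * φ (ε • A + γ • R₁) + φ R₁) * φ P = φ P * D := by
      rw [add_mul, add_mul, mul_assoc t (φ (ε • A + γ • R₁)) (φ P), ← _root_.map_mul φ, hbP,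
        ← _root_.map_mul φ, hRP, _root_.map_mul φ, _root_.map_mul φ, hdiagmap, hdiagmap,
        htt (φ P), htd (φ P), ← mul_add, ← mul_add, hDeq]
    have hPdet : (φ P).det ≠ 0 := by
      rw [hφ, ← RingHom.map_det]
      exact Polynomial.C_ne_zero.mpr hP.ne_zero
    have hdet := congrArg Matrix.det hNP
    rw [Matrix.det_mul, Matrix.det_mul, mul_comm] at hdet
    have hfin : (t * t + t * φ (ε • A + γ • R₁) + φ R₁).det = D.det :=
      mul_left_cancel₀ hPdet hdet
    rw [hfin, hD, Matrix.det_diagonal]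
  -- Shared eigenvalue fact: any eigenvalue is a root of one quadratic factor
  have hroot : ∀ α : ℂ,
      (∃ v : Fin d ⊕ Fin d → ℂ, v ≠ 0 ∧
        ((Matrix.fromBlocks (-(γ • (B * Q * A * Q))) (-(B * Q * (1 - (γ * ε) • A)))
          (A * Q) (-(ε • A))).map (algebraMap ℝ ℂ)) *ᵥ v = α • v) →
      ∃ i : Fin d, α ^ 2 + ((ε * a i + γ * μ i : ℝ) : ℂ) * α + ((μ i : ℝ) : ℂ) = 0 := by
    set M := Matrix.fromBlocks (-(γ • (B * Q * A * Q))) (-(B * Q * (1 - (γ * ε) • A)))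
      (A * Q) (-(ε • A)) with hMdef
    rintro α ⟨v, hv0, hv⟩
    have h0 : (α • (1 : Matrix (Fin d ⊕ Fin d) (Fin d ⊕ Fin d) ℂ)
        - M.map (algebraMap ℝ ℂ)) *ᵥ v = 0 := by
      rw [Matrix.sub_mulVec, Matrix.smul_mulVec, Matrix.one_mulVec, hv, sub_self]
    have hdet0 : (α • (1 : Matrix (Fin d ⊕ Fin d) (Fin d ⊕ Fin d) ℂ)
        - M.map (algebraMap ℝ ℂ)).det = 0 :=
      Matrix.exists_mulVec_eq_zero_iff.mp ⟨v, hv0, h0⟩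
    have he : ((M.map (algebraMap ℝ ℂ)).charpoly).eval α = 0 := by
      rw [eval_charpoly', hdet0]
    rw [Matrix.charpoly_map, part1, Polynomial.map_prod, Polynomial.eval_prod] at he
    obtain ⟨i, _, hi⟩ := Finset.prod_eq_zero_iff.mp he
    refine ⟨i, ?_⟩
    simpa [Polynomial.eval_add, Polynomial.eval_mul, Polynomial.eval_pow, Polynomial.eval_C,
      Polynomial.eval_X, Polynomial.map_add, Polynomial.map_mul, Polynomial.map_pow,
      Polynomial.map_X, Polynomial.map_C] using hi
  refine ⟨part1, ?_, ?_⟩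
  · -- Part 2: eigenvalue formula
    intro α hα
    obtain ⟨i, hi⟩ := hroot α hα
    refine ⟨i, 2 * α + ((ε * a i + γ * μ i : ℝ) : ℂ), ?_, Or.inl ?_⟩
    · push_cast at hi ⊢
      linear_combination (4 : ℂ) * hi
    · push_cast
      ring
  · -- Part 3: negative real part
    intro α hα
    obtain ⟨i, hi⟩ := hroot α hα
    have hb : 0 < ε * a i + γ * μ i := by
      have h1 : 0 ≤ ε * a i := mul_nonneg hε (ha i).le
      have h2 : 0 < γ * μ i := mul_pos hγ (hμ i)
      linarith
    have hc : 0 < μ i := hμ i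
    set b : ℝ := ε * a i + γ * μ i
    set c : ℝ := μ i
    rw [pow_two] at hi
    have hre := congrArg Complex.re hi
    have him := congrArg Complex.im hi
    simp only [Complex.add_re, Complex.mul_re, Complex.add_im, Complex.mul_im,
      Complex.ofReal_re, Complex.ofReal_im, Complex.zero_re, Complex.zero_im] at hre him
    have him' : α.im * (2 * α.re + b) = 0 := by nlinarith [him]
    rcases mul_eq_zero.mp him' with hy | hx
    · by_contra hx
      push_neg at hx
      rw [hy] at hre
      nlinarith
    · nlinarith
end

section
/- Let μ₁ ≥ μ₂ ≥ … ≥ μ_n > 0 be real numbers with μ₁ > μ_n. Define r(t) = √t for t ≥ 0 and r(t) = 0 for t < 0, and define g(γ) = max_{1 ≤ i ≤ n} ½ μ_i (−γ + r(γ² − 4/μ_i)) for γ > 0. Then for all γ > 0, g(γ) ≥ −√μ_n / √(2 − μ_n/μ₁), and equality holds at γ* = 2√μ₁ / √(μ_n(2μ₁ − μ_n)), i.e., g(γ*) = −√μ_n / √(2 − μ_n/μ₁). In particular g attains its minimum over (0,∞) at γ*. -/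
open Matrix

private lemma sq_eq_aux {x y : ℝ} (hx : 0 ≤ x) (hy : 0 ≤ y) (h : x ^ 2 = y ^ 2) : x = y := by
  nlinarith [sq_nonneg (x - y), sq_nonneg (x + y)]

private lemma conv_aux {m γ : ℝ} (hm : 0 < m) (hγ : 0 < γ) (h : 0 ≤ γ ^ 2 - 4 / m) :
    m * (-γ + Real.sqrt (γ ^ 2 - 4 / m)) / 2 = -2 / (γ + Real.sqrt (γ ^ 2 - 4 / m)) := by
  set s := Real.sqrt (γ ^ 2 - 4 / m) with hs
  have hs2 : s ^ 2 = γ ^ 2 - 4 / m := Real.sq_sqrt h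
  have hsnn : 0 ≤ s := Real.sqrt_nonneg _
  have hd : 0 < γ + s := by linarith
  have hms : m * s ^ 2 = m * γ ^ 2 - 4 := by
    rw [hs2]; field_simp
  field_simp
  nlinarith [hms]

/-- For `μ₁ ≥ … ≥ μ_n > 0` with `μ₁ > μ_n`, and
`g(γ) = max_i ½ μ_i (−γ + r(γ² − 4/μ_i))` (with `r(t) = √t` for `t ≥ 0`, `0` otherwise;
this is exactly `Real.sqrt`), for all `γ > 0` we have `g(γ) ≥ −√μ_n / √(2 − μ_n/μ₁)`,
with equality at `γ* = 2√μ₁ / √(μ_n(2μ₁ − μ_n))`; in particular `g` attains its minimum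
over `(0,∞)` at `γ*`. -/
theorem stmt_6 (n : ℕ) (μ : Fin (n + 1) → ℝ)
    (hmono : ∀ i j : Fin (n + 1), i ≤ j → μ j ≤ μ i)
    (hpos : ∀ i, 0 < μ i)
    (hlt : μ (Fin.last n) < μ 0)
    (g : ℝ → ℝ)
    (hg : ∀ γ, g γ = Finset.univ.sup' Finset.univ_nonempty
      (fun i => μ i * (-γ + Real.sqrt (γ ^ 2 - 4 / μ i)) / 2)) :
    (∀ γ > 0, -Real.sqrt (μ (Fin.last n)) / Real.sqrt (2 - μ (Fin.last n) / μ 0) ≤ g γ) ∧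
    g (2 * Real.sqrt (μ 0) / Real.sqrt (μ (Fin.last n) * (2 * μ 0 - μ (Fin.last n)))) =
      -Real.sqrt (μ (Fin.last n)) / Real.sqrt (2 - μ (Fin.last n) / μ 0) := by
  set a := μ 0 with hadef
  set b := μ (Fin.last n) with hbdef
  have ha : 0 < a := hpos 0
  have hb : 0 < b := hpos _
  have hba : b < a := hlt
  have hD : 0 < 2 * a - b := by linarith
  have hQ : 0 < 2 - b / a := by
    rw [sub_pos, div_lt_iff₀ ha]; linarith
  set S := Real.sqrt (a * (b * (2 * a - b))) with hSdef
  have hS2 : S ^ 2 = a * (b * (2 * a - b)) := Real.sq_sqrt (by positivity)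
  have hS : 0 < S := Real.sqrt_pos.mpr (by positivity)
  have hγspos : 0 < 2 * a / S := by positivity
  -- c = S / (2a - b)
  have hc : Real.sqrt b / Real.sqrt (2 - b / a) = S / (2 * a - b) := by
    apply sq_eq_aux (by positivity) (by positivity)
    rw [div_pow, div_pow, Real.sq_sqrt hb.le, Real.sq_sqrt hQ.le, hS2]
    field_simp
  -- γ* = 2a / S
  have hγ : 2 * Real.sqrt a / Real.sqrt (b * (2 * a - b)) = 2 * a / S := by
    apply sq_eq_aux (by positivity) (by positivity)
    rw [div_pow, div_pow, mul_pow, mul_pow, Real.sq_sqrt ha.le,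
      Real.sq_sqrt (by positivity), hS2]
    field_simp
  have hγs2 : (2 * a / S) ^ 2 - 4 / a = (2 * (a - b) / S) ^ 2 := by
    rw [div_pow, div_pow, hS2]
    field_simp
    ring
  have hs0 : Real.sqrt ((2 * a / S) ^ 2 - 4 / a) = 2 * (a - b) / S := by
    rw [hγs2]
    exact Real.sqrt_sq (div_nonneg (by linarith) hS.le)
  have hs0nn : 0 ≤ (2 * a / S) ^ 2 - 4 / a := by
    rw [hγs2]; positivity
  have key : b * (2 * a / S) / 2 = S / (2 * a - b) := by
    field_simp
    nlinarith [hS2]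
  have hfin : -2 / (2 * (2 * a - b) / S) = -(S / (2 * a - b)) := by
    rw [div_div_eq_mul_div]
    field_simp
  -- lower bound for every γ > 0
  have hlb : ∀ γ : ℝ, 0 < γ → -(S / (2 * a - b)) ≤ g γ := by
    intro γ hγ0
    rw [hg]
    rcases le_total γ (2 * a / S) with hle | hge
    · refine le_trans ?_ (Finset.le_sup' _ (Finset.mem_univ (Fin.last n)))
      simp only [← hbdef]
      have hsnn : 0 ≤ Real.sqrt (γ ^ 2 - 4 / b) := Real.sqrt_nonneg _
      nlinarith [mul_nonneg hb.le (sub_nonneg.mpr hle), mul_nonneg hb.le hsnn]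
    · refine le_trans ?_ (Finset.le_sup' _ (Finset.mem_univ (0 : Fin (n + 1))))
      simp only [← hadef]
      have hγ2 : (2 * a / S) ^ 2 ≤ γ ^ 2 := by nlinarith
      have hnn : 0 ≤ γ ^ 2 - 4 / a := by linarith [hs0nn]
      rw [conv_aux ha hγ0 hnn]
      have hsm : 2 * (a - b) / S ≤ Real.sqrt (γ ^ 2 - 4 / a) := by
        rw [← hs0]
        exact Real.sqrt_le_sqrt (by linarith)
      have hsum : 2 * a / S + 2 * (a - b) / S = 2 * (2 * a - b) / S := by ring
      have hd2 : 2 * (2 * a - b) / S ≤ γ + Real.sqrt (γ ^ 2 - 4 / a) := by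
        rw [← hsum]; gcongr
      have hdpos : 0 < 2 * (2 * a - b) / S := by positivity
      calc -(S / (2 * a - b)) = -2 / (2 * (2 * a - b) / S) := hfin.symm
        _ ≤ -2 / (γ + Real.sqrt (γ ^ 2 - 4 / a)) := by
            rw [neg_div, neg_div, neg_le_neg_iff]
            exact div_le_div_of_nonneg_left (by norm_num) hdpos hd2
  -- upper bound at γ*
  have hub : ∀ i : Fin (n + 1),
      μ i * (-(2 * a / S) + Real.sqrt ((2 * a / S) ^ 2 - 4 / μ i)) / 2 ≤
        -(S / (2 * a - b)) := by
    intro i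
    have hbm : b ≤ μ i := hmono i (Fin.last n) (Fin.le_last i)
    have hma : μ i ≤ a := hmono 0 i (Fin.zero_le i)
    have hm : 0 < μ i := hpos i
    rcases le_or_gt ((2 * a / S) ^ 2 - 4 / μ i) 0 with h | h
    · rw [Real.sqrt_eq_zero'.mpr (by linarith)]
      rw [← key]
      have t := mul_le_mul_of_nonneg_right hbm hγspos.le
      linarith
    · rw [conv_aux hm hγspos h.le]
      have hsm : Real.sqrt ((2 * a / S) ^ 2 - 4 / μ i) ≤ 2 * (a - b) / S := by
        rw [← hs0]
        apply Real.sqrt_le_sqrt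
        have : 4 / a ≤ 4 / μ i := by gcongr
        linarith
      have hsum : 2 * a / S + 2 * (a - b) / S = 2 * (2 * a - b) / S := by ring
      have hdpos : 0 < 2 * a / S + Real.sqrt ((2 * a / S) ^ 2 - 4 / μ i) := by
        have := Real.sqrt_nonneg ((2 * a / S) ^ 2 - 4 / μ i); linarith
      calc -2 / (2 * a / S + Real.sqrt ((2 * a / S) ^ 2 - 4 / μ i))
          ≤ -2 / (2 * (2 * a - b) / S) := by
            rw [neg_div, neg_div, neg_le_neg_iff]
            refine div_le_div_of_nonneg_left (by norm_num) hdpos ?_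
            rw [← hsum]; linarith
        _ = -(S / (2 * a - b)) := hfin
  constructor
  · intro γ hγ0
    rw [neg_div, hc]
    exact hlb γ hγ0
  · rw [neg_div, hc, hγ, hg]
    apply le_antisymm
    · exact Finset.sup'_le _ _ (fun i _ => hub i)
    · have := hlb (2 * a / S) hγspos
      rw [hg] at this
      exact this
end

section
/- Let Q, A, B be real d×d matrices with A Q = Q A, and suppose A and B Q A Q are simultaneously diagonalizable via an invertible P with P⁻¹(B Q A Q)P = diag(μ₁,…,μ_d), all μ_i > 0. Let M₀ = [[0, −B Q], [A Q, 0]] be the 2d×2d block matrix obtained from the PDD linear system with γ = ε = 0. Then the characteristic polynomial of M₀ equals ∏_{i=1}^{d}(α² + μ_i); consequently every eigenvalue of M₀ is purely imaginary and nonzero (the eigenvalues are exactly ±i√μ_i, i = 1,…,d). -/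
open Matrix Polynomial

lemma aux_eval_charpoly {n : Type*} [Fintype n] [DecidableEq n] {R : Type*} [CommRing R]
    (N : Matrix n n R) (r : R) :
    N.charpoly.eval r = (r • (1 : Matrix n n R) - N).det := by
  rw [Matrix.charpoly, ← coe_evalRingHom, RingHom.map_det]
  congr 1
  ext i j
  by_cases h : i = j <;>
    simp [h, charmatrix_apply_eq, charmatrix_apply_ne, Matrix.one_apply, Matrix.smul_apply]

lemma aux_charpoly_block (d : ℕ) (B' C' : Matrix (Fin d) (Fin d) ℝ) :
    (Matrix.fromBlocks 0 (-B') C' 0).charpoly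
      = ((X ^ 2 : ℝ[X]) • (1 : Matrix (Fin d) (Fin d) ℝ[X]) + (B' * C').map C).det := by
  classical
  set S : Matrix (Fin d) (Fin d) ℝ[X] := (X : ℝ[X]) • 1 with hS
  have hchar0 : charmatrix (0 : Matrix (Fin d) (Fin d) ℝ) = S := by
    ext i j
    by_cases h : i = j <;>
      simp [hS, h, charmatrix_apply_eq, charmatrix_apply_ne, Matrix.one_apply,
        Matrix.smul_apply]
  set Bc := B'.map (C : ℝ →+* ℝ[X]) with hBc
  set Cc := C'.map (C : ℝ →+* ℝ[X]) with hCc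
  have hmapneg : (-B').map (C : ℝ →+* ℝ[X]) = -Bc := by
    ext i j; simp [hBc]
  have hCM : charmatrix (Matrix.fromBlocks 0 (-B') C' 0)
      = Matrix.fromBlocks S Bc (-Cc) S := by
    rw [charmatrix_fromBlocks, hchar0, hmapneg, neg_neg]
  have hScomm : ∀ M : Matrix (Fin d) (Fin d) ℝ[X], S * M = M * S := by
    intro M
    simp [hS, smul_mul_assoc, mul_smul_comm]
  have hprod : Matrix.fromBlocks S Bc (-Cc) S * Matrix.fromBlocks S 0 Cc 1
      = Matrix.fromBlocks (S * S + Bc * Cc) Bc 0 S := by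
    simp [Matrix.fromBlocks_multiply, Matrix.neg_mul, hScomm Cc]
  have hdetS : S.det = (X : ℝ[X]) ^ d := by
    simp [hS, Matrix.det_smul]
  have hdetE : (Matrix.fromBlocks S 0 Cc 1 : Matrix _ _ ℝ[X]).det = (X : ℝ[X]) ^ d := by
    rw [Matrix.det_fromBlocks_zero₁₂, hdetS]; simp
  have hkey := congrArg Matrix.det hprod
  rw [Matrix.det_mul, hdetE, Matrix.det_fromBlocks_zero₂₁, hdetS] at hkey
  have hXd : (X : ℝ[X]) ^ d ≠ 0 := pow_ne_zero _ X_ne_zero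
  have h1 : (Matrix.fromBlocks 0 (-B') C' 0).charpoly = (S * S + Bc * Cc).det := by
    apply mul_right_cancel₀ hXd
    rw [Matrix.charpoly, hCM, hkey]
  rw [h1]
  have hSS : S * S = (X ^ 2 : ℝ[X]) • (1 : Matrix (Fin d) (Fin d) ℝ[X]) := by
    rw [hS, smul_mul_smul_comm, mul_one, ← sq]
  rw [hSS, hBc, hCc, ← Matrix.map_mul]

lemma aux_det_sim (d : ℕ) (N P : Matrix (Fin d) (Fin d) ℝ) (μ : Fin d → ℝ)
    (hP : IsUnit P.det) (h : N * P = P * Matrix.diagonal μ) :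
    ((X ^ 2 : ℝ[X]) • (1 : Matrix (Fin d) (Fin d) ℝ[X]) + N.map C).det
      = ∏ i : Fin d, (X ^ 2 + C (μ i)) := by
  classical
  set Pc := P.map (C : ℝ →+* ℝ[X]) with hPc
  have key : ((X ^ 2 : ℝ[X]) • 1 + N.map C) * Pc
      = Pc * ((X ^ 2 : ℝ[X]) • 1 + (Matrix.diagonal μ).map C) := by
    rw [Matrix.add_mul, Matrix.mul_add, Matrix.smul_mul, Matrix.one_mul,
      Matrix.mul_smul, Matrix.mul_one, hPc, ← Matrix.map_mul, ← Matrix.map_mul, h]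
  have hdetPc : Pc.det = C P.det := by
    rw [hPc]
    exact (RingHom.map_det (C : ℝ →+* ℝ[X]) P).symm
  have hPne : Pc.det ≠ 0 := by
    rw [hdetPc]
    simp only [ne_eq, C_eq_zero]
    exact hP.ne_zero
  have hdiagonal : (X ^ 2 : ℝ[X]) • (1 : Matrix (Fin d) (Fin d) ℝ[X])
      + (Matrix.diagonal μ).map C = Matrix.diagonal (fun i => X ^ 2 + C (μ i)) := by
    ext i j
    by_cases hij : i = j <;>
      simp [hij, Matrix.diagonal_apply, Matrix.one_apply, Matrix.smul_apply]
  have := congrArg Matrix.det key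
  rw [Matrix.det_mul, Matrix.det_mul, hdiagonal, Matrix.det_diagonal] at this
  exact mul_right_cancel₀ hPne (this.trans (mul_comm _ _))

lemma aux_root (μi : ℝ) (hμi : 0 < μi) (α : ℂ) :
    α ^ 2 + (μi : ℂ) = 0 ↔
      α = Complex.I * ((Real.sqrt μi : ℝ) : ℂ) ∨ α = -(Complex.I * ((Real.sqrt μi : ℝ) : ℂ)) := by
  set z : ℂ := Complex.I * ((Real.sqrt μi : ℝ) : ℂ) with hzdef
  have hz : z ^ 2 = -(μi : ℂ) := by
    rw [hzdef, mul_pow, Complex.I_sq, neg_one_mul]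
    norm_cast
    rw [Real.sq_sqrt hμi.le]
  have hf : (α - z) * (α + z) = α ^ 2 + (μi : ℂ) := by linear_combination -hz
  constructor
  · intro h
    rcases mul_eq_zero.mp (hf.trans h) with h' | h'
    · exact Or.inl (sub_eq_zero.mp h')
    · exact Or.inr (eq_neg_of_add_eq_zero_left h')
  · rintro (rfl | rfl)
    · rw [hz]; ring
    · rw [neg_pow, hz]; ring

/-- With `AQ = QA`, `A` and `BQAQ` simultaneously diagonalizable via invertible `P`
with eigenvalues `μ_i > 0` for `BQAQ`, the matrix `M₀ = [[0, −BQ], [AQ, 0]]` has characteristic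
polynomial `∏ i (α² + μ_i)`; consequently every eigenvalue of `M₀` is purely imaginary and
nonzero — the eigenvalues are exactly `± i√μ_i`. -/
theorem stmt_7 (d : ℕ) (Q A B P : Matrix (Fin d) (Fin d) ℝ)
    (hcomm : A * Q = Q * A)
    (hP : IsUnit P.det)
    (μ a : Fin d → ℝ)
    (hdiag1 : P⁻¹ * (B * Q * A * Q) * P = Matrix.diagonal μ)
    (hdiag2 : P⁻¹ * A * P = Matrix.diagonal a)
    (hμ : ∀ i, 0 < μ i)
    (M₀ : Matrix (Fin d ⊕ Fin d) (Fin d ⊕ Fin d) ℝ)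
    (hM₀ : M₀ = Matrix.fromBlocks 0 (-(B * Q)) (A * Q) 0) :
    M₀.charpoly = ∏ i : Fin d, (X ^ 2 + C (μ i)) ∧
    (∀ α : ℂ, (∃ v : Fin d ⊕ Fin d → ℂ, v ≠ 0 ∧ (M₀.map (algebraMap ℝ ℂ)) *ᵥ v = α • v) →
      α.re = 0 ∧ α ≠ 0) ∧
    (∀ α : ℂ, (∃ v : Fin d ⊕ Fin d → ℂ, v ≠ 0 ∧ (M₀.map (algebraMap ℝ ℂ)) *ᵥ v = α • v) ↔
      ∃ i : Fin d, α = Complex.I * ((Real.sqrt (μ i) : ℝ) : ℂ) ∨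
        α = -(Complex.I * ((Real.sqrt (μ i) : ℝ) : ℂ))) := by
  classical
  -- similarity relation for B Q A Q
  have hNP : (B * Q * A * Q) * P = P * Matrix.diagonal μ := by
    have h := congrArg (fun M => P * M) hdiag1
    simpa [← Matrix.mul_assoc, Matrix.mul_nonsing_inv P hP] using h
  -- Part 1: the characteristic polynomial
  have hpart1 : M₀.charpoly = ∏ i : Fin d, (X ^ 2 + C (μ i)) := by
    rw [hM₀, aux_charpoly_block, ← Matrix.mul_assoc]
    exact aux_det_sim d _ P μ hP hNP
  -- the complexified matrix and its charpoly
  set N := M₀.map (algebraMap ℝ ℂ) with hN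
  have hNcp : N.charpoly = ∏ i : Fin d, (X ^ 2 + C ((μ i : ℝ) : ℂ)) := by
    rw [hN, Matrix.charpoly_map, hpart1, Polynomial.map_prod]
    simp
  have heval : ∀ α : ℂ, N.charpoly.eval α = ∏ i : Fin d, (α ^ 2 + (μ i : ℂ)) := by
    intro α
    rw [hNcp, Polynomial.eval_prod]
    simp
  -- eigenvalue characterization
  have heig : ∀ α : ℂ,
      (∃ v : Fin d ⊕ Fin d → ℂ, v ≠ 0 ∧ N *ᵥ v = α • v) ↔
        ∃ i : Fin d, α = Complex.I * ((Real.sqrt (μ i) : ℝ) : ℂ) ∨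
          α = -(Complex.I * ((Real.sqrt (μ i) : ℝ) : ℂ)) := by
    intro α
    have h1 : (∃ v : Fin d ⊕ Fin d → ℂ, v ≠ 0 ∧ N *ᵥ v = α • v) ↔
        (α • (1 : Matrix (Fin d ⊕ Fin d) (Fin d ⊕ Fin d) ℂ) - N).det = 0 := by
      have h : ∀ v : Fin d ⊕ Fin d → ℂ,
          (N *ᵥ v = α • v) ↔ (α • (1 : Matrix _ _ ℂ) - N) *ᵥ v = 0 := by
        intro v
        rw [Matrix.sub_mulVec, Matrix.smul_mulVec, Matrix.one_mulVec, sub_eq_zero, eq_comm]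
      simp only [h]
      exact Matrix.exists_mulVec_eq_zero_iff
    rw [h1, ← aux_eval_charpoly, heval, Finset.prod_eq_zero_iff]
    constructor
    · rintro ⟨i, -, hi⟩
      exact ⟨i, (aux_root (μ i) (hμ i) α).mp hi⟩
    · rintro ⟨i, hi⟩
      exact ⟨i, Finset.mem_univ i, (aux_root (μ i) (hμ i) α).mpr hi⟩
  refine ⟨hpart1, ?_, heig⟩
  intro α hα
  obtain ⟨i, hi⟩ := (heig α).mp hα
  have hsne : ((Real.sqrt (μ i) : ℝ) : ℂ) ≠ 0 := by
    exact_mod_cast (Real.sqrt_pos.mpr (hμ i)).ne'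
  rcases hi with rfl | rfl
  · constructor
    · simp [Complex.mul_re]
    · exact mul_ne_zero Complex.I_ne_zero hsne
  · constructor
    · simp [Complex.mul_re]
    · exact neg_ne_zero.mpr (mul_ne_zero Complex.I_ne_zero hsne)
end

section
/- Let μ₁ ≥ μ₂ ≥ … ≥ μ_n > 0 be real numbers, let 0 < γ ≤ 1/√μ₁, let 0 < μ' ≤ μ_n, and set ε = 2√μ' − γμ'. Define r(t) = √t for t ≥ 0 and r(t) = 0 for t < 0. Then for every i, (γμ_i + ε)² − 4μ_i ≤ 0, and max_{1 ≤ i ≤ n} ½( −γμ_i − ε + r((γμ_i + ε)² − 4μ_i) ) = −√μ' − (γ/2)(μ_n − μ') ≤ −√μ'. -/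
open Matrix

/-- For `μ₁ ≥ … ≥ μ_n > 0`, `0 < γ ≤ 1/√μ₁`, `0 < μ' ≤ μ_n`,
`ε = 2√μ' − γμ'`, every discriminant `(γμ_i + ε)² − 4μ_i ≤ 0` and
`max_i ½(−γμ_i − ε + r((γμ_i + ε)² − 4μ_i)) = −√μ' − (γ/2)(μ_n − μ') ≤ −√μ'`
(where `r`, square root vanishing on negatives, is exactly `Real.sqrt`). -/
theorem stmt_8 (n : ℕ) (μ : Fin (n + 1) → ℝ)
    (hmono : ∀ i j : Fin (n + 1), i ≤ j → μ j ≤ μ i)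
    (hpos : ∀ i, 0 < μ i)
    (γ μ' ε : ℝ)
    (hγ0 : 0 < γ) (hγ : γ ≤ 1 / Real.sqrt (μ 0))
    (hμ'0 : 0 < μ') (hμ' : μ' ≤ μ (Fin.last n))
    (hε : ε = 2 * Real.sqrt μ' - γ * μ') :
    (∀ i, (γ * μ i + ε) ^ 2 - 4 * μ i ≤ 0) ∧
    (Finset.univ.sup' Finset.univ_nonempty
        (fun i => (-(γ * μ i) - ε + Real.sqrt ((γ * μ i + ε) ^ 2 - 4 * μ i)) / 2) =
      -Real.sqrt μ' - γ / 2 * (μ (Fin.last n) - μ')) ∧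
    -Real.sqrt μ' - γ / 2 * (μ (Fin.last n) - μ') ≤ -Real.sqrt μ' := by
  have hs'0 : 0 < Real.sqrt μ' := Real.sqrt_pos.2 hμ'0
  have hs00 : 0 < Real.sqrt (μ 0) := Real.sqrt_pos.2 (hpos 0)
  have hγs0 : γ * Real.sqrt (μ 0) ≤ 1 := by
    rw [div_eq_mul_inv, one_mul] at hγ
    calc γ * Real.sqrt (μ 0) ≤ (Real.sqrt (μ 0))⁻¹ * Real.sqrt (μ 0) := by
          exact mul_le_mul_of_nonneg_right hγ hs00.le
      _ = 1 := inv_mul_cancel₀ hs00.ne'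
  have hd : ∀ i, (γ * μ i + ε) ^ 2 - 4 * μ i ≤ 0 := by
    intro i
    set si := Real.sqrt (μ i) with hsi
    have hsi2 : si ^ 2 = μ i := Real.sq_sqrt (hpos i).le
    have hs'2 : (Real.sqrt μ') ^ 2 = μ' := Real.sq_sqrt hμ'0.le
    have hs02 : (Real.sqrt (μ 0)) ^ 2 = μ 0 := Real.sq_sqrt (hpos 0).le
    have h1 : Real.sqrt μ' ≤ si := by
      apply Real.sqrt_le_sqrt
      exact le_trans hμ' (hmono i (Fin.last n) (Fin.le_last i))
    have h2 : si ≤ Real.sqrt (μ 0) := by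
      apply Real.sqrt_le_sqrt
      exact hmono 0 i (Fin.zero_le i)
    have hsi0 : 0 < si := Real.sqrt_pos.2 (hpos i)
    have hfac : 0 ≤ (si - Real.sqrt μ') * (2 - γ * (si + Real.sqrt μ')) := by
      apply mul_nonneg (by linarith)
      have : γ * (si + Real.sqrt μ') ≤ γ * (2 * Real.sqrt (μ 0)) := by
        apply mul_le_mul_of_nonneg_left _ hγ0.le
        linarith
      nlinarith
    have hx : 0 ≤ γ * (μ i - μ') + 2 * Real.sqrt μ' := by
      have : μ' ≤ μ i := le_trans hμ' (hmono i (Fin.last n) (Fin.le_last i))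
      nlinarith
    have hsq : 0 ≤ si ^ 2 - (Real.sqrt μ') ^ 2 := by nlinarith
    have h2si : 0 ≤ 2 * si + (γ * (si ^ 2 - (Real.sqrt μ') ^ 2) + 2 * Real.sqrt μ') := by
      nlinarith [mul_nonneg hγ0.le hsq]
    have hgoal : (γ * μ i + (2 * Real.sqrt μ' - γ * μ')) ^ 2 - 4 * μ i =
        (γ * si ^ 2 + 2 * Real.sqrt μ' - γ * (Real.sqrt μ') ^ 2) ^ 2 - 4 * si ^ 2 := by
      rw [hsi2, hs'2]; ring
    rw [hε, hgoal]
    nlinarith [mul_nonneg hfac h2si]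
  refine ⟨hd, ?_, ?_⟩
  · have hz : ∀ i, Real.sqrt ((γ * μ i + ε) ^ 2 - 4 * μ i) = 0 := fun i =>
      Real.sqrt_eq_zero_of_nonpos (hd i)
    have hlast : (-(γ * μ (Fin.last n)) - ε +
        Real.sqrt ((γ * μ (Fin.last n) + ε) ^ 2 - 4 * μ (Fin.last n))) / 2 =
        -Real.sqrt μ' - γ / 2 * (μ (Fin.last n) - μ') := by
      rw [hz (Fin.last n), hε]; ring
    apply le_antisymm
    · apply Finset.sup'_le
      intro i _
      rw [hz i, ← hlast, hz (Fin.last n)]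
      have := hmono i (Fin.last n) (Fin.le_last i)
      have : γ * μ (Fin.last n) ≤ γ * μ i := mul_le_mul_of_nonneg_left this hγ0.le
      linarith
    · rw [← hlast]
      exact Finset.le_sup' (fun i => (-(γ * μ i) - ε + Real.sqrt ((γ * μ i + ε) ^ 2 - 4 * μ i)) / 2) (Finset.mem_univ (Fin.last n))
  · have : 0 ≤ μ (Fin.last n) - μ' := by linarith
    nlinarith
end

section
/- Let f : ℝ^d → ℝ be three times continuously differentiable, let B : ℝ^d → ℝ^{d×d} take symmetric values, and set C(x) = B(x)∇²f(x) and C₀(x) = ∇²f(x)B(x)∇²f(x). Suppose there exist 0 < μ ≤ L with μ·I ⪯ C₀(x) ⪯ L·I for all x. Let A > 0 be a scalar, ε ≥ 0, γ ≥ 0, and let (x(t), p(t)) be a differentiable solution on [0,∞) of the PDD ODE system ṗ = A∇f(x) − εA p, ẋ = −C(x)(p + γ(A∇f(x) − εA p)). Define I(x,p) = ½(‖p‖² + ‖∇f(x)‖²) and λ = min{ μγA − ½|A − μ(1 − εγA)|, LγA − ½|A − L(1 − εγA)|, εA − ½|A − μ(1 − εγA)|, εA − ½|A − L(1 − εγA)|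 }. Then for all t ≥ 0: I(x(t), p(t)) ≤ I(x(0), p(0)) · exp(−2λt). -/
open Matrix

set_option maxHeartbeats 1000000 in
lemma key_scalar_PDD (μ L A ε γ lam G P GP Qg Qp X : ℝ)
    (hμ : 0 < μ) (hμL : μ ≤ L) (hA : 0 < A) (hε : 0 ≤ ε) (hγ : 0 ≤ γ)
    (hG : 0 ≤ G) (hP : 0 ≤ P)
    (h0 : |GP| ≤ (G + P) / 2)
    (h1 : μ * G ≤ Qg) (h2 : Qg ≤ L * G) (h3 : μ * P ≤ Qp) (h4 : Qp ≤ L * P)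
    (h5 : |X - μ * GP| ≤ (Qg - μ * G + Qp - μ * P) / 2)
    (h6 : |L * GP - X| ≤ (L * G - Qg + L * P - Qp) / 2)
    (hlam : lam = min
      (min (μ * γ * A - |A - μ * (1 - ε * γ * A)| / 2)
        (L * γ * A - |A - L * (1 - ε * γ * A)| / 2))
      (min (ε * A - |A - μ * (1 - ε * γ * A)| / 2)
        (ε * A - |A - L * (1 - ε * γ * A)| / 2))) :
    lam * (G + P) ≤ ε * A * P + γ * A * Qg + (1 - ε * γ * A) * X - A * GP := by
  set c := 1 - ε * γ * A with hc
  set aμ := |A - μ * c| with haμ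
  set aL := |A - L * c| with haL
  have haμ0 : 0 ≤ aμ := abs_nonneg _
  have haL0 : 0 ≤ aL := abs_nonneg _
  have hvμ1 : A - μ * c ≤ aμ := le_abs_self _
  have hvμ2 : -aμ ≤ A - μ * c := neg_abs_le _
  have hvL1 : A - L * c ≤ aL := le_abs_self _
  have hvL2 : -aL ≤ A - L * c := neg_abs_le _
  have hl1 : lam ≤ μ * γ * A - aμ / 2 := hlam ▸ le_trans (min_le_left _ _) (min_le_left _ _)
  have hl2 : lam ≤ L * γ * A - aL / 2 := hlam ▸ le_trans (min_le_left _ _) (min_le_right _ _)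
  have hl3 : lam ≤ ε * A - aμ / 2 := hlam ▸ le_trans (min_le_right _ _) (min_le_left _ _)
  have hl4 : lam ≤ ε * A - aL / 2 := hlam ▸ le_trans (min_le_right _ _) (min_le_right _ _)
  clear_value c aμ aL
  obtain ⟨h5a, h5b⟩ := abs_le.mp h5
  obtain ⟨h6a, h6b⟩ := abs_le.mp h6
  obtain ⟨h0a, h0b⟩ := abs_le.mp h0
  rcases eq_or_lt_of_le hμL with hEq | hLt
  · subst hEq
    have hQg : Qg = μ * G := le_antisymm h2 h1
    have hQp : Qp = μ * P := le_antisymm h4 h3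
    have hX : X = μ * GP := by rw [hQg, hQp] at h5a h5b; linarith
    have hbb : (μ * c - A) * GP ≥ -(aμ * ((G + P) / 2)) := by
      nlinarith [mul_nonneg (by linarith : (0:ℝ) ≤ aμ - (A - μ * c)) (by linarith : (0:ℝ) ≤ (G+P)/2 + GP),
        mul_nonneg (by linarith : (0:ℝ) ≤ aμ + (A - μ * c)) (by linarith : (0:ℝ) ≤ (G+P)/2 - GP)]
    have e1 : lam * G ≤ (μ * γ * A - aμ / 2) * G := mul_le_mul_of_nonneg_right hl1 hG
    have e2 : lam * P ≤ (ε * A - aμ / 2) * P := mul_le_mul_of_nonneg_right hl3 hP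
    have : ε * A * P + γ * A * Qg + c * X - A * GP
        = ε * A * P + γ * A * (μ * G) + (μ * c - A) * GP := by rw [hQg, hX]; ring
    rw [this]
    linarith [hbb, e1, e2]
  · have hd : (0:ℝ) < L - μ := by linarith
    set S₁ := (Qg - μ * G + Qp - μ * P) / 2 with hS₁
    set S₂ := (L * G - Qg + L * P - Qp) / 2 with hS₂
    have hid : (L - μ) * (c * X - A * GP)
        = (μ * GP - X) * (A - L * c) + (X - L * GP) * (A - μ * c) := by ring
    have hb1 : (μ * GP - X) * (A - L * c) ≥ -(aL * S₁) := by
      nlinarith [mul_nonneg (by linarith : (0:ℝ) ≤ aL - (A - L * c)) (by linarith : (0:ℝ) ≤ S₁ - (μ * GP - X)),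
        mul_nonneg (by linarith : (0:ℝ) ≤ aL + (A - L * c)) (by linarith : (0:ℝ) ≤ S₁ + (μ * GP - X))]
    have hb2 : (X - L * GP) * (A - μ * c) ≥ -(aμ * S₂) := by
      nlinarith [mul_nonneg (by linarith : (0:ℝ) ≤ aμ - (A - μ * c)) (by linarith : (0:ℝ) ≤ S₂ - (X - L * GP)),
        mul_nonneg (by linarith : (0:ℝ) ≤ aμ + (A - μ * c)) (by linarith : (0:ℝ) ≤ S₂ + (X - L * GP))]
    have hcross : (L - μ) * (c * X - A * GP) ≥ -(aL * S₁) - aμ * S₂ := by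
      rw [hid]; linarith
    set K := (L - μ) * (γ * A) - aL / 2 + aμ / 2 with hK
    set K2 := (aμ - aL) / 2 with hK2
    have main : 0 ≤ (L - μ) * (ε * A * P + γ * A * Qg + c * X - A * GP - lam * (G + P)) := by
      rcases le_or_gt aL aμ with hcase | hcase
      · have hK0 : 0 ≤ K := by
          have : 0 ≤ (L - μ) * (γ * A) := mul_nonneg hd.le (mul_nonneg hγ hA.le)
          rw [hK]; linarith
        have c1 : K * (μ * G) ≤ K * Qg := mul_le_mul_of_nonneg_left h1 hK0
        have c2 : K2 * (μ * P) ≤ K2 * Qp := mul_le_mul_of_nonneg_left h3 (by rw [hK2]; linarith)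
        have l1G : (L - μ) * lam * G ≤ (L - μ) * (μ * γ * A - aμ / 2) * G :=
          mul_le_mul_of_nonneg_right (mul_le_mul_of_nonneg_left hl1 hd.le) hG
        have l3P : (L - μ) * lam * P ≤ (L - μ) * (ε * A - aμ / 2) * P :=
          mul_le_mul_of_nonneg_right (mul_le_mul_of_nonneg_left hl3 hd.le) hP
        rw [hK] at c1; rw [hK2] at c2
        rw [hS₁, hS₂] at hcross
        linarith [hcross, c1, c2, l1G, l3P]
      · rcases le_or_gt 0 K with hK0 | hK0
        · have c1 : K * (μ * G) ≤ K * Qg := mul_le_mul_of_nonneg_left h1 hK0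
          have c2 : K2 * (L * P) ≤ K2 * Qp := by
            have hK2' : K2 ≤ 0 := by rw [hK2]; linarith
            nlinarith [mul_le_mul_of_nonpos_left h4 hK2']
          have l1G : (L - μ) * lam * G ≤ (L - μ) * (μ * γ * A - aμ / 2) * G :=
            mul_le_mul_of_nonneg_right (mul_le_mul_of_nonneg_left hl1 hd.le) hG
          have l4P : (L - μ) * lam * P ≤ (L - μ) * (ε * A - aL / 2) * P :=
            mul_le_mul_of_nonneg_right (mul_le_mul_of_nonneg_left hl4 hd.le) hP
          rw [hK] at c1; rw [hK2] at c2
          rw [hS₁, hS₂] at hcross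
          linarith [hcross, c1, c2, l1G, l4P]
        · have c1 : K * (L * G) ≤ K * Qg := mul_le_mul_of_nonpos_left h2 hK0.le
          have c2 : K2 * (L * P) ≤ K2 * Qp := by
            have hγA : 0 ≤ (L - μ) * (γ * A) := mul_nonneg hd.le (mul_nonneg hγ hA.le)
            have hK2' : K2 ≤ 0 := by rw [hK2]; rw [hK] at hK0; linarith
            exact mul_le_mul_of_nonpos_left h4 hK2'
          have l2G : (L - μ) * lam * G ≤ (L - μ) * (L * γ * A - aL / 2) * G :=
            mul_le_mul_of_nonneg_right (mul_le_mul_of_nonneg_left hl2 hd.le) hG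
          have l4P : (L - μ) * lam * P ≤ (L - μ) * (ε * A - aL / 2) * P :=
            mul_le_mul_of_nonneg_right (mul_le_mul_of_nonneg_left hl4 hd.le) hP
          rw [hK] at c1; rw [hK2] at c2
          rw [hS₁, hS₂] at hcross
          linarith [hcross, c1, c2, l2G, l4P]
    have := (mul_nonneg_iff_of_pos_left hd).mp main
    linarith

lemma hasDerivWithinAt_dot_PDD {d : ℕ} {u v : ℝ → Fin d → ℝ} {u' v' : Fin d → ℝ}
    {s : Set ℝ} {t : ℝ}
    (hu : HasDerivWithinAt u u' s t) (hv : HasDerivWithinAt v v' s t) :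
    HasDerivWithinAt (fun t => u t ⬝ᵥ v t) (u' ⬝ᵥ v t + u t ⬝ᵥ v') s t := by
  have comp : ∀ i : Fin d, HasDerivWithinAt (fun t => u t i * v t i)
      (u' i * v t i + u t i * v' i) s t := by
    intro i
    have hui : HasDerivWithinAt (fun t => u t i) (u' i) s t :=
      ((ContinuousLinearMap.proj (R := ℝ) (φ := fun _ : Fin d => ℝ) i).hasFDerivAt).comp_hasDerivWithinAt t hu
    have hvi : HasDerivWithinAt (fun t => v t i) (v' i) s t :=
      ((ContinuousLinearMap.proj (R := ℝ) (φ := fun _ : Fin d => ℝ) i).hasFDerivAt).comp_hasDerivWithinAt t hv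
    exact hui.mul hvi
  have := HasDerivWithinAt.fun_sum (fun i (_ : i ∈ Finset.univ) => comp i)
  simp only [dotProduct]
  refine this.congr_deriv ?_
  rw [Finset.sum_add_distrib]

lemma grad_differentiable_PDD {d : ℕ} (f : (Fin d → ℝ) → ℝ) (gradf : (Fin d → ℝ) → Fin d → ℝ)
    (hf : ContDiff ℝ 3 f)
    (hgrad : ∀ x y, fderiv ℝ f x y = gradf x ⬝ᵥ y) :
    Differentiable ℝ gradf := by
  have hf1 : ContDiff ℝ 2 (fderiv ℝ f) := hf.fderiv_right (by norm_num)
  have hdiff2 : Differentiable ℝ (fderiv ℝ f) := hf1.differentiable (by norm_num)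
  have hgradf_eq : gradf = fun x i => fderiv ℝ f x (Pi.single i 1) := by
    funext x i
    rw [hgrad]
    simp [dotProduct_single]
  rw [hgradf_eq]
  apply differentiable_pi.mpr
  intro i
  exact (ContinuousLinearMap.apply ℝ ℝ (Pi.single i 1)).differentiable.comp hdiff2

lemma hess_symm_PDD {d : ℕ} (f : (Fin d → ℝ) → ℝ) (gradf : (Fin d → ℝ) → Fin d → ℝ)
    (hessf : (Fin d → ℝ) → Matrix (Fin d) (Fin d) ℝ)
    (hf : ContDiff ℝ 3 f)
    (hgrad : ∀ x y, fderiv ℝ f x y = gradf x ⬝ᵥ y)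
    (hhess : ∀ x y, fderiv ℝ gradf x y = hessf x *ᵥ y)
    (z : Fin d → ℝ) : (hessf z).IsSymm := by
  have hdiff1 : Differentiable ℝ f := hf.differentiable (by norm_num)
  have hf1 : ContDiff ℝ 2 (fderiv ℝ f) := hf.fderiv_right (by norm_num)
  have hdiff2 : Differentiable ℝ (fderiv ℝ f) := hf1.differentiable (by norm_num)
  have hgradf_eq : gradf = fun x i => fderiv ℝ f x (Pi.single i 1) := by
    funext x i
    rw [hgrad]
    simp [dotProduct_single]
  set f'' := fderiv ℝ (fderiv ℝ f) z with hf''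
  have hsec : ∀ v w, f'' v w = f'' w v :=
    second_derivative_symmetric (fun y => (hdiff1 y).hasFDerivAt) ((hdiff2 z).hasFDerivAt)
  have hFg : HasFDerivAt gradf
      (ContinuousLinearMap.pi fun i => (ContinuousLinearMap.apply ℝ ℝ (Pi.single i 1)).comp f'') z := by
    rw [hgradf_eq]
    apply hasFDerivAt_pi.mpr
    intro i
    exact (ContinuousLinearMap.apply ℝ ℝ (Pi.single i 1)).hasFDerivAt.comp z ((hdiff2 z).hasFDerivAt)
  have hentry : ∀ w i, (hessf z *ᵥ w) i = f'' w (Pi.single i 1) := by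
    intro w i
    rw [← hhess, hFg.fderiv]
    rfl
  show (hessf z)ᵀ = hessf z
  ext i j
  rw [Matrix.transpose_apply]
  have h1 : hessf z i j = f'' (Pi.single j 1) (Pi.single i 1) := by
    have := hentry (Pi.single j 1) i
    simpa [Matrix.mulVec_single] using this
  have h2 : hessf z j i = f'' (Pi.single i 1) (Pi.single j 1) := by
    have := hentry (Pi.single i 1) j
    simpa [Matrix.mulVec_single] using this
  rw [h1, h2, hsec]


set_option maxHeartbeats 1000000 in
/-- Continuous-time Lyapunov decay for the PDD ODE. With `C(x) = B(x)∇²f(x)`,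
`C₀(x) = ∇²f(x)B(x)∇²f(x)` satisfying `μ·I ⪯ C₀(x) ⪯ L·I` (0 < μ ≤ L), `A > 0`, `ε ≥ 0`,
`γ ≥ 0`, a differentiable solution on `[0,∞)` of
`ṗ = A∇f(x) − εA p`, `ẋ = −C(x)(p + γ(A∇f(x) − εA p))` satisfies
`I(x(t),p(t)) ≤ I(x(0),p(0)) exp(−2λt)` where `I(x,p) = ½(‖p‖² + ‖∇f(x)‖²)` and
`λ = min{μγA − ½|A − μ(1−εγA)|, LγA − ½|A − L(1−εγA)|, εA − ½|A − μ(1−εγA)|, εA − ½|A − L(1−εγA)|}`. -/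
theorem stmt_9 (d : ℕ) (f : (Fin d → ℝ) → ℝ)
    (gradf : (Fin d → ℝ) → Fin d → ℝ)
    (hessf B : (Fin d → ℝ) → Matrix (Fin d) (Fin d) ℝ)
    (hf : ContDiff ℝ 3 f)
    (hgrad : ∀ x y, fderiv ℝ f x y = gradf x ⬝ᵥ y)
    (hhess : ∀ x y, fderiv ℝ gradf x y = hessf x *ᵥ y)
    (hBsymm : ∀ x, (B x).IsSymm)
    (μ L : ℝ) (hμ : 0 < μ) (hμL : μ ≤ L)
    (hlow : ∀ x v, μ * (v ⬝ᵥ v) ≤ v ⬝ᵥ ((hessf x * B x * hessf x) *ᵥ v))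
    (hup : ∀ x v, v ⬝ᵥ ((hessf x * B x * hessf x) *ᵥ v) ≤ L * (v ⬝ᵥ v))
    (A ε γ : ℝ) (hA : 0 < A) (hε : 0 ≤ ε) (hγ : 0 ≤ γ)
    (x p : ℝ → Fin d → ℝ)
    (hx : ∀ t ∈ Set.Ici (0 : ℝ), HasDerivWithinAt x
      (-((B (x t) * hessf (x t)) *ᵥ (p t + γ • (A • gradf (x t) - (ε * A) • p t))))
      (Set.Ici 0) t)
    (hp : ∀ t ∈ Set.Ici (0 : ℝ), HasDerivWithinAt p
      (A • gradf (x t) - (ε * A) • p t) (Set.Ici 0) t)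
    (lam : ℝ)
    (hlam : lam = min
      (min (μ * γ * A - |A - μ * (1 - ε * γ * A)| / 2)
        (L * γ * A - |A - L * (1 - ε * γ * A)| / 2))
      (min (ε * A - |A - μ * (1 - ε * γ * A)| / 2)
        (ε * A - |A - L * (1 - ε * γ * A)| / 2))) :
    ∀ t ∈ Set.Ici (0 : ℝ),
      (p t ⬝ᵥ p t + gradf (x t) ⬝ᵥ gradf (x t)) / 2 ≤
        ((p 0 ⬝ᵥ p 0 + gradf (x 0) ⬝ᵥ gradf (x 0)) / 2) * Real.exp (-2 * lam * t) := by
  -- notation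
  have hgdiff : Differentiable ℝ gradf := grad_differentiable_PDD f gradf hf hgrad
  have hHsym : ∀ z, (hessf z).IsSymm := hess_symm_PDD f gradf hessf hf hgrad hhess
  have hCsym : ∀ z (v w : Fin d → ℝ),
      v ⬝ᵥ ((hessf z * B z * hessf z) *ᵥ w) = w ⬝ᵥ ((hessf z * B z * hessf z) *ᵥ v) := by
    intro z v w
    have hT : (hessf z * B z * hessf z)ᵀ = hessf z * B z * hessf z := by
      rw [Matrix.transpose_mul, Matrix.transpose_mul, (hBsymm z).eq, (hHsym z).eq]
      rw [Matrix.mul_assoc]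
    rw [Matrix.dotProduct_mulVec, ← Matrix.mulVec_transpose, hT, dotProduct_comm]
  -- derivative notation
  set P' : ℝ → Fin d → ℝ := fun t => A • gradf (x t) - (ε * A) • p t with hP'
  set X' : ℝ → Fin d → ℝ := fun t =>
    -((B (x t) * hessf (x t)) *ᵥ (p t + γ • (A • gradf (x t) - (ε * A) • p t))) with hX'
  set φ : ℝ → ℝ := fun s => (p s ⬝ᵥ p s + gradf (x s) ⬝ᵥ gradf (x s)) / 2 with hφdef
  set D : ℝ → ℝ := fun t => p t ⬝ᵥ P' t + gradf (x t) ⬝ᵥ (hessf (x t) *ᵥ X' t) with hD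
  have hg : ∀ t ∈ Set.Ici (0:ℝ), HasDerivWithinAt (fun s => gradf (x s))
      (hessf (x t) *ᵥ X' t) (Set.Ici 0) t := by
    intro t ht
    have h := ((hgdiff (x t)).hasFDerivAt).comp_hasDerivWithinAt t (hx t ht)
    have hval : fderiv ℝ gradf (x t) (X' t) = hessf (x t) *ᵥ X' t := hhess _ _
    rw [hval] at h
    exact h
  have hφ : ∀ t ∈ Set.Ici (0:ℝ), HasDerivWithinAt φ (D t) (Set.Ici 0) t := by
    intro t ht
    have h1 := hasDerivWithinAt_dot_PDD (hp t ht) (hp t ht)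
    have h2 := hasDerivWithinAt_dot_PDD (hg t ht) (hg t ht)
    have h3 := (h1.add h2).div_const 2
    refine h3.congr_deriv ?_
    rw [hD]
    simp only []
    rw [dotProduct_comm (P' t) (p t), dotProduct_comm (hessf (x t) *ᵥ X' t) (gradf (x t))]
    ring
  -- the key differential inequality
  have hkey : ∀ t ∈ Set.Ici (0:ℝ), D t ≤ -2 * lam * φ t := by
    intro t ht
    set g := gradf (x t) with hgdef
    set q := p t with hq
    set M := hessf (x t) * B (x t) * hessf (x t) with hM
    have hMw : hessf (x t) *ᵥ X' t =
        -(M *ᵥ (q + γ • (A • g - (ε * A) • q))) := by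
      rw [hX', hM]
      simp only [Matrix.mulVec_neg, Matrix.mulVec_mulVec, Matrix.mul_assoc]
      rfl
    set G := g ⬝ᵥ g with hGd
    set P := q ⬝ᵥ q with hPd
    set GP := g ⬝ᵥ q with hGPd
    set Qg := g ⬝ᵥ (M *ᵥ g) with hQgd
    set Qp := q ⬝ᵥ (M *ᵥ q) with hQpd
    set X := g ⬝ᵥ (M *ᵥ q) with hXd
    have hDt : D t = A * GP - ε * A * P - γ * A * Qg - (1 - ε * γ * A) * X := by
      rw [hD]
      simp only []
      rw [hMw, hP']
      simp only [Matrix.mulVec_add, Matrix.mulVec_smul, Matrix.mulVec_sub,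
        dotProduct_add, dotProduct_sub, dotProduct_smul,
        dotProduct_neg, smul_eq_mul]
      rw [← hgdef, ← hq, dotProduct_comm q g]
      ring
    have hcomm : q ⬝ᵥ (M *ᵥ g) = g ⬝ᵥ (M *ᵥ q) := by
      rw [hM]; exact hCsym (x t) q g
    have hG : 0 ≤ G := by
      rw [hGd]; exact Finset.sum_nonneg fun i _ => mul_self_nonneg (g i)
    have hP : 0 ≤ P := by
      rw [hPd]; exact Finset.sum_nonneg fun i _ => mul_self_nonneg (q i)
    have e1 : 0 ≤ (g - q) ⬝ᵥ (g - q) :=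
      Finset.sum_nonneg fun i _ => mul_self_nonneg ((g - q) i)
    have e2 : 0 ≤ (g + q) ⬝ᵥ (g + q) :=
      Finset.sum_nonneg fun i _ => mul_self_nonneg ((g + q) i)
    simp only [sub_dotProduct, dotProduct_sub, add_dotProduct,
      dotProduct_add] at e1 e2
    rw [dotProduct_comm q g] at e1 e2
    have h0 : |GP| ≤ (G + P) / 2 := by
      rw [abs_le]; constructor
      · rw [hGPd, hGd, hPd]; linarith
      · rw [hGPd, hGd, hPd]; linarith
    have h1 : μ * G ≤ Qg := by
      have := hlow (x t) g; rw [← hM] at this; rw [hGd, hQgd]; exact this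
    have h2 : Qg ≤ L * G := by
      have := hup (x t) g; rw [← hM] at this; rw [hGd, hQgd]; exact this
    have h3 : μ * P ≤ Qp := by
      have := hlow (x t) q; rw [← hM] at this; rw [hPd, hQpd]; exact this
    have h4 : Qp ≤ L * P := by
      have := hup (x t) q; rw [← hM] at this; rw [hPd, hQpd]; exact this
    have l1 := hlow (x t) (g + q)
    have l2 := hlow (x t) (g - q)
    have u1 := hup (x t) (g + q)
    have u2 := hup (x t) (g - q)
    rw [← hM] at l1 l2 u1 u2
    simp only [Matrix.mulVec_add, Matrix.mulVec_sub, dotProduct_add,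
      dotProduct_sub, add_dotProduct, sub_dotProduct] at l1 l2 u1 u2
    rw [dotProduct_comm q g] at l1 l2 u1 u2
    rw [hcomm] at l1 l2 u1 u2
    rw [← hGd, ← hPd, ← hGPd, ← hQgd, ← hQpd, ← hXd] at l1 l2 u1 u2
    have h5 : |X - μ * GP| ≤ (Qg - μ * G + Qp - μ * P) / 2 := by
      rw [abs_le]; constructor <;> linarith
    have h6 : |L * GP - X| ≤ (L * G - Qg + L * P - Qp) / 2 := by
      rw [abs_le]; constructor <;> linarith
    have hks := key_scalar_PDD μ L A ε γ lam G P GP Qg Qp X hμ hμL hA hε hγ hG hP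
      h0 h1 h2 h3 h4 h5 h6 hlam
    have hφt : φ t = (P + G) / 2 := by
      rw [hφdef]
    rw [hDt, hφt]
    linarith [hks]
  -- Gronwall via antitonicity of φ·exp(2λ·)
  set ψ : ℝ → ℝ := fun s => φ s * Real.exp (2 * lam * s) with hψdef
  have hψd : ∀ t ∈ Set.Ici (0:ℝ), HasDerivWithinAt ψ
      (D t * Real.exp (2 * lam * t) + φ t * (Real.exp (2 * lam * t) * (2 * lam)))
      (Set.Ici 0) t := by
    intro t ht
    have h1 : HasDerivAt (fun s : ℝ => 2 * lam * s) (2 * lam) t := by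
      simpa using (hasDerivAt_id t).const_mul (2 * lam)
    have he : HasDerivAt (fun s => Real.exp (2 * lam * s))
        (Real.exp (2 * lam * t) * (2 * lam)) t := h1.exp
    exact (hφ t ht).mul he.hasDerivWithinAt
  have hanti : AntitoneOn ψ (Set.Ici 0) := by
    apply antitoneOn_of_deriv_nonpos (convex_Ici 0)
    · intro t ht
      exact (hψd t ht).continuousWithinAt
    · intro t ht
      rw [interior_Ici] at ht
      exact ((hψd t (Set.Ioi_subset_Ici_self ht)).hasDerivAt (Ici_mem_nhds ht)).differentiableAt.differentiableWithinAt
    · intro t ht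
      rw [interior_Ici] at ht
      have hda := (hψd t (Set.Ioi_subset_Ici_self ht)).hasDerivAt (Ici_mem_nhds ht)
      rw [hda.deriv]
      have hk := hkey t (Set.Ioi_subset_Ici_self ht)
      have hep := (Real.exp_pos (2 * lam * t)).le
      have hsum : D t + 2 * lam * φ t ≤ 0 := by linarith
      have := mul_le_mul_of_nonneg_right hsum hep
      nlinarith [this]
  intro t ht
  have hmono := hanti (Set.self_mem_Ici) ht ht
  rw [hψdef] at hmono
  simp only [mul_zero, Real.exp_zero, mul_one] at hmono
  have key2 : φ t * Real.exp (2 * lam * t) ≤ φ 0 := hmono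
  have hrw : φ t = φ t * Real.exp (2 * lam * t) * Real.exp (-(2 * lam * t)) := by
    rw [mul_assoc, ← Real.exp_add]; simp
  have hfin : φ t ≤ φ 0 * Real.exp (-(2 * lam * t)) := by
    rw [hrw]
    exact mul_le_mul_of_nonneg_right key2 (Real.exp_pos _).le
  have hneg : -(2 * lam * t) = -2 * lam * t := by ring
  rw [hneg] at hfin
  exact hfin
end

section
/- Let f : ℝ^d → ℝ be three times continuously differentiable, let B : ℝ^d → ℝ^{d×d} take symmetric values, and suppose there exist 0 < μ ≤ L with μ·I ⪯ ∇²f(x)B(x)∇²f(x) ⪯ L·I for all x. Set γ = 1/μ, ε = 1, and A = (μ+L)/(2 + (μ+L)εγ). Let (x(t), p(t)) be a differentiable solution on [0,∞) of the PDD ODE system ṗ = A∇f(x) − εA p, ẋ = −C(x)(p + γ(A∇f(x) − εA p)), where C(x) = B(x)∇²f(x). Then for all t ≥ 0: I(x(t), p(t)) ≤ I(x(0), p(0)) · exp(−μ t), where I(x,p) = ½(‖p‖² + ‖∇f(x)‖²). -/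
/-!
Write `g = ∇f(x)` and `S = ∇²f B ∇²f`, which is symmetric because the Hessian is. Along the
flow `ġ = ∇²f ẋ = -S (p + γ ṗ)`, so `d/dt I = ⟨p, ṗ⟩ - ⟨g, S (p + γ ṗ)⟩`. The bound
`⟨g, S g⟩ ≥ μ ‖g‖²` and the polarization estimate `4 ⟨g, S p⟩ ≥ μ ‖g + p‖² - L ‖g - p‖²` turn this
into a quadratic form in `(p, g)`; for the tuned `A = μ(μ+L)/(3μ+L)` its cross terms cancel and
what remains is exactly `-μ I`. Grönwall's inequality then gives the exponential decay.
-/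

open Matrix Set

section DotProduct

variable {ι : Type*} [Fintype ι]

theorem HasDerivWithinAt.dotProduct {u v : ℝ → ι → ℝ} {u' v' : ι → ℝ} {s : Set ℝ} {t : ℝ}
    (hu : HasDerivWithinAt u u' s t) (hv : HasDerivWithinAt v v' s t) :
    HasDerivWithinAt (fun τ => u τ ⬝ᵥ v τ) (u' ⬝ᵥ v t + u t ⬝ᵥ v') s t := by
  have hcoord (i : ι) :
      HasDerivWithinAt (fun τ => u τ i * v τ i) (u' i * v t i + u t i * v' i) s t :=
    (hasDerivWithinAt_pi.1 hu i).mul (hasDerivWithinAt_pi.1 hv i)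
  have hsum := HasDerivWithinAt.fun_sum (u := Finset.univ) fun i _ => hcoord i
  rw [Finset.sum_add_distrib] at hsum
  exact hsum

theorem HasDerivWithinAt.half_dotProduct_self_add {u v : ℝ → ι → ℝ} {u' v' : ι → ℝ}
    {s : Set ℝ} {t : ℝ} (hu : HasDerivWithinAt u u' s t) (hv : HasDerivWithinAt v v' s t) :
    HasDerivWithinAt (fun τ => (u τ ⬝ᵥ u τ + v τ ⬝ᵥ v τ) / 2) (u t ⬝ᵥ u' + v t ⬝ᵥ v') s t := by
  refine (((hu.dotProduct hu).add (hv.dotProduct hv)).div_const 2).congr_deriv ?_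
  rw [dotProduct_comm u', dotProduct_comm v']
  ring

end DotProduct

namespace Matrix.IsSymm

variable {ι α : Type*} [Fintype ι]

theorem dotProduct_mulVec_comm [CommSemiring α] {S : Matrix ι ι α} (hS : S.IsSymm)
    (u v : ι → α) : u ⬝ᵥ S *ᵥ v = v ⬝ᵥ S *ᵥ u := by
  rw [dotProduct_mulVec, ← mulVec_transpose, hS.eq, dotProduct_comm]

theorem mul_mul_self [CommSemiring α] {H B : Matrix ι ι α} (hH : H.IsSymm) (hB : B.IsSymm) :
    (H * B * H).IsSymm := by
  rw [IsSymm, transpose_mul, transpose_mul, hH.eq, hB.eq, Matrix.mul_assoc]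

theorem sub_le_four_mul_dotProduct_mulVec {S : Matrix ι ι ℝ} (hS : S.IsSymm) {μ L : ℝ}
    (hlow : ∀ v, μ * (v ⬝ᵥ v) ≤ v ⬝ᵥ S *ᵥ v) (hup : ∀ v, v ⬝ᵥ S *ᵥ v ≤ L * (v ⬝ᵥ v))
    (u v : ι → ℝ) :
    μ * ((u + v) ⬝ᵥ (u + v)) - L * ((u - v) ⬝ᵥ (u - v)) ≤ 4 * (u ⬝ᵥ S *ᵥ v) := by
  have polarization :
      (u + v) ⬝ᵥ S *ᵥ (u + v) - (u - v) ⬝ᵥ S *ᵥ (u - v) = 4 * (u ⬝ᵥ S *ᵥ v) := by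
    simp only [mulVec_add, mulVec_sub, dotProduct_add, dotProduct_sub, add_dotProduct,
      sub_dotProduct, hS.dotProduct_mulVec_comm v u]
    ring
  linarith [hlow (u + v), hup (u - v)]

end Matrix.IsSymm

theorem pdd_scalar_rate_le {μ L A P G X Y Z : ℝ} (hμ : 0 < μ) (hμL : μ ≤ L)
    (hA : A * (3 * μ + L) = μ * (μ + L)) (hZ : μ * G ≤ Z)
    (hY : μ * (G + 2 * X + P) - L * (G - 2 * X + P) ≤ 4 * Y) :
    A * X - A * P - (Y + μ⁻¹ * (A * Z - A * Y)) ≤ -μ * ((P + G) / 2) := by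
  have hD : 0 < 3 * μ + L := by linarith
  rw [← mul_le_mul_iff_of_pos_right (mul_pos hμ hD)]
  have expand : (A * X - A * P - (Y + μ⁻¹ * (A * Z - A * Y))) * (μ * (3 * μ + L)) =
      μ * (A * (3 * μ + L)) * X - μ * (A * (3 * μ + L)) * P - μ * (3 * μ + L) * Y
        - A * (3 * μ + L) * Z + A * (3 * μ + L) * Y := by
    field_simp
    ring
  rw [expand, hA]
  -- the `X`-terms cancel: this is what `A` is tuned for
  nlinarith [mul_le_mul_of_nonneg_left hZ (by nlinarith : 0 ≤ μ * (μ + L)),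
    mul_le_mul_of_nonneg_left hY (by positivity : 0 ≤ μ * μ / 2)]

theorem pdd_lyapunov_deriv_le {ι : Type*} [Fintype ι] {S : Matrix ι ι ℝ} (hS : S.IsSymm)
    {μ L : ℝ} (hμ : 0 < μ) (hμL : μ ≤ L)
    (hlow : ∀ v, μ * (v ⬝ᵥ v) ≤ v ⬝ᵥ S *ᵥ v) (hup : ∀ v, v ⬝ᵥ S *ᵥ v ≤ L * (v ⬝ᵥ v))
    {γ ε A : ℝ} (hγ : γ = 1 / μ) (hε : ε = 1) (hA : A = (μ + L) / (2 + (μ + L) * ε * γ))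
    (g p : ι → ℝ) :
    p ⬝ᵥ (A • g - (ε * A) • p) + g ⬝ᵥ -(S *ᵥ (p + γ • (A • g - (ε * A) • p))) ≤
      -μ * ((p ⬝ᵥ p + g ⬝ᵥ g) / 2) := by
  subst hγ hε hA
  have hD : 3 * μ + L ≠ 0 := by linarith
  have hden : 2 + (μ + L) * 1 * (1 / μ) = (3 * μ + L) / μ := by
    field_simp
    ring
  have hA : (μ + L) / (2 + (μ + L) * 1 * (1 / μ)) * (3 * μ + L) = μ * (μ + L) := by
    rw [hden, div_div_eq_mul_div, div_mul_cancel₀ _ hD]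
    ring
  have hY := hS.sub_le_four_mul_dotProduct_mulVec hlow hup g p
  have hG : (g + p) ⬝ᵥ (g + p) = g ⬝ᵥ g + 2 * (p ⬝ᵥ g) + p ⬝ᵥ p := by
    simp only [dotProduct_add, add_dotProduct, dotProduct_comm g p]
    ring
  have hG' : (g - p) ⬝ᵥ (g - p) = g ⬝ᵥ g - 2 * (p ⬝ᵥ g) + p ⬝ᵥ p := by
    simp only [dotProduct_sub, sub_dotProduct, dotProduct_comm g p]
    ring
  rw [hG, hG'] at hY
  have key := pdd_scalar_rate_le hμ hμL hA (hlow g) hY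
  simp only [mulVec_add, mulVec_sub, mulVec_smul, dotProduct_add, dotProduct_sub,
    dotProduct_smul, dotProduct_neg, smul_eq_mul, one_div] at key ⊢
  linarith

section Gradient

variable {ι : Type*} [Fintype ι] [DecidableEq ι] {f : (ι → ℝ) → ℝ} {gradf : (ι → ℝ) → ι → ℝ}

theorem differentiable_of_fderiv_eq_dotProduct (hf : ContDiff ℝ 2 f)
    (hgrad : ∀ x y, fderiv ℝ f x y = gradf x ⬝ᵥ y) : Differentiable ℝ gradf := by
  have hgradf : gradf = fun x i => fderiv ℝ f x (Pi.single i 1) := by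
    funext x i
    rw [hgrad, dotProduct_single_one]
  rw [hgradf]
  exact differentiable_pi.2 fun i =>
    ((hf.fderiv_right le_rfl).differentiable one_ne_zero).clm_apply (differentiable_const _)

theorem isSymm_of_fderiv_eq_mulVec {hessf : (ι → ℝ) → Matrix ι ι ℝ} (hf : ContDiff ℝ 2 f)
    (hgrad : ∀ x y, fderiv ℝ f x y = gradf x ⬝ᵥ y)
    (hhess : ∀ x y, fderiv ℝ gradf x y = hessf x *ᵥ y) (x : ι → ℝ) : (hessf x).IsSymm := by
  have hsnd := hf.contDiffAt.isSymmSndFDerivAt (x := x) (by simp)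
  have hfd2 : HasFDerivAt (fderiv ℝ f) (fderiv ℝ (fderiv ℝ f) x) x :=
    ((hf.fderiv_right le_rfl).differentiable one_ne_zero x).hasFDerivAt
  have hdg := (differentiable_of_fderiv_eq_dotProduct hf hgrad x).hasFDerivAt
  have hsnd_apply (v : ι → ℝ) (j : ι) :
      fderiv ℝ (fderiv ℝ f) x v (Pi.single j 1) = (hessf x *ᵥ v) j := by
    have hcoord : (fun y => fderiv ℝ f y (Pi.single j 1)) = fun y => gradf y j := by
      funext y
      rw [hgrad, dotProduct_single_one]
    have h₁ : HasFDerivAt (fun y => gradf y j)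
        ((ContinuousLinearMap.apply ℝ ℝ (Pi.single j 1)).comp (fderiv ℝ (fderiv ℝ f) x)) x := by
      rw [← hcoord]
      exact (ContinuousLinearMap.apply ℝ ℝ _).hasFDerivAt.comp x hfd2
    have h₂ : HasFDerivAt (fun y => gradf y j)
        ((ContinuousLinearMap.proj j).comp (fderiv ℝ gradf x)) x :=
      (ContinuousLinearMap.proj (R := ℝ) (φ := fun _ : ι => ℝ) j).hasFDerivAt.comp x hdg
    rw [← hhess]
    exact congrArg (· v) (h₁.unique h₂)
  refine IsSymm.ext fun i j => ?_
  have := hsnd (Pi.single i 1) (Pi.single j 1)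
  rwa [hsnd_apply, hsnd_apply, mulVec_single_one, mulVec_single_one] at this

end Gradient

theorem le_mul_exp_of_hasDerivWithinAt_le_mul {f f' : ℝ → ℝ} {K a : ℝ}
    (hf : ∀ t ∈ Ici a, HasDerivWithinAt f (f' t) (Ici a) t)
    (bound : ∀ t ∈ Ici a, f' t ≤ K * f t) (t : ℝ) (ht : t ∈ Ici a) :
    f t ≤ f a * Real.exp (K * (t - a)) := by
  have := le_gronwallBound_of_liminf_deriv_right_le (f := f) (δ := f a) (K := K) (ε := 0) (b := t)
    (fun s hs => (hf s hs.1).continuousWithinAt.mono Icc_subset_Ici_self)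
    (fun s hs _ hr => ((hf s hs.1).mono (Ici_subset_Ici.2 hs.1)).liminf_right_slope_le hr)
    le_rfl (fun s hs => by simpa using bound s hs.1) t ⟨ht, le_rfl⟩
  rwa [gronwallBound_ε0] at this

/-- Continuous-time Lyapunov decay with the tuned parameters `γ = 1/μ`, `ε = 1`,
`A = (μ+L)/(2 + (μ+L)εγ)`: for `μ·I ⪯ ∇²f(x)B(x)∇²f(x) ⪯ L·I` (0 < μ ≤ L) and a differentiable
solution on `[0,∞)` of the PDD ODE, `I(x(t),p(t)) ≤ I(x(0),p(0)) exp(−μt)` where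
`I(x,p) = ½(‖p‖² + ‖∇f(x)‖²)`. -/
theorem stmt_10 (d : ℕ) (f : (Fin d → ℝ) → ℝ)
    (gradf : (Fin d → ℝ) → Fin d → ℝ)
    (hessf B : (Fin d → ℝ) → Matrix (Fin d) (Fin d) ℝ)
    (hf : ContDiff ℝ 3 f)
    (hgrad : ∀ x y, fderiv ℝ f x y = gradf x ⬝ᵥ y)
    (hhess : ∀ x y, fderiv ℝ gradf x y = hessf x *ᵥ y)
    (hBsymm : ∀ x, (B x).IsSymm)
    (μ L : ℝ) (hμ : 0 < μ) (hμL : μ ≤ L)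
    (hlow : ∀ x v, μ * (v ⬝ᵥ v) ≤ v ⬝ᵥ ((hessf x * B x * hessf x) *ᵥ v))
    (hup : ∀ x v, v ⬝ᵥ ((hessf x * B x * hessf x) *ᵥ v) ≤ L * (v ⬝ᵥ v))
    (γ ε A : ℝ) (hγ : γ = 1 / μ) (hε : ε = 1)
    (hA : A = (μ + L) / (2 + (μ + L) * ε * γ))
    (x p : ℝ → Fin d → ℝ)
    (hx : ∀ t ∈ Set.Ici (0 : ℝ), HasDerivWithinAt x
      (-((B (x t) * hessf (x t)) *ᵥ (p t + γ • (A • gradf (x t) - (ε * A) • p t))))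
      (Set.Ici 0) t)
    (hp : ∀ t ∈ Set.Ici (0 : ℝ), HasDerivWithinAt p
      (A • gradf (x t) - (ε * A) • p t) (Set.Ici 0) t) :
    ∀ t ∈ Set.Ici (0 : ℝ),
      (p t ⬝ᵥ p t + gradf (x t) ⬝ᵥ gradf (x t)) / 2 ≤
        ((p 0 ⬝ᵥ p 0 + gradf (x 0) ⬝ᵥ gradf (x 0)) / 2) * Real.exp (-μ * t) := by
  have hf2 : ContDiff ℝ 2 f := hf.of_le (by norm_num)
  have hgradf := differentiable_of_fderiv_eq_dotProduct hf2 hgrad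
  have hS (y : Fin d → ℝ) : (hessf y * B y * hessf y).IsSymm :=
    (isSymm_of_fderiv_eq_mulVec hf2 hgrad hhess y).mul_mul_self (hBsymm y)
  have hg (t : ℝ) (ht : t ∈ Ici 0) : HasDerivWithinAt (fun τ => gradf (x τ))
      (-((hessf (x t) * B (x t) * hessf (x t)) *ᵥ
        (p t + γ • (A • gradf (x t) - (ε * A) • p t)))) (Ici 0) t := by
    have := (hgradf (x t)).hasFDerivAt.comp_hasDerivWithinAt t (hx t ht)
    rwa [hhess, mulVec_neg, mulVec_mulVec, ← Matrix.mul_assoc] at this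
  intro t ht
  simpa using le_mul_exp_of_hasDerivWithinAt_le_mul
    (fun s hs => (hp s hs).half_dotProduct_self_add (hg s hs))
    (fun s _ => pdd_lyapunov_deriv_le (hS (x s)) hμ hμL (hlow (x s)) (hup (x s)) hγ hε hA _ _)
    t ht
end

section
/- Let f : ℝ^d → ℝ be four times continuously differentiable, let B : ℝ^d → ℝ^{d×d}, and let τ, σ, A, ε > 0 and γ = σω with ω > 0. Define N(x) = (1/(1+σεA)) · [[(σA+γA)·B(x)∇²f(x), (1−εγA)·B(x)∇²f(x)], [−(σ/τ)A·I, (σ/τ)εA·I]] and H(x) = ½(D(x)N(x) + (D(x)N(x))ᵀ) with D(x) = blockdiag(∇²f(x), I). Let (xⁿ, pⁿ) be the iterates of (x^{n+1}; p^{n+1}) = (xⁿ; pⁿ) − τ N(xⁿ)(∇f(xⁿ); pⁿ). Suppose there are constants λ, M₁ > 0 such that H(x) ⪰ λ·I for all x, and N(x)ᵀ ∇²I(x̃, p̃) N(x) ⪯ M₁·I for all x, x̃, p̃, where ∇²I(x,p) = blockdiag(G(x), I) with G(x) the Hessian of the map x ↦ ½‖∇f(x)‖². If τ = aλ/M₁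 for some a ∈ (0,2), then for all n: I(xⁿ, pⁿ) ≤ I(x⁰, p⁰) · (1 + (a² − 2a)λ²/(2M₁))ⁿ, where I(x,p) = ½(‖∇f(x)‖² + ‖p‖²). -/
open Matrix

/-- The matrix `N(x)` of the linearized PDD iteration, built from `C(x) = B(x)∇²f(x)`:
`N = (1/(1+σεA)) [[(σA+γA)C(x), (1−εγA)C(x)], [−(σ/τ)A·I, (σ/τ)εA·I]]`. -/
noncomputable def pddN {d : ℕ} (τ σ A ε γ : ℝ) (Cx : Matrix (Fin d) (Fin d) ℝ) :
    Matrix (Fin d ⊕ Fin d) (Fin d ⊕ Fin d) ℝ :=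
  (1 / (1 + σ * ε * A)) •
    Matrix.fromBlocks ((σ * A + γ * A) • Cx) ((1 - ε * γ * A) • Cx)
      ((-(σ / τ * A)) • (1 : Matrix (Fin d) (Fin d) ℝ)) ((σ / τ * ε * A) • 1)

/-- `D(x) = blockdiag(∇²f(x), I)`. -/
noncomputable def pddD {d : ℕ} (Hx : Matrix (Fin d) (Fin d) ℝ) :
    Matrix (Fin d ⊕ Fin d) (Fin d ⊕ Fin d) ℝ :=
  Matrix.fromBlocks Hx 0 0 1

/-- `H(x) = ½(D(x)N(x) + (D(x)N(x))ᵀ)`. -/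
noncomputable def pddH {d : ℕ} (Hx : Matrix (Fin d) (Fin d) ℝ)
    (Nx : Matrix (Fin d ⊕ Fin d) (Fin d ⊕ Fin d) ℝ) :
    Matrix (Fin d ⊕ Fin d) (Fin d ⊕ Fin d) ℝ :=
  (1 / 2 : ℝ) • (pddD Hx * Nx + (pddD Hx * Nx)ᵀ)


private lemma dot_hasDerivAt' {d : ℕ} {F Gc : ℝ → Fin d → ℝ} {F' G' : Fin d → ℝ} {s : ℝ}
    (hF : HasDerivAt F F' s) (hG : HasDerivAt Gc G' s) :
    HasDerivAt (fun t => F t ⬝ᵥ Gc t) (F' ⬝ᵥ Gc s + F s ⬝ᵥ G') s := by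
  simp only [dotProduct]
  rw [← Finset.sum_add_distrib]
  exact HasDerivAt.fun_sum fun i _ => ((hasDerivAt_pi.mp hF i).mul (hasDerivAt_pi.mp hG i))

private lemma quad_transpose' {d : ℕ} (M : Matrix (Fin d ⊕ Fin d) (Fin d ⊕ Fin d) ℝ)
    (w : Fin d ⊕ Fin d → ℝ) : w ⬝ᵥ (Mᵀ *ᵥ w) = w ⬝ᵥ (M *ᵥ w) := by
  rw [Matrix.mulVec_transpose, Matrix.dotProduct_mulVec, dotProduct_comm]

private lemma geom_rec' (I : ℕ → ℝ) (c r : ℝ) (hnn : ∀ n, 0 ≤ I n)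
    (hkey : ∀ n, I (n + 1) ≤ I n * c) (hcr : c ≤ r) : ∀ n, I n ≤ I 0 * r ^ n := by
  by_cases hI0 : I 0 ≤ 0
  · have hI00 : I 0 = 0 := le_antisymm hI0 (hnn 0)
    have hz : ∀ n, I n = 0 := by
      intro n
      induction n with
      | zero => exact hI00
      | succ k ih =>
        have h1 := hkey k
        rw [ih, zero_mul] at h1
        exact le_antisymm h1 (hnn (k + 1))
    intro n
    rw [hz n, hz 0, zero_mul]
  · push_neg at hI0
    have hc0 : 0 ≤ c := by
      by_contra h
      push_neg at h
      have h1 : I 0 * c < 0 := mul_neg_of_pos_of_neg hI0 h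
      have h2 := le_trans (hnn 1) (hkey 0)
      linarith
    have hr0 : 0 ≤ r := le_trans hc0 hcr
    intro n
    induction n with
    | zero => simp
    | succ k ih =>
      calc I (k + 1) ≤ I k * c := hkey k
        _ ≤ I k * r := mul_le_mul_of_nonneg_left hcr (hnn k)
        _ ≤ (I 0 * r ^ k) * r := mul_le_mul_of_nonneg_right ih hr0
        _ = I 0 * r ^ (k + 1) := by ring

private lemma dot_self_nonneg' {d : ℕ} (v : Fin d → ℝ) : 0 ≤ v ⬝ᵥ v := by
  simp only [dotProduct]
  exact Finset.sum_nonneg fun i _ => mul_self_nonneg _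

private lemma pdd_step {d : ℕ}
    (gradf : (Fin d → ℝ) → Fin d → ℝ)
    (hessf : (Fin d → ℝ) → Matrix (Fin d) (Fin d) ℝ)
    (gradφ : (Fin d → ℝ) → Fin d → ℝ)
    (G : (Fin d → ℝ) → Matrix (Fin d) (Fin d) ℝ)
    (hgradφ : ∀ x y, fderiv ℝ (fun z => gradf z ⬝ᵥ gradf z / 2) x y = gradφ x ⬝ᵥ y)
    (hG : ∀ x y, fderiv ℝ gradφ x y = G x *ᵥ y)
    (hφd : Differentiable ℝ (fun z => gradf z ⬝ᵥ gradf z / 2))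
    (hgradφd : Differentiable ℝ gradφ)
    (hfderivφ : ∀ z u', gradφ z ⬝ᵥ u' = gradf z ⬝ᵥ (hessf z *ᵥ u'))
    (τ lam M₁ : ℝ) (hτ : 0 < τ)
    (Nx : Matrix (Fin d ⊕ Fin d) (Fin d ⊕ Fin d) ℝ)
    (x₀ p₀ x₁ p₁ : Fin d → ℝ)
    (hH1 : ∀ v : Fin d ⊕ Fin d → ℝ,
      lam * (v ⬝ᵥ v) ≤ v ⬝ᵥ (pddH (hessf x₀) Nx *ᵥ v))
    (hNIN1 : ∀ (x' : Fin d → ℝ) (v : Fin d ⊕ Fin d → ℝ),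
      v ⬝ᵥ ((Nxᵀ * Matrix.fromBlocks (G x') 0 0 1 * Nx) *ᵥ v) ≤ M₁ * (v ⬝ᵥ v))
    (hiter1 : Sum.elim x₁ p₁ = Sum.elim x₀ p₀ - τ • (Nx *ᵥ Sum.elim (gradf x₀) p₀)) :
    (gradf x₁ ⬝ᵥ gradf x₁ + p₁ ⬝ᵥ p₁) / 2 ≤
      ((gradf x₀ ⬝ᵥ gradf x₀ + p₀ ⬝ᵥ p₀) / 2) * (1 - 2 * τ * lam + τ ^ 2 * M₁) := by
  set w : Fin d ⊕ Fin d → ℝ := Sum.elim (gradf x₀) p₀ with hwdef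
  set Nw : Fin d ⊕ Fin d → ℝ := Nx *ᵥ w with hNwdef
  set u : Fin d → ℝ := fun i => Nw (Sum.inl i) with hudef
  set v : Fin d → ℝ := fun i => Nw (Sum.inr i) with hvdef
  have hNwelim : Nw = Sum.elim u v := by
    funext j
    cases j <;> simp [hudef, hvdef]
  have hx1 : x₁ = x₀ - τ • u := by
    funext i
    have h := congrFun hiter1 (Sum.inl i)
    simpa [hudef] using h
  have hp1 : p₁ = p₀ - τ • v := by
    funext i
    have h := congrFun hiter1 (Sum.inr i)
    simpa [hvdef] using h
  -- the curve
  set y : ℝ → Fin d → ℝ := fun s => x₀ - (s * τ) • u with hydef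
  have hyd : ∀ s, HasDerivAt y (-(τ • u)) s := by
    intro s
    have h1 : HasDerivAt (fun t : ℝ => (t * τ) • u) ((1 * τ) • u) s :=
      ((hasDerivAt_id s).mul_const τ).smul_const u
    have h2 := h1.const_sub x₀
    simpa [hydef, one_mul] using h2
  have hy0 : y 0 = x₀ := by simp [hydef]
  -- ψ and its derivatives
  set ψ : ℝ → ℝ := fun s => gradf (y s) ⬝ᵥ gradf (y s) / 2
    + (p₀ - (s * τ) • v) ⬝ᵥ (p₀ - (s * τ) • v) / 2 with hψdef
  set ψ' : ℝ → ℝ := fun s => -(τ * (gradφ (y s) ⬝ᵥ u))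
    + (-(τ * (p₀ ⬝ᵥ v)) + s * (τ ^ 2 * (v ⬝ᵥ v))) with hψ'def
  have hψd : ∀ s, HasDerivAt ψ (ψ' s) s := by
    intro s
    have hA1 : HasDerivAt (fun t => gradf (y t) ⬝ᵥ gradf (y t) / 2)
        (-(τ * (gradφ (y s) ⬝ᵥ u))) s := by
      have hc := ((hφd (y s)).hasFDerivAt).comp_hasDerivAt s (hyd s)
      rw [hgradφ] at hc
      have hc' : HasDerivAt (fun t => gradf (y t) ⬝ᵥ gradf (y t) / 2)
          (gradφ (y s) ⬝ᵥ (-(τ • u))) s := hc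
      convert hc' using 1
      simp [dotProduct_neg, dotProduct_smul, smul_eq_mul]
    have hq : (fun t : ℝ => (p₀ - (t * τ) • v) ⬝ᵥ (p₀ - (t * τ) • v) / 2)
        = fun t : ℝ => p₀ ⬝ᵥ p₀ / 2 - (t * τ) * (p₀ ⬝ᵥ v) + (t * τ) ^ 2 * ((v ⬝ᵥ v) / 2) := by
      funext t
      have : (p₀ - (t * τ) • v) ⬝ᵥ (p₀ - (t * τ) • v)
          = p₀ ⬝ᵥ p₀ - 2 * ((t * τ) * (p₀ ⬝ᵥ v)) + (t * τ) ^ 2 * (v ⬝ᵥ v) := by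
        simp [dotProduct_sub, sub_dotProduct, dotProduct_smul, smul_dotProduct, smul_eq_mul,
          dotProduct_comm v p₀]
        ring
      rw [this]; ring
    have hA2 : HasDerivAt (fun t : ℝ => (p₀ - (t * τ) • v) ⬝ᵥ (p₀ - (t * τ) • v) / 2)
        (-(τ * (p₀ ⬝ᵥ v)) + s * (τ ^ 2 * (v ⬝ᵥ v))) s := by
      rw [hq]
      have h1 : HasDerivAt (fun t : ℝ => t * τ) (1 * τ) s := (hasDerivAt_id s).mul_const τ
      have h2 := ((h1.mul_const (p₀ ⬝ᵥ v)).const_sub (p₀ ⬝ᵥ p₀ / 2)).fun_add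
        ((h1.pow 2).mul_const ((v ⬝ᵥ v) / 2))
      refine h2.congr_deriv ?_
      ring
    exact hA1.add hA2
  have hψ'd : ∀ s, HasDerivAt ψ'
      (τ ^ 2 * (u ⬝ᵥ (G (y s) *ᵥ u)) + τ ^ 2 * (v ⬝ᵥ v)) s := by
    intro s
    have hgc := ((hgradφd (y s)).hasFDerivAt).comp_hasDerivAt s (hyd s)
    rw [hG] at hgc
    have hgc' : HasDerivAt (fun t => gradφ (y t)) (G (y s) *ᵥ (-(τ • u))) s := hgc
    have hgu := dot_hasDerivAt' hgc' (hasDerivAt_const s u)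
    have h1 := (hgu.const_mul τ).fun_neg
    have h2 : HasDerivAt (fun t : ℝ => -(τ * (p₀ ⬝ᵥ v)) + t * (τ ^ 2 * (v ⬝ᵥ v)))
        (1 * (τ ^ 2 * (v ⬝ᵥ v))) s :=
      ((hasDerivAt_id s).mul_const _).const_add _
    have h3 := h1.fun_add h2
    refine h3.congr_deriv ?_
    simp [Matrix.mulVec_neg, Matrix.mulVec_smul, neg_dotProduct, smul_dotProduct, smul_eq_mul,
      dotProduct_comm u (G (y s) *ᵥ u)]
    ring
  -- second derivative bound
  have hC : ∀ s, τ ^ 2 * (u ⬝ᵥ (G (y s) *ᵥ u)) + τ ^ 2 * (v ⬝ᵥ v)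
      ≤ τ ^ 2 * (M₁ * (w ⬝ᵥ w)) := by
    intro s
    have h := hNIN1 (y s) w
    have e1 : w ⬝ᵥ ((Nxᵀ * Matrix.fromBlocks (G (y s)) 0 0 1 * Nx) *ᵥ w)
        = u ⬝ᵥ (G (y s) *ᵥ u) + v ⬝ᵥ v := by
      rw [← Matrix.mulVec_mulVec, ← Matrix.mulVec_mulVec, ← hNwdef,
        Matrix.mulVec_transpose, dotProduct_comm, ← Matrix.dotProduct_mulVec, ← hNwdef,
        hNwelim, Matrix.fromBlocks_mulVec]
      simp only [Matrix.zero_mulVec, Matrix.one_mulVec, add_zero, zero_add,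
        Sum.elim_comp_inl, Sum.elim_comp_inr, sumElim_dotProduct_sumElim]
      rw [dotProduct_comm (G (y s) *ᵥ u) u]
    rw [e1] at h
    have := mul_le_mul_of_nonneg_left h (sq_nonneg τ)
    linarith
  -- first derivative bound at 0
  have hdot0 : gradφ x₀ ⬝ᵥ u + p₀ ⬝ᵥ v = w ⬝ᵥ ((pddD (hessf x₀) * Nx) *ᵥ w) := by
    rw [← Matrix.mulVec_mulVec, ← hNwdef, hNwelim, pddD, Matrix.fromBlocks_mulVec]
    simp only [Matrix.zero_mulVec, Matrix.one_mulVec, add_zero, zero_add,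
      Sum.elim_comp_inl, Sum.elim_comp_inr, sumElim_dotProduct_sumElim]
    rw [hfderivφ x₀ u, hwdef, sumElim_dotProduct_sumElim]
  have hlow : lam * (w ⬝ᵥ w) ≤ gradφ x₀ ⬝ᵥ u + p₀ ⬝ᵥ v := by
    have h := hH1 w
    have e : w ⬝ᵥ (pddH (hessf x₀) Nx *ᵥ w) = w ⬝ᵥ ((pddD (hessf x₀) * Nx) *ᵥ w) := by
      rw [pddH, Matrix.smul_mulVec, dotProduct_smul, Matrix.add_mulVec, dotProduct_add,
        quad_transpose']
      simp [smul_eq_mul]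
      ring
    rw [e] at h
    rw [hdot0]
    exact h
  have hψ'0 : ψ' 0 ≤ -(τ * (lam * (w ⬝ᵥ w))) := by
    have hv : ψ' 0 = -(τ * (gradφ x₀ ⬝ᵥ u + p₀ ⬝ᵥ v)) := by
      simp [hψ'def, hy0]
      ring
    rw [hv]
    have := mul_le_mul_of_nonneg_left hlow (le_of_lt hτ)
    linarith
  -- comparison argument
  set C : ℝ := τ ^ 2 * (M₁ * (w ⬝ᵥ w)) with hCdef
  have hmono1 : Monotone (fun s => ψ' 0 + s * C - ψ' s) := by
    apply monotone_of_deriv_nonneg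
    · intro s
      exact ((((hasDerivAt_id' (x := s)).mul_const C).const_add (ψ' 0)).sub (hψ'd s)).differentiableAt
    · intro s
      have hD := (((hasDerivAt_id' (x := s)).mul_const C).const_add (ψ' 0)).fun_sub (hψ'd s)
      rw [hD.deriv]
      have := hC s
      simp only [one_mul]
      linarith
  have hψ'le : ∀ s : ℝ, 0 ≤ s → ψ' s ≤ ψ' 0 + s * C := by
    intro s hs
    have h0 : ψ' 0 + 0 * C - ψ' 0 ≤ ψ' 0 + s * C - ψ' s := hmono1 hs
    linarith
  have hmono2 : MonotoneOn (fun s => ψ 0 + s * ψ' 0 + s ^ 2 * (C / 2) - ψ s) (Set.Ici 0) := by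
    have hF : ∀ s : ℝ, HasDerivAt (fun t => ψ 0 + t * ψ' 0 + t ^ 2 * (C / 2) - ψ t)
        (ψ' 0 + s * C - ψ' s) s := by
      intro s
      have h1 : HasDerivAt (fun t : ℝ => ψ 0 + t * ψ' 0) (1 * ψ' 0) s :=
        ((hasDerivAt_id' (x := s)).mul_const (ψ' 0)).const_add (ψ 0)
      have h2 : HasDerivAt (fun t : ℝ => t ^ 2 * (C / 2))
          (2 * s ^ 1 * 1 * (C / 2)) s := ((hasDerivAt_id' (x := s)).pow 2).mul_const (C / 2)
      have h3 := (h1.fun_add h2).fun_sub (hψd s)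
      refine h3.congr_deriv ?_
      ring
    apply monotoneOn_of_deriv_nonneg (convex_Ici 0)
    · exact (Differentiable.continuous fun s => (hF s).differentiableAt).continuousOn
    · exact fun s _ => ((hF s).differentiableAt).differentiableWithinAt
    · intro s hs
      rw [interior_Ici] at hs
      rw [(hF s).deriv]
      have := hψ'le s (le_of_lt hs)
      linarith
  have h01 : ψ 0 + 0 * ψ' 0 + 0 ^ 2 * (C / 2) - ψ 0
      ≤ ψ 0 + 1 * ψ' 0 + 1 ^ 2 * (C / 2) - ψ 1 :=
    hmono2 Set.self_mem_Ici (by norm_num : (1 : ℝ) ∈ Set.Ici 0) zero_le_one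
  have hψ1le : ψ 1 ≤ ψ 0 + ψ' 0 + C / 2 := by
    have := h01
    norm_num at this
    linarith
  -- endpoint values
  have hψ0val : ψ 0 = (gradf x₀ ⬝ᵥ gradf x₀ + p₀ ⬝ᵥ p₀) / 2 := by
    simp [hψdef, hy0]
    ring
  have hψ1val : ψ 1 = (gradf x₁ ⬝ᵥ gradf x₁ + p₁ ⬝ᵥ p₁) / 2 := by
    have hy1 : y 1 = x₁ := by rw [hx1, hydef]; simp
    have hp1' : p₀ - ((1 : ℝ) * τ) • v = p₁ := by rw [hp1]; simp
    simp only [hψdef, hy1, hp1']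
    ring
  have hww : w ⬝ᵥ w = gradf x₀ ⬝ᵥ gradf x₀ + p₀ ⬝ᵥ p₀ := by
    rw [hwdef, sumElim_dotProduct_sumElim]
  rw [← hψ1val, ← hψ0val]
  clear_value C ψ' ψ y v u Nw w
  have hfin : ψ 0 + ψ' 0 + C / 2 ≤ ψ 0 * (1 - 2 * τ * lam + τ ^ 2 * M₁) := by
    rw [hCdef, hww, hψ0val]
    rw [hww] at hψ'0
    linarith [hψ'0]
  linarith

/-- Discrete-time Lyapunov decay (Theorem 3.4 of the paper). For C⁴ `f`,
constants `τ, σ, A, ε > 0`, `γ = σω` with `ω > 0`, if `H(x) ⪰ λ·I` and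
`N(x)ᵀ ∇²I(x̃,p̃) N(x) ⪯ M₁·I` (with `∇²I(x,p) = blockdiag(G(x), I)`, `G` the Hessian of
`x ↦ ½‖∇f(x)‖²`), and `τ = aλ/M₁` with `a ∈ (0,2)`, then the iterates of
`(x⁺;p⁺) = (x;p) − τN(x)(∇f(x);p)` satisfy
`I(xⁿ,pⁿ) ≤ I(x⁰,p⁰)(1 + (a²−2a)λ²/(2M₁))ⁿ`. -/
theorem stmt_11 (d : ℕ) (f : (Fin d → ℝ) → ℝ)
    (gradf : (Fin d → ℝ) → Fin d → ℝ)
    (hessf B : (Fin d → ℝ) → Matrix (Fin d) (Fin d) ℝ)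
    (hf : ContDiff ℝ 4 f)
    (hgrad : ∀ x y, fderiv ℝ f x y = gradf x ⬝ᵥ y)
    (hhess : ∀ x y, fderiv ℝ gradf x y = hessf x *ᵥ y)
    (gradφ : (Fin d → ℝ) → Fin d → ℝ)
    (G : (Fin d → ℝ) → Matrix (Fin d) (Fin d) ℝ)
    (hgradφ : ∀ x y, fderiv ℝ (fun z => gradf z ⬝ᵥ gradf z / 2) x y = gradφ x ⬝ᵥ y)
    (hG : ∀ x y, fderiv ℝ gradφ x y = G x *ᵥ y)
    (τ σ A ε ω γ : ℝ) (hτ : 0 < τ) (hσ : 0 < σ) (hA : 0 < A) (hε : 0 < ε)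
    (hω : 0 < ω) (hγ : γ = σ * ω)
    (lam M₁ : ℝ) (hlam : 0 < lam) (hM₁ : 0 < M₁)
    (hH : ∀ x (v : Fin d ⊕ Fin d → ℝ),
      lam * (v ⬝ᵥ v) ≤ v ⬝ᵥ (pddH (hessf x) (pddN τ σ A ε γ (B x * hessf x)) *ᵥ v))
    (hNIN : ∀ x x' (v : Fin d ⊕ Fin d → ℝ),
      v ⬝ᵥ (((pddN τ σ A ε γ (B x * hessf x))ᵀ * Matrix.fromBlocks (G x') 0 0 1 *
          pddN τ σ A ε γ (B x * hessf x)) *ᵥ v) ≤ M₁ * (v ⬝ᵥ v))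
    (a : ℝ) (ha0 : 0 < a) (ha2 : a < 2) (hτa : τ = a * lam / M₁)
    (x p : ℕ → Fin d → ℝ)
    (hiter : ∀ n, Sum.elim (x (n + 1)) (p (n + 1)) =
      Sum.elim (x n) (p n) -
        τ • (pddN τ σ A ε γ (B (x n) * hessf (x n)) *ᵥ Sum.elim (gradf (x n)) (p n))) :
    ∀ n : ℕ, (gradf (x n) ⬝ᵥ gradf (x n) + p n ⬝ᵥ p n) / 2 ≤
      ((gradf (x 0) ⬝ᵥ gradf (x 0) + p 0 ⬝ᵥ p 0) / 2) *
        (1 + (a ^ 2 - 2 * a) * lam ^ 2 / (2 * M₁)) ^ n := by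
  -- derived smoothness facts
  have hgradf_eq : gradf = fun z i => fderiv ℝ f z (Pi.single i 1) := by
    funext z i
    rw [hgrad z (Pi.single i 1), dotProduct_single, mul_one]
  have hgradf3 : ContDiff ℝ 3 gradf := by
    have hdf : ContDiff ℝ 3 (fderiv ℝ f) :=
      (contDiff_succ_iff_fderiv.mp (by exact_mod_cast hf : ContDiff ℝ (3 + 1) f)).2.2
    rw [hgradf_eq]
    exact contDiff_pi.mpr fun i => hdf.clm_apply contDiff_const
  have hφ3 : ContDiff ℝ 3 (fun z => gradf z ⬝ᵥ gradf z / 2) := by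
    have h1 : ContDiff ℝ 3 (fun z => gradf z ⬝ᵥ gradf z) := by
      simp only [dotProduct]
      exact ContDiff.sum fun i _ => (contDiff_pi.mp hgradf3 i).mul (contDiff_pi.mp hgradf3 i)
    exact h1.div_const 2
  have hφd : Differentiable ℝ (fun z => gradf z ⬝ᵥ gradf z / 2) :=
    hφ3.differentiable (by norm_num)
  have hgfd : Differentiable ℝ gradf := hgradf3.differentiable (by norm_num)
  have hdφ : ContDiff ℝ 2 (fderiv ℝ (fun z => gradf z ⬝ᵥ gradf z / 2)) :=
    (contDiff_succ_iff_fderiv.mp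
      (by exact_mod_cast hφ3 : ContDiff ℝ (2 + 1) (fun z => gradf z ⬝ᵥ gradf z / 2))).2.2
  have hgradφ_eq : gradφ = fun z i =>
      fderiv ℝ (fun z => gradf z ⬝ᵥ gradf z / 2) z (Pi.single i 1) := by
    funext z i
    rw [hgradφ z (Pi.single i 1), dotProduct_single, mul_one]
  have hgradφ2 : ContDiff ℝ 2 gradφ := by
    rw [hgradφ_eq]
    exact contDiff_pi.mpr fun i => hdφ.clm_apply contDiff_const
  have hgradφd : Differentiable ℝ gradφ := hgradφ2.differentiable (by norm_num)
  -- the gradient of φ in terms of the Hessian of f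
  have hfderivφ : ∀ z u', gradφ z ⬝ᵥ u' = gradf z ⬝ᵥ (hessf z *ᵥ u') := by
    intro z u'
    have hline : HasDerivAt (fun s : ℝ => z + s • u') u' 0 := by
      simpa using ((hasDerivAt_id (0 : ℝ)).smul_const u').const_add z
    have hpt : z + (0 : ℝ) • u' = z := by simp
    have h1 : HasDerivAt (fun s : ℝ => gradf (z + s • u') ⬝ᵥ gradf (z + s • u') / 2)
        (gradφ z ⬝ᵥ u') 0 := by
      have hc := (hφd z).hasFDerivAt.comp_hasDerivAt_of_eq 0 hline hpt.symm
      rw [hgradφ] at hc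
      exact hc
    have hg : HasDerivAt (fun s : ℝ => gradf (z + s • u')) (hessf z *ᵥ u') 0 := by
      have hc := (hgfd z).hasFDerivAt.comp_hasDerivAt_of_eq 0 hline hpt.symm
      rw [hhess] at hc
      exact hc
    have h2 : HasDerivAt (fun s : ℝ => gradf (z + s • u') ⬝ᵥ gradf (z + s • u') / 2)
        (gradf z ⬝ᵥ (hessf z *ᵥ u')) 0 := by
      have := (dot_hasDerivAt' hg hg).div_const 2
      rw [hpt] at this
      refine this.congr_deriv ?_
      rw [dotProduct_comm (hessf z *ᵥ u') (gradf z)]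
      ring
    rw [h1.unique h2]
  -- one-step decay
  have hkey : ∀ n, (gradf (x (n + 1)) ⬝ᵥ gradf (x (n + 1)) + p (n + 1) ⬝ᵥ p (n + 1)) / 2 ≤
      ((gradf (x n) ⬝ᵥ gradf (x n) + p n ⬝ᵥ p n) / 2) * (1 - 2 * τ * lam + τ ^ 2 * M₁) :=
    fun n => pdd_step gradf hessf gradφ G hgradφ hG hφd hgradφd hfderivφ τ lam M₁ hτ
      (pddN τ σ A ε γ (B (x n) * hessf (x n))) (x n) (p n) (x (n + 1)) (p (n + 1))
      (hH (x n)) (fun x' v => hNIN (x n) x' v) (hiter n)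
  -- nonnegativity
  have hnn : ∀ n, 0 ≤ (gradf (x n) ⬝ᵥ gradf (x n) + p n ⬝ᵥ p n) / 2 := by
    intro n
    have h1 := dot_self_nonneg' (gradf (x n))
    have h2 := dot_self_nonneg' (p n)
    linarith
  -- comparison of rates
  have hcr : 1 - 2 * τ * lam + τ ^ 2 * M₁ ≤ 1 + (a ^ 2 - 2 * a) * lam ^ 2 / (2 * M₁) := by
    have hM := hM₁.ne'
    have h1 : 1 - 2 * τ * lam + τ ^ 2 * M₁ = 1 + (a ^ 2 - 2 * a) * lam ^ 2 / M₁ := by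
      rw [hτa]
      field_simp
      ring
    have hX : (a ^ 2 - 2 * a) * lam ^ 2 ≤ 0 := by
      nlinarith [mul_nonneg (mul_pos ha0 (show (0:ℝ) < 2 - a by linarith)).le (sq_nonneg lam)]
    have h2 : (a ^ 2 - 2 * a) * lam ^ 2 / M₁ ≤ (a ^ 2 - 2 * a) * lam ^ 2 / (2 * M₁) := by
      rw [div_le_div_iff₀ hM₁ (by linarith)]
      nlinarith [hX, hM₁]
    linarith [h1]
  exact geom_rec' (fun n => (gradf (x n) ⬝ᵥ gradf (x n) + p n ⬝ᵥ p n) / 2)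
    (1 - 2 * τ * lam + τ ^ 2 * M₁) (1 + (a ^ 2 - 2 * a) * lam ^ 2 / (2 * M₁))
    hnn hkey hcr
end

section
/- Let f : ℝ^d → ℝ be four times continuously differentiable and strongly convex, let B : ℝ^d → ℝ^{d×d}, τ, σ, A, ε > 0, γ = σω with ω > 0, and define N(x), H(x) and the iteration (x^{n+1}; p^{n+1}) = (xⁿ; pⁿ) − τ N(xⁿ)(∇f(xⁿ); pⁿ) as in the linearized PDD scheme. Let D₀ = sup over all (x,p) ∈ ℝ^{2d} and nonzero v ∈ ℝ^{2d} of ∇³I(x,p)[v,v,v]/‖v‖³, the supremum of the normalized third derivative form of I(x,p) = ½(‖∇f(x)‖² + ‖p‖²), and suppose D₀ < ∞. Suppose the initial point satisfies I(x⁰,p⁰)^{1/2} ≤ δ/(τ D₀ ‖N(x)‖₂³) for some δ > 0 and all x. Suppose further that there are constants λ, M₂ > 0 with H(x) ⪰ λ·I for all x and N(x)ᵀ ∇²I(x,p) N(x) ⪯ M₂·I for all x, p. If τ = aλ/(M₂ + δ) for some a ∈ (0,2), then for all n: I(xⁿ, pⁿ) ≤ I(x⁰, p⁰) · (1 + ((a²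 − 2a)/2) · λ²/(M₂ + δ))ⁿ. -/
open Matrix

/-- The Lyapunov functional `I(x,p) = ½(‖∇f(x)‖² + ‖p‖²)` as a function on `ℝ^{2d}`. -/
noncomputable def pddI {d : ℕ} (gradf : (Fin d → ℝ) → Fin d → ℝ)
    (z : Fin d ⊕ Fin d → ℝ) : ℝ :=
  (gradf (fun i => z (Sum.inl i)) ⬝ᵥ gradf (fun i => z (Sum.inl i)) +
    (fun i => z (Sum.inr i)) ⬝ᵥ (fun i => z (Sum.inr i))) / 2



lemma lineDeriv_aux {E : Type*} [NormedAddCommGroup E] [NormedSpace ℝ E]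
    (F : E → ℝ) (hF : ContDiff ℝ 3 F) (z Δ : E) (k : ℕ) (hk : k < 3) (t : ℝ) :
    HasDerivAt (fun s : ℝ => iteratedFDeriv ℝ k F (z + s • Δ) (fun _ => Δ))
      (iteratedFDeriv ℝ (k + 1) F (z + t • Δ) (fun _ => Δ)) t := by
  have hc : HasDerivAt (fun s : ℝ => z + s • Δ) Δ t := by
    simpa using ((hasDerivAt_id t).smul_const Δ).const_add z
  have hdiff : DifferentiableAt ℝ (iteratedFDeriv ℝ k F) (z + t • Δ) :=
    (hF.differentiable_iteratedFDeriv (by exact_mod_cast hk)).differentiableAt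
  have h1 : HasDerivAt (fun s : ℝ => iteratedFDeriv ℝ k F (z + s • Δ))
      (fderiv ℝ (iteratedFDeriv ℝ k F) (z + t • Δ) Δ) t :=
    hdiff.hasFDerivAt.comp_hasDerivAt t hc
  have h2 := (ContinuousMultilinearMap.apply ℝ (fun _ : Fin k => E) ℝ
      (fun _ => Δ)).hasFDerivAt.comp_hasDerivAt t h1
  refine h2.congr_deriv ?_
  rw [iteratedFDeriv_succ_apply_left]
  rfl

noncomputable def dCLM {d : ℕ} (v : Fin d → ℝ) : (Fin d → ℝ) →L[ℝ] ℝ :=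
  LinearMap.toContinuousLinearMap
    { toFun := fun w => v ⬝ᵥ w
      map_add' := fun a b => dotProduct_add v a b
      map_smul' := fun c a => by simp [dotProduct_smul] }

@[simp] lemma dCLM_apply {d : ℕ} (v w : Fin d → ℝ) : dCLM v w = v ⬝ᵥ w := rfl

noncomputable def mvCLM {d : ℕ} (M : Matrix (Fin d) (Fin d) ℝ) :
    (Fin d → ℝ) →L[ℝ] (Fin d → ℝ) :=
  LinearMap.toContinuousLinearMap M.mulVecLin

@[simp] lemma mvCLM_apply {d : ℕ} (M : Matrix (Fin d) (Fin d) ℝ) (v : Fin d → ℝ) :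
    mvCLM M v = M *ᵥ v := rfl

lemma hasFDerivAt_dotsq {d : ℕ} (w₀ : Fin d → ℝ) :
    HasFDerivAt (fun w : Fin d → ℝ => w ⬝ᵥ w) (dCLM ((2:ℝ) • w₀)) w₀ := by
  have h : ∀ i : Fin d, HasFDerivAt (fun w : Fin d → ℝ => w i * w i)
      ((2 * w₀ i) • ContinuousLinearMap.proj (R := ℝ) i) w₀ := by
    intro i
    have := (hasFDerivAt_apply (𝕜 := ℝ) i w₀).mul (hasFDerivAt_apply (𝕜 := ℝ) i w₀)
    refine HasFDerivAt.congr_fderiv (f := fun w : Fin d → ℝ => w i * w i) this ?_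
    ext y
    simp [two_mul, add_smul]
  have hs := HasFDerivAt.fun_sum (fun i (_ : i ∈ Finset.univ) => h i)
  refine HasFDerivAt.congr_fderiv (f := fun w : Fin d → ℝ => w ⬝ᵥ w) hs ?_
  ext y
  simp [dotProduct, Finset.smul_sum, mul_comm, mul_assoc]

noncomputable def bdCLM {d : ℕ} : (Fin d → ℝ) →L[ℝ] ((Fin d → ℝ) →L[ℝ] ℝ) :=
  LinearMap.toContinuousLinearMap
    { toFun := dCLM
      map_add' := fun a b => by ext y; simp [add_dotProduct]
      map_smul' := fun c a => by ext y; simp [smul_dotProduct] }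

@[simp] lemma bdCLM_apply {d : ℕ} (v : Fin d → ℝ) : bdCLM v = dCLM v := rfl

section ctx
variable {d : ℕ} {f : (Fin d → ℝ) → ℝ} {gradf : (Fin d → ℝ) → Fin d → ℝ}
  {hessf : (Fin d → ℝ) → Matrix (Fin d) (Fin d) ℝ}

lemma gradf_contDiff (hf : ContDiff ℝ 4 f)
    (hgrad : ∀ x y, fderiv ℝ f x y = gradf x ⬝ᵥ y) : ContDiff ℝ 3 gradf := by
  have he : gradf = fun x i => fderiv ℝ f x (Pi.single i 1) := by
    funext x i
    rw [hgrad x (Pi.single i 1), dotProduct_single, mul_one]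
  rw [he]
  refine contDiff_pi.mpr fun i => ?_
  exact (ContinuousLinearMap.apply ℝ ℝ (Pi.single i 1)).contDiff.comp
    (hf.fderiv_right (m := 3) (by norm_num))

lemma gradf_hasFDerivAt (hf : ContDiff ℝ 4 f)
    (hgrad : ∀ x y, fderiv ℝ f x y = gradf x ⬝ᵥ y)
    (hhess : ∀ x y, fderiv ℝ gradf x y = hessf x *ᵥ y) (x : Fin d → ℝ) :
    HasFDerivAt gradf (mvCLM (hessf x)) x := by
  have hd : DifferentiableAt ℝ gradf x :=
    ((gradf_contDiff hf hgrad).differentiable (by norm_num)).differentiableAt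
  have he : fderiv ℝ gradf x = mvCLM (hessf x) :=
    ContinuousLinearMap.ext fun y => by simp [hhess x y]
  exact he ▸ hd.hasFDerivAt

lemma f_hasFDerivAt (hf : ContDiff ℝ 4 f)
    (hgrad : ∀ x y, fderiv ℝ f x y = gradf x ⬝ᵥ y) (x : Fin d → ℝ) :
    HasFDerivAt f (dCLM (gradf x)) x := by
  have hd : DifferentiableAt ℝ f x :=
    (hf.differentiable (by norm_num)).differentiableAt
  have he : fderiv ℝ f x = dCLM (gradf x) :=
    ContinuousLinearMap.ext fun y => by simp [hgrad x y]
  exact he ▸ hd.hasFDerivAt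

lemma hessf_symm (hf : ContDiff ℝ 4 f)
    (hgrad : ∀ x y, fderiv ℝ f x y = gradf x ⬝ᵥ y)
    (hhess : ∀ x y, fderiv ℝ gradf x y = hessf x *ᵥ y) (x : Fin d → ℝ) :
    (hessf x)ᵀ = hessf x := by
  have hf' : ∀ y, HasFDerivAt f (bdCLM (gradf y)) y := fun y =>
    f_hasFDerivAt hf hgrad y
  have hf'' : HasFDerivAt (fun y => bdCLM (gradf y))
      (bdCLM.comp (mvCLM (hessf x))) x :=
    bdCLM.hasFDerivAt.comp x (gradf_hasFDerivAt hf hgrad hhess x)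
  have hsym := second_derivative_symmetric hf' hf''
  ext i j
  have := hsym (Pi.single j 1) (Pi.single i 1)
  simpa [mulVec_single, dotProduct_single, transpose_apply] using this.symm

lemma phi_contDiff (hf : ContDiff ℝ 4 f)
    (hgrad : ∀ x y, fderiv ℝ f x y = gradf x ⬝ᵥ y) :
    ContDiff ℝ 3 (fun z => gradf z ⬝ᵥ gradf z / 2) := by
  have hg := gradf_contDiff hf hgrad
  have : ContDiff ℝ 3 (fun z => gradf z ⬝ᵥ gradf z) := by
    have : (fun z => gradf z ⬝ᵥ gradf z) =
        fun z => ∑ i : Fin d, gradf z i * gradf z i := rfl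
    rw [this]
    exact ContDiff.sum fun i _ =>
      ((contDiff_pi.mp hg i).mul (contDiff_pi.mp hg i))
  exact this.div_const 2

variable {gradφ : (Fin d → ℝ) → Fin d → ℝ} {G : (Fin d → ℝ) → Matrix (Fin d) (Fin d) ℝ}

lemma gradφ_contDiff (hf : ContDiff ℝ 4 f)
    (hgrad : ∀ x y, fderiv ℝ f x y = gradf x ⬝ᵥ y)
    (hgradφ : ∀ x y, fderiv ℝ (fun z => gradf z ⬝ᵥ gradf z / 2) x y = gradφ x ⬝ᵥ y) :
    ContDiff ℝ 2 gradφ := by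
  have he : gradφ = fun x i =>
      fderiv ℝ (fun z => gradf z ⬝ᵥ gradf z / 2) x (Pi.single i 1) := by
    funext x i
    rw [hgradφ x (Pi.single i 1), dotProduct_single, mul_one]
  rw [he]
  refine contDiff_pi.mpr fun i => ?_
  exact (ContinuousLinearMap.apply ℝ ℝ (Pi.single i 1)).contDiff.comp
    ((phi_contDiff hf hgrad).fderiv_right (m := 2) (by norm_num))

lemma gradφ_hasFDerivAt (hf : ContDiff ℝ 4 f)
    (hgrad : ∀ x y, fderiv ℝ f x y = gradf x ⬝ᵥ y)
    (hgradφ : ∀ x y, fderiv ℝ (fun z => gradf z ⬝ᵥ gradf z / 2) x y = gradφ x ⬝ᵥ y)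
    (hG : ∀ x y, fderiv ℝ gradφ x y = G x *ᵥ y) (x : Fin d → ℝ) :
    HasFDerivAt gradφ (mvCLM (G x)) x := by
  have hd : DifferentiableAt ℝ gradφ x :=
    ((gradφ_contDiff hf hgrad hgradφ).differentiable (by norm_num)).differentiableAt
  have he : fderiv ℝ gradφ x = mvCLM (G x) :=
    ContinuousLinearMap.ext fun y => by simp [hG x y]
  exact he ▸ hd.hasFDerivAt

lemma phi_hasFDerivAt (hf : ContDiff ℝ 4 f)
    (hgrad : ∀ x y, fderiv ℝ f x y = gradf x ⬝ᵥ y)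
    (hgradφ : ∀ x y, fderiv ℝ (fun z => gradf z ⬝ᵥ gradf z / 2) x y = gradφ x ⬝ᵥ y)
    (x : Fin d → ℝ) :
    HasFDerivAt (fun z => gradf z ⬝ᵥ gradf z / 2) (dCLM (gradφ x)) x := by
  have hd : DifferentiableAt ℝ (fun z => gradf z ⬝ᵥ gradf z / 2) x :=
    ((phi_contDiff hf hgrad).differentiable (by norm_num)).differentiableAt
  have he : fderiv ℝ (fun z => gradf z ⬝ᵥ gradf z / 2) x = dCLM (gradφ x) :=
    ContinuousLinearMap.ext fun y => by simp [hgradφ x y]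
  exact he ▸ hd.hasFDerivAt

lemma gradφ_eq (hf : ContDiff ℝ 4 f)
    (hgrad : ∀ x y, fderiv ℝ f x y = gradf x ⬝ᵥ y)
    (hhess : ∀ x y, fderiv ℝ gradf x y = hessf x *ᵥ y)
    (hgradφ : ∀ x y, fderiv ℝ (fun z => gradf z ⬝ᵥ gradf z / 2) x y = gradφ x ⬝ᵥ y)
    (x : Fin d → ℝ) :
    gradφ x = hessf x *ᵥ gradf x := by
  have hcomp : HasFDerivAt (fun z => gradf z ⬝ᵥ gradf z)
      ((dCLM ((2:ℝ) • gradf x)).comp (mvCLM (hessf x))) x :=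
    (hasFDerivAt_dotsq (gradf x)).comp x (gradf_hasFDerivAt hf hgrad hhess x)
  have hfun : (fun z => gradf z ⬝ᵥ gradf z / 2) =
      fun z => (1/2:ℝ) • (gradf z ⬝ᵥ gradf z) := by
    funext z; simp [smul_eq_mul]; ring
  have h2 : HasFDerivAt (fun z => gradf z ⬝ᵥ gradf z / 2)
      ((1/2:ℝ) • ((dCLM ((2:ℝ) • gradf x)).comp (mvCLM (hessf x)))) x := by
    rw [hfun]; exact hcomp.const_smul (1/2:ℝ)
  have h4 := (phi_hasFDerivAt hf hgrad hgradφ x).unique h2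
  have h5 : ∀ y, gradφ x ⬝ᵥ y = gradf x ⬝ᵥ (hessf x *ᵥ y) := by
    intro y
    have h6 := congrArg (fun L : (Fin d → ℝ) →L[ℝ] ℝ => L y) h4
    simp only [dCLM_apply, ContinuousLinearMap.coe_comp', Function.comp_apply,
      ContinuousLinearMap.smul_apply, smul_eq_mul, smul_dotProduct,
      mvCLM_apply] at h6
    rw [h6]; ring
  have hsym := hessf_symm hf hgrad hhess x
  funext i
  have := h5 (Pi.single i 1)
  rw [dotProduct_single, mul_one] at this
  rw [this, dotProduct_mulVec]
  nth_rewrite 1 [← hsym]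
  rw [vecMul_transpose, dotProduct_single, mul_one]

end ctx

noncomputable def pi1 {d : ℕ} : (Fin d ⊕ Fin d → ℝ) →L[ℝ] (Fin d → ℝ) :=
  ContinuousLinearMap.pi fun i => ContinuousLinearMap.proj (Sum.inl i)

noncomputable def pi2 {d : ℕ} : (Fin d ⊕ Fin d → ℝ) →L[ℝ] (Fin d → ℝ) :=
  ContinuousLinearMap.pi fun i => ContinuousLinearMap.proj (Sum.inr i)

@[simp] lemma pi1_apply {d : ℕ} (z : Fin d ⊕ Fin d → ℝ) :
    pi1 z = fun i => z (Sum.inl i) := rfl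
@[simp] lemma pi2_apply {d : ℕ} (z : Fin d ⊕ Fin d → ℝ) :
    pi2 z = fun i => z (Sum.inr i) := rfl

section ctx2
variable {d : ℕ} {f : (Fin d → ℝ) → ℝ} {gradf gradφ : (Fin d → ℝ) → Fin d → ℝ}
  {hessf G : (Fin d → ℝ) → Matrix (Fin d) (Fin d) ℝ}

lemma pddI_eq (gradf : (Fin d → ℝ) → Fin d → ℝ) :
    pddI gradf = fun z => gradf (pi1 z) ⬝ᵥ gradf (pi1 z) / 2 + pi2 z ⬝ᵥ pi2 z / 2 := by
  funext w
  show (gradf (pi1 w) ⬝ᵥ gradf (pi1 w) + pi2 w ⬝ᵥ pi2 w) / 2 = _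
  ring

lemma F_contDiff (hf : ContDiff ℝ 4 f)
    (hgrad : ∀ x y, fderiv ℝ f x y = gradf x ⬝ᵥ y) :
    ContDiff ℝ 3 (pddI gradf) := by
  rw [pddI_eq]
  refine ContDiff.add (((phi_contDiff hf hgrad).comp pi1.contDiff)) ?_
  have : ContDiff ℝ 3 (fun z : Fin d ⊕ Fin d → ℝ => pi2 z ⬝ᵥ pi2 z) := by
    have : (fun z : Fin d ⊕ Fin d → ℝ => pi2 z ⬝ᵥ pi2 z) =
        fun z => ∑ i : Fin d, z (Sum.inr i) * z (Sum.inr i) := rfl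
    rw [this]
    exact ContDiff.sum fun i _ =>
      ((contDiff_apply ℝ ℝ (Sum.inr i)).mul
        (contDiff_apply ℝ ℝ (Sum.inr i)))
  exact this.div_const 2

lemma F_hasFDerivAt (hf : ContDiff ℝ 4 f)
    (hgrad : ∀ x y, fderiv ℝ f x y = gradf x ⬝ᵥ y)
    (hgradφ : ∀ x y, fderiv ℝ (fun z => gradf z ⬝ᵥ gradf z / 2) x y = gradφ x ⬝ᵥ y)
    (z : Fin d ⊕ Fin d → ℝ) :
    HasFDerivAt (pddI gradf)
      ((dCLM (gradφ (pi1 z))).comp pi1 + (dCLM (pi2 z)).comp pi2) z := by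
  rw [pddI_eq]
  have h1 : HasFDerivAt (fun w : Fin d ⊕ Fin d → ℝ => gradf (pi1 w) ⬝ᵥ gradf (pi1 w) / 2)
      ((dCLM (gradφ (pi1 z))).comp pi1) z :=
    (phi_hasFDerivAt hf hgrad hgradφ (pi1 z)).comp z pi1.hasFDerivAt
  have h2 : HasFDerivAt (fun w : Fin d ⊕ Fin d → ℝ => pi2 w ⬝ᵥ pi2 w)
      ((dCLM ((2:ℝ) • pi2 z)).comp pi2) z :=
    (hasFDerivAt_dotsq (pi2 z)).comp z pi2.hasFDerivAt
  have h2' : HasFDerivAt (fun w : Fin d ⊕ Fin d → ℝ => pi2 w ⬝ᵥ pi2 w / 2)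
      ((1/2:ℝ) • ((dCLM ((2:ℝ) • pi2 z)).comp pi2)) z := by
    have hfun : (fun w : Fin d ⊕ Fin d → ℝ => pi2 w ⬝ᵥ pi2 w / 2) =
        fun w => (1/2:ℝ) • (pi2 w ⬝ᵥ pi2 w) := by
      funext w; simp [smul_eq_mul]; ring
    rw [hfun]; exact h2.const_smul (1/2:ℝ)
  have := h1.add h2'
  refine this.congr_fderiv ?_
  ext y
  simp only [ContinuousLinearMap.add_apply, ContinuousLinearMap.coe_comp',
    Function.comp_apply, dCLM_apply, ContinuousLinearMap.smul_apply,
    smul_eq_mul, smul_dotProduct]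
  ring

lemma F_fderiv_apply (hf : ContDiff ℝ 4 f)
    (hgrad : ∀ x y, fderiv ℝ f x y = gradf x ⬝ᵥ y)
    (hgradφ : ∀ x y, fderiv ℝ (fun z => gradf z ⬝ᵥ gradf z / 2) x y = gradφ x ⬝ᵥ y)
    (z y : Fin d ⊕ Fin d → ℝ) :
    fderiv ℝ (pddI gradf) z y = gradφ (pi1 z) ⬝ᵥ pi1 y + pi2 z ⬝ᵥ pi2 y := by
  rw [(F_hasFDerivAt hf hgrad hgradφ z).fderiv]
  simp

end ctx2

set_option synthInstance.maxHeartbeats 1000000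

lemma dot_split {d : ℕ} (u w : Fin d ⊕ Fin d → ℝ) :
    u ⬝ᵥ w = (fun i => u (Sum.inl i)) ⬝ᵥ (fun i => w (Sum.inl i)) +
      (fun i => u (Sum.inr i)) ⬝ᵥ (fun i => w (Sum.inr i)) :=
  Fintype.sum_sum_type _

lemma dot_self_nonneg {n : Type*} [Fintype n] (v : n → ℝ) : 0 ≤ v ⬝ᵥ v :=
  Finset.sum_nonneg fun i _ => mul_self_nonneg (v i)

lemma dot_self_pos {n : Type*} [Fintype n] {v : n → ℝ} (hv : v ≠ 0) : 0 < v ⬝ᵥ v := by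
  rcases Function.ne_iff.mp hv with ⟨i, hi⟩
  have hi' : v i ≠ 0 := by simpa using hi
  have h1 : 0 < v i * v i := mul_self_pos.mpr hi'
  exact lt_of_lt_of_le h1 (Finset.single_le_sum
    (fun j _ => mul_self_nonneg (v j)) (Finset.mem_univ i))

lemma elim_eta {d : ℕ} (u : Fin d ⊕ Fin d → ℝ) :
    Sum.elim (fun i => u (Sum.inl i)) (fun i => u (Sum.inr i)) = u := by
  funext i; cases i <;> rfl

lemma norm_mulVec_le {n : Type*} [Fintype n] [DecidableEq n]
    (M : Matrix n n ℝ) (v : n → ℝ) :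
    Real.sqrt ((M *ᵥ v) ⬝ᵥ (M *ᵥ v)) ≤
      ‖Matrix.toEuclideanCLM (𝕜 := ℝ) M‖ * Real.sqrt (v ⬝ᵥ v) := by
  have h1 : ∀ w : n → ℝ, ‖(WithLp.equiv 2 (n → ℝ)).symm w‖ = Real.sqrt (w ⬝ᵥ w) := by
    intro w
    rw [EuclideanSpace.norm_eq]
    congr 1
    simp [dotProduct, sq]
  have h2 := ContinuousLinearMap.le_opNorm (Matrix.toEuclideanCLM (𝕜 := ℝ) M)
    ((WithLp.equiv 2 (n → ℝ)).symm v)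
  change ‖(WithLp.equiv 2 (n → ℝ)).symm (M *ᵥ v)‖ ≤ _ at h2
  rw [h1, h1] at h2
  simpa [Matrix.toLin'_apply] using h2


lemma taylor3_bound (g g1 g2 g3 : ℝ → ℝ) (K : ℝ)
    (h0 : ∀ t, HasDerivAt g (g1 t) t) (h1 : ∀ t, HasDerivAt g1 (g2 t) t)
    (h2 : ∀ t, HasDerivAt g2 (g3 t) t) (h3 : ∀ t, g3 t ≤ K) :
    g 1 ≤ g 0 + g1 0 + g2 0 / 2 + K / 6 := by
  have key : ∀ (q : ℝ → ℝ) (q' : ℝ → ℝ), (∀ t, HasDerivAt q (q' t) t) →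
      (∀ t, t ∈ Set.Icc (0:ℝ) 1 → q' t ≤ 0) →
      ∀ t ∈ Set.Icc (0:ℝ) 1, q t ≤ q 0 := by
    intro q q' hq hq' t ht
    have anti : AntitoneOn q (Set.Icc (0:ℝ) 1) := by
      refine antitoneOn_of_deriv_nonpos (convex_Icc 0 1) ?_ ?_ ?_
      · exact (Differentiable.continuous (fun s => (hq s).differentiableAt)).continuousOn
      · exact fun s _ => ((hq s).differentiableAt).differentiableWithinAt
      · intro s hs
        rw [interior_Icc] at hs
        rw [(hq s).deriv]
        exact hq' s ⟨le_of_lt hs.1, le_of_lt hs.2⟩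
    exact anti (Set.left_mem_Icc.mpr zero_le_one) ht ht.1
  have hd2 : ∀ t, HasDerivAt (fun t => g2 t - g2 0 - K * t) (g3 t - K) t := by
    intro t
    exact ((h2 t).sub_const (g2 0)).sub (by simpa using (hasDerivAt_id t).const_mul K)
  have A2 : ∀ t ∈ Set.Icc (0:ℝ) 1, g2 t - g2 0 - K * t ≤ 0 := by
    intro t ht
    have := key _ _ hd2 (fun s _ => by linarith [h3 s]) t ht
    simpa using this
  have hd1 : ∀ t, HasDerivAt (fun t => g1 t - g1 0 - g2 0 * t - K * t^2 / 2)
      (g2 t - g2 0 - K * t) t := by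
    intro t
    have hpow : HasDerivAt (fun t : ℝ => K * t^2 / 2) (K * t) t := by
      have := ((hasDerivAt_pow 2 t).const_mul K).div_const (2:ℝ)
      refine this.congr_deriv ?_
      ring
    exact (((h1 t).sub_const (g1 0)).sub
      (by simpa using (hasDerivAt_id t).const_mul (g2 0))).sub hpow
  have A1 : ∀ t ∈ Set.Icc (0:ℝ) 1, g1 t - g1 0 - g2 0 * t - K * t^2 / 2 ≤ 0 := by
    intro t ht
    have := key _ _ hd1 (fun s hs => A2 s hs) t ht
    simpa using this
  have hd0 : ∀ t, HasDerivAt (fun t => g t - g1 0 * t - g2 0 * t^2 / 2 - K * t^3 / 6)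
      (g1 t - g1 0 - g2 0 * t - K * t^2 / 2) t := by
    intro t
    have hp2 : HasDerivAt (fun t : ℝ => g2 0 * t^2 / 2) (g2 0 * t) t := by
      have := ((hasDerivAt_pow 2 t).const_mul (g2 0)).div_const (2:ℝ)
      refine this.congr_deriv ?_
      ring
    have hp3 : HasDerivAt (fun t : ℝ => K * t^3 / 6) (K * t^2 / 2) t := by
      have := ((hasDerivAt_pow 3 t).const_mul K).div_const (6:ℝ)
      refine this.congr_deriv ?_
      ring
    exact (((h0 t).sub (by simpa using (hasDerivAt_id t).const_mul (g1 0))).sub hp2).sub hp3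
  have A0 := key _ _ hd0 (fun s hs => A1 s hs) 1 (Set.right_mem_Icc.mpr zero_le_one)
  nlinarith [A0]

lemma quadH {d : ℕ} (Hm : Matrix (Fin d) (Fin d) ℝ) (hsym : Hmᵀ = Hm)
    (Nx : Matrix (Fin d ⊕ Fin d) (Fin d ⊕ Fin d) ℝ) (v : Fin d ⊕ Fin d → ℝ) :
    v ⬝ᵥ (pddH Hm Nx *ᵥ v) = (pddD Hm *ᵥ v) ⬝ᵥ (Nx *ᵥ v) := by
  have hDsym : (pddD Hm)ᵀ = pddD Hm := by
    rw [pddD, fromBlocks_transpose, hsym, transpose_zero, transpose_one]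
  have hterm2 : v ⬝ᵥ ((pddD Hm * Nx)ᵀ *ᵥ v) = v ⬝ᵥ ((pddD Hm * Nx) *ᵥ v) := by
    rw [mulVec_transpose, dotProduct_comm, ← dotProduct_mulVec]
  rw [pddH, smul_mulVec, dotProduct_smul, add_mulVec, dotProduct_add, hterm2]
  have : v ⬝ᵥ ((pddD Hm * Nx) *ᵥ v) = (pddD Hm *ᵥ v) ⬝ᵥ (Nx *ᵥ v) := by
    rw [← mulVec_mulVec, dotProduct_mulVec (w := Nx *ᵥ v), ← mulVec_transpose, hDsym,
      dotProduct_comm]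
  rw [this]
  simp [smul_eq_mul]
  ring

lemma quadG {d : ℕ} (Gm : Matrix (Fin d) (Fin d) ℝ)
    (Nx : Matrix (Fin d ⊕ Fin d) (Fin d ⊕ Fin d) ℝ) (v : Fin d ⊕ Fin d → ℝ) :
    (Nx *ᵥ v) ⬝ᵥ (Matrix.fromBlocks Gm 0 0 1 *ᵥ (Nx *ᵥ v)) =
      v ⬝ᵥ ((Nxᵀ * Matrix.fromBlocks Gm 0 0 1 * Nx) *ᵥ v) := by
  rw [Matrix.mul_assoc, ← mulVec_mulVec, dotProduct_mulVec v, vecMul_transpose,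
    ← mulVec_mulVec]

section step
variable {d : ℕ} {f : (Fin d → ℝ) → ℝ} {gradf gradφ : (Fin d → ℝ) → Fin d → ℝ}
  {hessf G : (Fin d → ℝ) → Matrix (Fin d) (Fin d) ℝ}

set_option maxHeartbeats 1000000 in
lemma step_key
    (hf : ContDiff ℝ 4 f)
    (hgrad : ∀ x y, fderiv ℝ f x y = gradf x ⬝ᵥ y)
    (hhess : ∀ x y, fderiv ℝ gradf x y = hessf x *ᵥ y)
    (hgradφ : ∀ x y, fderiv ℝ (fun z => gradf z ⬝ᵥ gradf z / 2) x y = gradφ x ⬝ᵥ y)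
    (hG : ∀ x y, fderiv ℝ gradφ x y = G x *ᵥ y)
    (S : Set ℝ)
    (hS : S = {r : ℝ | ∃ (z v : Fin d ⊕ Fin d → ℝ), v ≠ 0 ∧
      r = iteratedFDeriv ℝ 3 (pddI gradf) z (fun _ => v) / Real.sqrt (v ⬝ᵥ v) ^ 3})
    (hbdd : BddAbove S) (D₀ : ℝ) (hD₀ : D₀ = sSup S)
    (τ lam M₂ δ In0 : ℝ) (hτ : 0 < τ) (hlam : 0 < lam) (hδ : 0 < δ)
    (xn pn xn1 pn1 : Fin d → ℝ)
    (Nx : Matrix (Fin d ⊕ Fin d) (Fin d ⊕ Fin d) ℝ)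
    (hit : Sum.elim xn1 pn1 = Sum.elim xn pn - τ • (Nx *ᵥ Sum.elim (gradf xn) pn))
    (hHn : ∀ v : Fin d ⊕ Fin d → ℝ, lam * (v ⬝ᵥ v) ≤ v ⬝ᵥ (pddH (hessf xn) Nx *ᵥ v))
    (hNINn : ∀ v : Fin d ⊕ Fin d → ℝ,
        v ⬝ᵥ ((Nxᵀ * Matrix.fromBlocks (G xn) 0 0 1 * Nx) *ᵥ v) ≤ M₂ * (v ⬝ᵥ v))
    (hNnorm : Real.sqrt In0 ≤ δ / (τ * D₀ * ‖Matrix.toEuclideanCLM (𝕜 := ℝ) Nx‖ ^ 3))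
    (hmon : (gradf xn ⬝ᵥ gradf xn + pn ⬝ᵥ pn) / 2 ≤ In0) :
    (gradf xn1 ⬝ᵥ gradf xn1 + pn1 ⬝ᵥ pn1) / 2 ≤
      (1 - 2*τ*lam + τ^2*(M₂+δ)) * ((gradf xn ⬝ᵥ gradf xn + pn ⬝ᵥ pn) / 2) := by
  classical
  set z : Fin d ⊕ Fin d → ℝ := Sum.elim xn pn with hzdef
  set v : Fin d ⊕ Fin d → ℝ := Sum.elim (gradf xn) pn with hvdef
  set Δ : Fin d ⊕ Fin d → ℝ := -(τ • (Nx *ᵥ v)) with hΔdef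
  have hsym : (hessf xn)ᵀ = hessf xn := hessf_symm hf hgrad hhess xn
  set In : ℝ := (gradf xn ⬝ᵥ gradf xn + pn ⬝ᵥ pn) / 2 with hIndef
  have hz1 : Sum.elim xn1 pn1 = z + Δ := by rw [hit, sub_eq_add_neg]
  have hvv : v ⬝ᵥ v = 2 * In := by
    rw [hvdef, dot_split]
    show gradf xn ⬝ᵥ gradf xn + pn ⬝ᵥ pn = 2 * In
    rw [hIndef]; ring
  have hInpos : 0 ≤ In := by
    have h1 := dot_self_nonneg (gradf xn)
    have h2 := dot_self_nonneg pn
    rw [hIndef]; linarith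
  have hIn1 : (gradf xn1 ⬝ᵥ gradf xn1 + pn1 ⬝ᵥ pn1) / 2 = pddI gradf (z + Δ) := by
    rw [← hz1]; rfl
  -- the quadratic form identity for the first derivative
  have hDv : pddD (hessf xn) *ᵥ v = Sum.elim (hessf xn *ᵥ gradf xn) pn := by
    rw [pddD, hvdef, fromBlocks_mulVec]
    simp
  by_cases hΔ0 : Δ = 0
  · -- degenerate case : v = 0
    have hNv : Nx *ᵥ v = 0 := by
      have : τ • (Nx *ᵥ v) = 0 := by
        rw [← neg_eq_zero]; exact hΔ0
      simpa [hτ.ne'] using this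
    have hquad := quadH (hessf xn) hsym Nx v
    have h0 : v ⬝ᵥ (pddH (hessf xn) Nx *ᵥ v) = 0 := by
      rw [hquad, hNv, dotProduct_zero]
    have hvv0 : v ⬝ᵥ v = 0 := by
      have := hHn v
      rw [h0] at this
      have h1 := dot_self_nonneg v
      nlinarith
    have hIn0' : In = 0 := by
      have h2 : 2 * In = 0 := by rw [← hvv]; exact hvv0
      linarith
    rw [hIn1, hΔ0, add_zero]
    show pddI gradf z ≤ _
    have hpz : pddI gradf z = In := rfl
    rw [hpz, hIn0', mul_zero]
  · -- main case
    have hF3 : ContDiff ℝ 3 (pddI gradf) := F_contDiff hf hgrad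
    set Δ1 : Fin d → ℝ := fun i => Δ (Sum.inl i) with hΔ1def
    set Δ2 : Fin d → ℝ := fun i => Δ (Sum.inr i) with hΔ2def
    have hline : ∀ k, k < 3 → ∀ t : ℝ,
        HasDerivAt (fun s : ℝ => iteratedFDeriv ℝ k (pddI gradf) (z + s • Δ) (fun _ => Δ))
          (iteratedFDeriv ℝ (k+1) (pddI gradf) (z + t • Δ) (fun _ => Δ)) t :=
      fun k hk t => lineDeriv_aux (pddI gradf) hF3 z Δ k hk t
    have hD1 : ∀ t : ℝ, iteratedFDeriv ℝ 1 (pddI gradf) (z + t • Δ) (fun _ => Δ) =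
        Δ1 ⬝ᵥ gradφ (xn + t • Δ1) + Δ2 ⬝ᵥ (pn + t • Δ2) := by
      intro t
      rw [iteratedFDeriv_one_apply, F_fderiv_apply hf hgrad hgradφ]
      have e1 : pi1 (z + t • Δ) = xn + t • Δ1 := by
        rw [map_add, _root_.map_smul]; rfl
      have e2 : pi2 (z + t • Δ) = pn + t • Δ2 := by
        rw [map_add, _root_.map_smul]; rfl
      have e3 : pi1 Δ = Δ1 := rfl
      have e4 : pi2 Δ = Δ2 := rfl
      rw [e1, e2, e3, e4, dotProduct_comm (gradφ (xn + t • Δ1)) Δ1,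
        dotProduct_comm (pn + t • Δ2) Δ2]
    have hD1₀ : iteratedFDeriv ℝ 1 (pddI gradf) (z + (0:ℝ) • Δ) (fun _ => Δ) =
        Δ1 ⬝ᵥ gradφ xn + Δ2 ⬝ᵥ pn := by
      rw [hD1 0]
      simp only [zero_smul, add_zero]
    have hbd1 : Δ1 ⬝ᵥ gradφ xn + Δ2 ⬝ᵥ pn ≤ -(2*τ*lam) * In := by
      have hgeq := gradφ_eq hf hgrad hhess hgradφ xn
      have hsplit : Δ1 ⬝ᵥ gradφ xn + Δ2 ⬝ᵥ pn = Δ ⬝ᵥ (pddD (hessf xn) *ᵥ v) := by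
        rw [hgeq, hDv, dot_split]
        rfl
      have hΔdot : Δ ⬝ᵥ (pddD (hessf xn) *ᵥ v) =
          -(τ * ((pddD (hessf xn) *ᵥ v) ⬝ᵥ (Nx *ᵥ v))) := by
        rw [hΔdef, neg_dotProduct, smul_dotProduct, smul_eq_mul,
          dotProduct_comm (Nx *ᵥ v)]
      have hq := quadH (hessf xn) hsym Nx v
      have hHv := hHn v
      rw [hsplit, hΔdot, ← hq]
      have hmul := mul_le_mul_of_nonneg_left hHv hτ.le
      rw [hvv] at hmul
      nlinarith [hmul]
    have hexp : ∀ t : ℝ, HasDerivAt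
        (fun s : ℝ => Δ1 ⬝ᵥ gradφ (xn + s • Δ1) + Δ2 ⬝ᵥ (pn + s • Δ2))
        (Δ1 ⬝ᵥ (G (xn + t • Δ1) *ᵥ Δ1) + Δ2 ⬝ᵥ Δ2) t := by
      intro t
      have hc1 : HasDerivAt (fun s : ℝ => xn + s • Δ1) Δ1 t := by
        simpa using ((hasDerivAt_id t).smul_const Δ1).const_add xn
      have hc2 : HasDerivAt (fun s : ℝ => pn + s • Δ2) Δ2 t := by
        simpa using ((hasDerivAt_id t).smul_const Δ2).const_add pn
      have h1 := (dCLM Δ1).hasFDerivAt.comp_hasDerivAt t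
        ((gradφ_hasFDerivAt hf hgrad hgradφ hG (xn + t • Δ1)).comp_hasDerivAt t hc1)
      have h2 := (dCLM Δ2).hasFDerivAt.comp_hasDerivAt t hc2
      exact h1.add h2
    have hD2₀ : iteratedFDeriv ℝ 2 (pddI gradf) (z + (0:ℝ) • Δ) (fun _ => Δ) =
        Δ1 ⬝ᵥ (G xn *ᵥ Δ1) + Δ2 ⬝ᵥ Δ2 := by
      have hln := hline 1 (by norm_num) 0
      rw [funext hD1] at hln
      have hval := hln.unique (hexp 0)
      rw [show xn + (0:ℝ) • Δ1 = xn by simp only [zero_smul, add_zero]] at hval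
      exact hval
    have hbd2 : Δ1 ⬝ᵥ (G xn *ᵥ Δ1) + Δ2 ⬝ᵥ Δ2 ≤ τ^2 * M₂ * (2 * In) := by
      have hΔelim : Δ = Sum.elim Δ1 Δ2 := (elim_eta Δ).symm
      have hGid : Δ1 ⬝ᵥ (G xn *ᵥ Δ1) + Δ2 ⬝ᵥ Δ2 =
          Δ ⬝ᵥ (Matrix.fromBlocks (G xn) 0 0 1 *ᵥ Δ) := by
        conv_rhs => rw [hΔelim]
        rw [fromBlocks_mulVec, dot_split]
        simp
      have hsm : Δ ⬝ᵥ (Matrix.fromBlocks (G xn) 0 0 1 *ᵥ Δ) =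
          τ^2 * ((Nx *ᵥ v) ⬝ᵥ (Matrix.fromBlocks (G xn) 0 0 1 *ᵥ (Nx *ᵥ v))) := by
        rw [hΔdef]
        rw [mulVec_neg, mulVec_smul, neg_dotProduct, dotProduct_neg, neg_neg,
          smul_dotProduct, dotProduct_smul, smul_eq_mul, smul_eq_mul]
        ring
      rw [hGid, hsm, quadG]
      have h' := mul_le_mul_of_nonneg_left (hNINn v) (sq_nonneg τ)
      rw [hvv] at h'
      calc τ^2 * (v ⬝ᵥ ((Nxᵀ * Matrix.fromBlocks (G xn) 0 0 1 * Nx) *ᵥ v))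
          ≤ τ^2 * (M₂ * (2 * In)) := by nlinarith [h']
        _ = τ^2 * M₂ * (2 * In) := by ring
    set K := D₀ * Real.sqrt (Δ ⬝ᵥ Δ) ^ 3 with hKdef
    have hD3 : ∀ t : ℝ, iteratedFDeriv ℝ 3 (pddI gradf) (z + t • Δ) (fun _ => Δ) ≤ K := by
      intro t
      have hmem : iteratedFDeriv ℝ 3 (pddI gradf) (z + t • Δ) (fun _ => Δ) /
          Real.sqrt (Δ ⬝ᵥ Δ) ^ 3 ∈ S := by
        rw [hS]; exact ⟨z + t • Δ, Δ, hΔ0, rfl⟩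
      have hle := le_csSup hbdd hmem
      rw [← hD₀] at hle
      have hpos : 0 < Real.sqrt (Δ ⬝ᵥ Δ) ^ 3 :=
        pow_pos (Real.sqrt_pos.mpr (dot_self_pos hΔ0)) 3
      calc iteratedFDeriv ℝ 3 (pddI gradf) (z + t • Δ) (fun _ => Δ)
          ≤ D₀ * Real.sqrt (Δ ⬝ᵥ Δ) ^ 3 := (div_le_iff₀ hpos).mp hle
        _ = K := rfl
    have hKbound : K ≤ 6 * (τ^2 * δ * In) := by
      have hRHS : 0 ≤ 6 * (τ^2 * δ * In) := by positivity
      have hs0 : 0 ≤ Real.sqrt (Δ ⬝ᵥ Δ) := Real.sqrt_nonneg _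
      by_cases hD₀pos : 0 < D₀
      · set nN := ‖Matrix.toEuclideanCLM (𝕜 := ℝ) Nx‖ with hnNdef
        have hΔΔ : Δ ⬝ᵥ Δ = τ^2 * ((Nx *ᵥ v) ⬝ᵥ (Nx *ᵥ v)) := by
          rw [hΔdef, neg_dotProduct, dotProduct_neg, neg_neg, smul_dotProduct,
            dotProduct_smul, smul_eq_mul, smul_eq_mul]
          ring
        have hsΔ : Real.sqrt (Δ ⬝ᵥ Δ) = τ * Real.sqrt ((Nx *ᵥ v) ⬝ᵥ (Nx *ᵥ v)) := by
          rw [hΔΔ, Real.sqrt_mul (sq_nonneg τ), Real.sqrt_sq hτ.le]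
        have hsv : Real.sqrt (v ⬝ᵥ v) = Real.sqrt 2 * Real.sqrt In := by
          rw [hvv, Real.sqrt_mul (by norm_num : (0:ℝ) ≤ 2)]
        have hs_le : Real.sqrt (Δ ⬝ᵥ Δ) ≤ τ * (nN * (Real.sqrt 2 * Real.sqrt In)) := by
          rw [hsΔ]
          refine mul_le_mul_of_nonneg_left ?_ hτ.le
          rw [← hsv]
          exact norm_mulVec_le Nx v
        have hcube : Real.sqrt (Δ ⬝ᵥ Δ)^3 ≤ (τ * (nN * (Real.sqrt 2 * Real.sqrt In)))^3 :=
          pow_le_pow_left₀ hs0 hs_le 3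
        have hnn : (0:ℝ) ≤ nN := norm_nonneg _
        rcases eq_or_lt_of_le hnn with hnN|hnN
        · have hK0 : K ≤ 0 := by
            have : Real.sqrt (Δ ⬝ᵥ Δ) ≤ 0 := by
              calc Real.sqrt (Δ ⬝ᵥ Δ) ≤ τ * (nN * (Real.sqrt 2 * Real.sqrt In)) := hs_le
                _ = 0 := by rw [← hnN]; ring
            have hs00 : Real.sqrt (Δ ⬝ᵥ Δ) = 0 := le_antisymm this hs0
            rw [hKdef, hs00]
            norm_num
          linarith
        · have hprod : 0 < τ * D₀ * nN^3 := by
            have : 0 < nN := hnN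
            positivity
          have h1 : τ * D₀ * nN^3 * Real.sqrt In ≤ δ := by
            have h1' : Real.sqrt In0 * (τ * D₀ * nN^3) ≤ δ := (le_div_iff₀ hprod).mp hNnorm
            have h2' : Real.sqrt In ≤ Real.sqrt In0 := Real.sqrt_le_sqrt hmon
            nlinarith [hprod, Real.sqrt_nonneg In]
          have hsqrt2 : Real.sqrt 2 ≤ 2 := by
            nlinarith [Real.sq_sqrt (by norm_num : (0:ℝ) ≤ 2), Real.sqrt_nonneg 2]
          have hsq2cube : Real.sqrt 2 ^ 3 = 2 * Real.sqrt 2 := by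
            rw [pow_succ, Real.sq_sqrt (by norm_num : (0:ℝ) ≤ 2)]
          have hsqIncube : Real.sqrt In ^ 3 = In * Real.sqrt In := by
            rw [pow_succ, Real.sq_sqrt hInpos]
          have hfac : 0 ≤ 2 * Real.sqrt 2 * (τ^2 * In) := by positivity
          calc K ≤ D₀ * (τ * (nN * (Real.sqrt 2 * Real.sqrt In)))^3 :=
              mul_le_mul_of_nonneg_left hcube hD₀pos.le
            _ = (2 * Real.sqrt 2 * (τ^2 * In)) * (τ * D₀ * nN^3 * Real.sqrt In) := by
              rw [mul_pow, mul_pow, mul_pow, hsq2cube, hsqIncube]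
              ring
            _ ≤ (2 * Real.sqrt 2 * (τ^2 * In)) * δ := mul_le_mul_of_nonneg_left h1 hfac
            _ ≤ 6 * (τ^2 * δ * In) := by
                have hfac2 : 0 ≤ τ^2 * In * δ :=
                  mul_nonneg (mul_nonneg (sq_nonneg τ) hInpos) hδ.le
                nlinarith [hsqrt2, hfac2]
      · have hK0 : K ≤ 0 := by
          have hs3 : 0 ≤ Real.sqrt (Δ ⬝ᵥ Δ)^3 := by positivity
          exact mul_nonpos_of_nonpos_of_nonneg (not_lt.mp hD₀pos) hs3
        linarith
    have htay := taylor3_bound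
      (fun t : ℝ => iteratedFDeriv ℝ 0 (pddI gradf) (z + t • Δ) (fun _ => Δ))
      (fun t : ℝ => iteratedFDeriv ℝ 1 (pddI gradf) (z + t • Δ) (fun _ => Δ))
      (fun t : ℝ => iteratedFDeriv ℝ 2 (pddI gradf) (z + t • Δ) (fun _ => Δ))
      (fun t : ℝ => iteratedFDeriv ℝ 3 (pddI gradf) (z + t • Δ) (fun _ => Δ)) K
      (hline 0 (by norm_num)) (hline 1 (by norm_num)) (hline 2 (by norm_num)) hD3
    have hg1 : iteratedFDeriv ℝ 0 (pddI gradf) (z + (1:ℝ) • Δ) (fun _ => Δ) =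
        pddI gradf (z + Δ) := by
      rw [iteratedFDeriv_zero_apply, one_smul]
    have hg0 : iteratedFDeriv ℝ 0 (pddI gradf) (z + (0:ℝ) • Δ) (fun _ => Δ) = In := by
      rw [iteratedFDeriv_zero_apply]
      simp only [zero_smul, add_zero]
      rfl
    rw [hIn1]
    rw [hg1, hg0, hD1₀, hD2₀] at htay
    calc pddI gradf (z + Δ)
        ≤ In + (Δ1 ⬝ᵥ gradφ xn + Δ2 ⬝ᵥ pn) + (Δ1 ⬝ᵥ (G xn *ᵥ Δ1) + Δ2 ⬝ᵥ Δ2) / 2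
          + K / 6 := htay
      _ ≤ In + (-(2*τ*lam) * In) + (τ^2 * M₂ * (2 * In)) / 2 + (6 * (τ^2 * δ * In)) / 6 := by
          linarith [hbd1, hbd2, hKbound]
      _ = (1 - 2*τ*lam + τ^2*(M₂+δ)) * In := by ring

end step

set_option maxHeartbeats 1000000 in
/-- Discrete-time Lyapunov decay with cubic remainder (Theorem 3.5).
With `D₀` the supremum of the normalized third derivative form of `I`, assumed finite,
initial data satisfying `I(x⁰,p⁰)^{1/2} ≤ δ/(τD₀‖N(x)‖₂³)` for all `x`, `H(x) ⪰ λI`,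
`N(x)ᵀ∇²I(x,p)N(x) ⪯ M₂I`, and `τ = aλ/(M₂+δ)` for `a ∈ (0,2)`, the PDD iterates satisfy
`I(xⁿ,pⁿ) ≤ I(x⁰,p⁰)(1 + ((a²−2a)/2)λ²/(M₂+δ))ⁿ`. -/
theorem stmt_12 (d : ℕ) (f : (Fin d → ℝ) → ℝ)
    (gradf : (Fin d → ℝ) → Fin d → ℝ)
    (hessf B : (Fin d → ℝ) → Matrix (Fin d) (Fin d) ℝ)
    (hf : ContDiff ℝ 4 f)
    (hgrad : ∀ x y, fderiv ℝ f x y = gradf x ⬝ᵥ y)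
    (hhess : ∀ x y, fderiv ℝ gradf x y = hessf x *ᵥ y)
    (m : ℝ) (hm : 0 < m)
    (hsc : ∀ x v, m * (v ⬝ᵥ v) ≤ v ⬝ᵥ (hessf x *ᵥ v))
    (gradφ : (Fin d → ℝ) → Fin d → ℝ)
    (G : (Fin d → ℝ) → Matrix (Fin d) (Fin d) ℝ)
    (hgradφ : ∀ x y, fderiv ℝ (fun z => gradf z ⬝ᵥ gradf z / 2) x y = gradφ x ⬝ᵥ y)
    (hG : ∀ x y, fderiv ℝ gradφ x y = G x *ᵥ y)
    (τ σ A ε ω γ : ℝ) (hτ : 0 < τ) (hσ : 0 < σ) (hA : 0 < A) (hε : 0 < ε)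
    (hω : 0 < ω) (hγ : γ = σ * ω)
    (S : Set ℝ)
    (hS : S = {r : ℝ | ∃ (z v : Fin d ⊕ Fin d → ℝ), v ≠ 0 ∧
      r = iteratedFDeriv ℝ 3 (pddI gradf) z (fun _ => v) / Real.sqrt (v ⬝ᵥ v) ^ 3})
    (hbdd : BddAbove S)
    (D₀ : ℝ) (hD₀ : D₀ = sSup S)
    (x p : ℕ → Fin d → ℝ)
    (hiter : ∀ n, Sum.elim (x (n + 1)) (p (n + 1)) =
      Sum.elim (x n) (p n) -
        τ • (pddN τ σ A ε γ (B (x n) * hessf (x n)) *ᵥ Sum.elim (gradf (x n)) (p n)))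
    (δ : ℝ) (hδ : 0 < δ)
    (hinit : ∀ x' : Fin d → ℝ,
      Real.sqrt ((gradf (x 0) ⬝ᵥ gradf (x 0) + p 0 ⬝ᵥ p 0) / 2) ≤
        δ / (τ * D₀ *
          ‖Matrix.toEuclideanCLM (𝕜 := ℝ) (pddN τ σ A ε γ (B x' * hessf x'))‖ ^ 3))
    (lam M₂ : ℝ) (hlam : 0 < lam) (hM₂ : 0 < M₂)
    (hH : ∀ x' (v : Fin d ⊕ Fin d → ℝ),
      lam * (v ⬝ᵥ v) ≤ v ⬝ᵥ (pddH (hessf x') (pddN τ σ A ε γ (B x' * hessf x')) *ᵥ v))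
    (hNIN : ∀ x' (v : Fin d ⊕ Fin d → ℝ),
      v ⬝ᵥ (((pddN τ σ A ε γ (B x' * hessf x'))ᵀ * Matrix.fromBlocks (G x') 0 0 1 *
          pddN τ σ A ε γ (B x' * hessf x')) *ᵥ v) ≤ M₂ * (v ⬝ᵥ v))
    (a : ℝ) (ha0 : 0 < a) (ha2 : a < 2) (hτa : τ = a * lam / (M₂ + δ)) :
    ∀ n : ℕ, (gradf (x n) ⬝ᵥ gradf (x n) + p n ⬝ᵥ p n) / 2 ≤
      ((gradf (x 0) ⬝ᵥ gradf (x 0) + p 0 ⬝ᵥ p 0) / 2) *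
        (1 + (a ^ 2 - 2 * a) / 2 * lam ^ 2 / (M₂ + δ)) ^ n := by
  have hMδ : (0:ℝ) < M₂ + δ := by linarith
  set In : ℕ → ℝ := fun n => (gradf (x n) ⬝ᵥ gradf (x n) + p n ⬝ᵥ p n) / 2 with hIn
  have hIpos : ∀ n, 0 ≤ In n := by
    intro n
    have h1 := dot_self_nonneg (gradf (x n))
    have h2 := dot_self_nonneg (p n)
    simp only [hIn]
    linarith
  set c' : ℝ := 1 - 2*τ*lam + τ^2*(M₂+δ) with hc'
  set c : ℝ := 1 + (a ^ 2 - 2 * a) / 2 * lam ^ 2 / (M₂ + δ) with hc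
  have hstep : ∀ n, In n ≤ In 0 → In (n+1) ≤ c' * In n := by
    intro n hmon
    exact step_key hf hgrad hhess hgradφ hG S hS hbdd D₀ hD₀ τ lam M₂ δ (In 0) hτ hlam hδ
      (x n) (p n) (x (n+1)) (p (n+1)) (pddN τ σ A ε γ (B (x n) * hessf (x n)))
      (hiter n) (hH (x n)) (hNIN (x n)) (hinit (x n)) hmon
  have haa : a^2 - 2*a < 0 := by nlinarith
  have hX : 0 < lam^2 / (M₂ + δ) := by positivity
  have hc'c : c' ≤ c := by
    have h1 : c' = 1 + (a^2 - 2*a) * lam^2 / (M₂ + δ) := by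
      rw [hc', hτa]
      field_simp
      ring
    rw [h1, hc]
    have h2a : 0 < 2*a - a^2 := by nlinarith
    have h3 : (a^2 - 2*a) * lam^2 / (M₂+δ) ≤ (a^2 - 2*a) / 2 * lam^2 / (M₂+δ) := by
      rw [div_le_div_iff₀ hMδ hMδ]
      nlinarith [mul_nonneg (mul_nonneg h2a.le (sq_nonneg lam)) hMδ.le]
    linarith
  have hcle1 : c ≤ 1 := by
    rw [hc]
    have : (a ^ 2 - 2 * a) / 2 * lam ^ 2 / (M₂ + δ) ≤ 0 := by
      apply div_nonpos_of_nonpos_of_nonneg _ hMδ.le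
      nlinarith [sq_nonneg lam]
    linarith
  by_cases hc0 : 0 ≤ c
  · intro n
    induction n with
    | zero => simp
    | succ n ih =>
      have hcn1 : c ^ n ≤ 1 := pow_le_one₀ hc0 hcle1
      have hmon : In n ≤ In 0 := by
        calc In n ≤ In 0 * c ^ n := ih
          _ ≤ In 0 * 1 := mul_le_mul_of_nonneg_left hcn1 (hIpos 0)
          _ = In 0 := mul_one _
      calc In (n+1) ≤ c' * In n := hstep n hmon
        _ ≤ c * In n := mul_le_mul_of_nonneg_right hc'c (hIpos n)
        _ ≤ c * (In 0 * c ^ n) := mul_le_mul_of_nonneg_left ih hc0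
        _ = In 0 * c ^ (n+1) := by ring
  · push_neg at hc0
    have hI00 : In 0 = 0 := by
      have h1 := hstep 0 le_rfl
      have h2 := hIpos 1
      have h3 := hIpos 0
      have h4 : c' < 0 := lt_of_le_of_lt hc'c hc0
      have h5 : (0:ℝ) ≤ c' * In 0 := le_trans h2 h1
      have h6 : In 0 ≤ 0 := by
        by_contra hpos
        push_neg at hpos
        have := mul_neg_of_neg_of_pos h4 hpos
        linarith
      exact le_antisymm h6 h3
    have hIz : ∀ n, In n = 0 := by
      intro n
      induction n with
      | zero => exact hI00
      | succ n ih =>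
        have h1 := hstep n (by rw [ih, hI00])
        rw [ih, mul_zero] at h1
        exact le_antisymm h1 (hIpos (n+1))
    intro n
    rw [show (gradf (x n) ⬝ᵥ gradf (x n) + p n ⬝ᵥ p n) / 2 = In n from rfl, hIz n,
      show (gradf (x 0) ⬝ᵥ gradf (x 0) + p 0 ⬝ᵥ p 0) / 2 = In 0 from rfl, hI00, zero_mul]
end

section
/- Let f : ℝ^d → ℝ be four times continuously differentiable and let B : ℝ^d → ℝ^{d×d}. Suppose there exist constants 0 < μ ≤ 1, μ ≤ L, L' > 0 such that μ·I ⪯ ∇²f(x)B(x)∇²f(x) ⪯ L·I and C(x)ᵀ(∇³f(x)∇f(x) + (∇²f(x))²)C(x) ⪯ L'·I for all x, where C(x) = B(x)∇²f(x). Let σ = τ > 0, γ = (1−σμ)/μ ≥ 0, ε = 1, A = (μ+L)/(2 + (μ+L)εγ). Then for all x, p: N(x)ᵀ ∇²I(x,p) N(x) ⪯ ((3 + σA + 2A)²/(1 + σA)²) · max{L', 1} · I, where ∇²I(x,p) = blockdiag(∇³f(x)∇f(x) + (∇²f(x))², I) is the Hessian of the Lyapunov functional I(x,p) = ½(‖∇f(x)‖²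 + ‖p‖²). -/
open Matrix

lemma dp_self_nonneg {n : ℕ} (v : Fin n → ℝ) : 0 ≤ v ⬝ᵥ v :=
  Finset.sum_nonneg fun i _ => mul_self_nonneg _

set_option maxHeartbeats 1000000 in
/-- Corollary 3.7, part 2: under Assumptions `μ·I ⪯ ∇²f(x)B(x)∇²f(x) ⪯ L·I`
(0 < μ ≤ 1, μ ≤ L) and `C(x)ᵀ(∇³f(x)∇f(x) + (∇²f(x))²)C(x) ⪯ L'·I` with
`C(x) = B(x)∇²f(x)`, and the parameter choice `σ = τ > 0`, `γ = (1−σμ)/μ ≥ 0`, `ε = 1`,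
`A = (μ+L)/(2+(μ+L)εγ)`, one has
`N(x)ᵀ∇²I(x,p)N(x) ⪯ ((3+σA+2A)²/(1+σA)²)·max{L',1}·I`,
where `∇²I(x,p) = blockdiag(∇³f(x)∇f(x) + (∇²f(x))², I)`. -/
theorem stmt_15 (d : ℕ) (f : (Fin d → ℝ) → ℝ)
    (gradf : (Fin d → ℝ) → Fin d → ℝ)
    (hessf B : (Fin d → ℝ) → Matrix (Fin d) (Fin d) ℝ)
    (hf : ContDiff ℝ 4 f)
    (hgrad : ∀ x y, fderiv ℝ f x y = gradf x ⬝ᵥ y)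
    (hhess : ∀ x y, fderiv ℝ gradf x y = hessf x *ᵥ y)
    (gradφ : (Fin d → ℝ) → Fin d → ℝ)
    (G : (Fin d → ℝ) → Matrix (Fin d) (Fin d) ℝ)
    (hgradφ : ∀ x y, fderiv ℝ (fun z => gradf z ⬝ᵥ gradf z / 2) x y = gradφ x ⬝ᵥ y)
    (hG : ∀ x y, fderiv ℝ gradφ x y = G x *ᵥ y)
    (μ L L' : ℝ) (hμ0 : 0 < μ) (hμ1 : μ ≤ 1) (hμL : μ ≤ L) (hL' : 0 < L')
    (hlow : ∀ x v, μ * (v ⬝ᵥ v) ≤ v ⬝ᵥ ((hessf x * B x * hessf x) *ᵥ v))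
    (hup : ∀ x v, v ⬝ᵥ ((hessf x * B x * hessf x) *ᵥ v) ≤ L * (v ⬝ᵥ v))
    (hL'bound : ∀ x v, v ⬝ᵥ (((B x * hessf x)ᵀ * G x * (B x * hessf x)) *ᵥ v) ≤ L' * (v ⬝ᵥ v))
    (τ σ γ ε A : ℝ) (hστ : σ = τ) (hτ0 : 0 < τ)
    (hγ : γ = (1 - σ * μ) / μ) (hγ0 : 0 ≤ γ) (hε : ε = 1)
    (hA : A = (μ + L) / (2 + (μ + L) * ε * γ)) :
    ∀ x (v : Fin d ⊕ Fin d → ℝ),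
      v ⬝ᵥ (((pddN τ σ A ε γ (B x * hessf x))ᵀ * Matrix.fromBlocks (G x) 0 0 1 *
          pddN τ σ A ε γ (B x * hessf x)) *ᵥ v) ≤
        (3 + σ * A + 2 * A) ^ 2 / (1 + σ * A) ^ 2 * max L' 1 * (v ⬝ᵥ v) := by
  subst hστ hε
  intro x v
  have hσne : σ ≠ 0 := ne_of_gt hτ0
  have hden : (0:ℝ) < 2 + (μ + L) * 1 * γ := by nlinarith
  have hA0 : 0 ≤ A := by
    rw [hA]; apply div_nonneg (by linarith) (le_of_lt hden)
  have hγA : γ * A ≤ 1 := by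
    rw [hA, mul_div_assoc']
    rw [div_le_one hden]; nlinarith
  have h1σA : (0:ℝ) < 1 + σ * A := by nlinarith
  set Cx := B x * hessf x with hCx
  set u : Fin d → ℝ := v ∘ Sum.inl with hu
  set w : Fin d → ℝ := v ∘ Sum.inr with hw
  set a : ℝ := σ * A + γ * A with ha
  set b : ℝ := 1 - 1 * γ * A with hb
  set m : Fin d → ℝ := a • u + b • w with hm
  set s : Fin d → ℝ := (-A) • u + A • w with hs
  set c : ℝ := 1 / (1 + σ * 1 * A) with hc
  -- compute N *ᵥ v
  have hNv : pddN σ σ A 1 γ Cx *ᵥ v = c • Sum.elim (Cx *ᵥ m) s := by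
    rw [pddN, Matrix.smul_mulVec, Matrix.fromBlocks_mulVec,
      show σ / σ = 1 from div_self hσne]
    simp only [one_mul, Matrix.smul_mulVec, Matrix.one_mulVec]
    rw [hm, hs, Matrix.mulVec_add, Matrix.mulVec_smul, Matrix.mulVec_smul, ha, hb]
    simp only [one_mul, hu, hw, hc]
  -- quadratic form identity
  have hquad : v ⬝ᵥ (((pddN σ σ A 1 γ Cx)ᵀ * Matrix.fromBlocks (G x) 0 0 1 *
      pddN σ σ A 1 γ Cx) *ᵥ v)
      = c^2 * ((Cx *ᵥ m) ⬝ᵥ (G x *ᵥ (Cx *ᵥ m)) + s ⬝ᵥ s) := by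
    rw [Matrix.mul_assoc, ← Matrix.mulVec_mulVec, Matrix.dotProduct_mulVec,
      Matrix.vecMul_transpose, ← Matrix.mulVec_mulVec, hNv, Matrix.mulVec_smul,
      Matrix.fromBlocks_mulVec]
    simp only [Sum.elim_comp_inl, Sum.elim_comp_inr, Matrix.zero_mulVec, Matrix.one_mulVec,
      add_zero, zero_add, smul_dotProduct, dotProduct_smul,
      sumElim_dotProduct_sumElim, smul_eq_mul]
    ring
  rw [hquad]
  -- key scalar quantities
  set U : ℝ := u ⬝ᵥ u with hU
  set W : ℝ := w ⬝ᵥ w with hW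
  have hU0 : 0 ≤ U := dp_self_nonneg u
  have hW0 : 0 ≤ W := dp_self_nonneg w
  have huw1 : 2 * (u ⬝ᵥ w) ≤ U + W := by
    have := dp_self_nonneg (u - w)
    simp only [sub_dotProduct, dotProduct_sub] at this
    rw [dotProduct_comm w u] at this
    linarith
  have huw2 : -(2 * (u ⬝ᵥ w)) ≤ U + W := by
    have := dp_self_nonneg (u + w)
    simp only [add_dotProduct, dotProduct_add] at this
    rw [dotProduct_comm w u] at this
    linarith
  have ha0 : 0 ≤ a := by rw [ha]; positivity
  have hb0 : 0 ≤ b := by rw [hb]; nlinarith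
  -- m ⬝ m bound
  have hmm : m ⬝ᵥ m ≤ (a + b)^2 * (U + W) := by
    have hmexp : m ⬝ᵥ m = a^2 * U + 2 * (a*b) * (u ⬝ᵥ w) + b^2 * W := by
      rw [hm]
      simp only [add_dotProduct, dotProduct_add, smul_dotProduct,
        dotProduct_smul, smul_eq_mul]
      rw [dotProduct_comm w u, ← hU, ← hW]; ring
    rw [hmexp]
    nlinarith [mul_le_mul_of_nonneg_left huw1 (mul_nonneg ha0 hb0),
      mul_nonneg (sq_nonneg a) hW0, mul_nonneg (sq_nonneg b) hU0,
      mul_nonneg (mul_nonneg ha0 hb0) (add_nonneg hU0 hW0)]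
  have hab : a + b = 1 + σ * A := by rw [ha, hb]; ring
  -- s ⬝ s bound
  have hss : s ⬝ᵥ s ≤ 2 * A^2 * (U + W) := by
    have hsexp : s ⬝ᵥ s = A^2 * U - 2 * A^2 * (u ⬝ᵥ w) + A^2 * W := by
      rw [hs]
      simp only [add_dotProduct, dotProduct_add, smul_dotProduct,
        dotProduct_smul, smul_eq_mul]
      rw [dotProduct_comm w u, ← hU, ← hW]; ring
    rw [hsexp]
    nlinarith [mul_le_mul_of_nonneg_left huw2 (sq_nonneg A)]
  -- G quadratic form bound
  have hGt : (Cx *ᵥ m) ⬝ᵥ (G x *ᵥ (Cx *ᵥ m)) ≤ L' * (m ⬝ᵥ m) := by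
    have h := hL'bound x m
    rw [← hCx, Matrix.mul_assoc, ← Matrix.mulVec_mulVec m Cxᵀ (G x * Cx),
      Matrix.dotProduct_mulVec, Matrix.vecMul_transpose,
      ← Matrix.mulVec_mulVec m (G x) Cx] at h
    exact h
  -- v ⬝ v
  have hvv : v ⬝ᵥ v = U + W := by
    have hve : v = Sum.elim u w := by funext i; cases i <;> rfl
    rw [hve, sumElim_dotProduct_sumElim]
  rw [hvv]
  set M : ℝ := max L' 1 with hM
  have hML : L' ≤ M := le_max_left _ _
  have hM1 : 1 ≤ M := le_max_right _ _
  have hc2 : c^2 = 1 / (1 + σ * A)^2 := by rw [hc, mul_one, div_pow, one_pow]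
  have step1 : (Cx *ᵥ m) ⬝ᵥ (G x *ᵥ (Cx *ᵥ m)) + s ⬝ᵥ s
      ≤ M * ((1 + σ*A)^2 + 2 * A^2) * (U + W) := by
    have h1 : (Cx *ᵥ m) ⬝ᵥ (G x *ᵥ (Cx *ᵥ m)) ≤ L' * ((a+b)^2 * (U+W)) :=
      le_trans hGt (by nlinarith)
    rw [hab] at h1
    nlinarith [mul_nonneg (mul_nonneg (sq_nonneg (1+σ*A)) (by linarith : (0:ℝ) ≤ U + W)) (by linarith : (0:ℝ) ≤ M - L'),
      mul_nonneg (mul_nonneg (by positivity : (0:ℝ) ≤ 2*A^2) (by linarith : (0:ℝ) ≤ U + W)) (by linarith : (0:ℝ) ≤ M - 1)]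
  have step2 : (1 + σ*A)^2 + 2 * A^2 ≤ (3 + σ*A + 2*A)^2 := by nlinarith
  have hc2pos : 0 < c^2 := by rw [hc2]; positivity
  calc c^2 * ((Cx *ᵥ m) ⬝ᵥ (G x *ᵥ (Cx *ᵥ m)) + s ⬝ᵥ s)
      ≤ c^2 * (M * ((3 + σ*A + 2*A)^2) * (U + W)) := by
        apply mul_le_mul_of_nonneg_left _ (le_of_lt hc2pos)
        refine le_trans step1 ?_
        have hM0 : (0:ℝ) ≤ M := by linarith
        exact mul_le_mul_of_nonneg_right (mul_le_mul_of_nonneg_left step2 hM0)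
          (by linarith)
    _ = (3 + σ * A + 2 * A) ^ 2 / (1 + σ * A) ^ 2 * M * (U + W) := by
        rw [hc2]; ring
end
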